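/- arXiv:1512.03017 — 5 statements merged into one kernel-verified Lean document; each statement's English description precedes it below -/
import Mathlib

section
/- Let G be a group in the class C (extension of a finite group by a finitely generated non-abelian free group, or vice versa) and let H be a finite group. If G and H act on each other compatibly, then the non-abelian tensor product G ⊗ H is finite. -/
universe u

/-- Two groups acting on each other (and on themselves by conjugation) with
compatible actions, in the sense of Brown–Loday. -/
structure CompatibleActions (G H : Type u) [Group G] [Group H] where
  actG : G →* MulAut H
  actH : H →* MulAut G
  compat_left : ∀ (g g' : G) (h : H),
    actH (actG g h) g' = g * actH h (g⁻¹ * g' * g) * g⁻¹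
  compat_right : ∀ (g : G) (h h' : H),
    actG (actH h g) h' = h * actG g (h⁻¹ * h' * h) * h⁻¹

variable {G H : Type u} [Group G] [Group H]

/-- The defining relators of the non-abelian tensor product `G ⊗ H`. -/
def tensorRels (c : CompatibleActions G H) : Set (FreeGroup (G × H)) :=
  {r | ∃ g g' h, r = FreeGroup.of (g * g', h) *
      (FreeGroup.of (g * g' * g⁻¹, c.actG g h) * FreeGroup.of (g, h))⁻¹} ∪
  {r | ∃ g h h', r = FreeGroup.of (g, h * h') *
      (FreeGroup.of (g, h) * FreeGroup.of (c.actH h g, h * h' * h⁻¹))⁻¹}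

/-- The non-abelian tensor product `G ⊗ H` of groups acting compatibly on each other. -/
def NATensor (c : CompatibleActions G H) : Type u :=
  PresentedGroup (tensorRels c)

instance (c : CompatibleActions G H) : Group (NATensor c) := by
  unfold NATensor; infer_instance

/-- The generator `g ⊗ h` of the non-abelian tensor product. -/
def tmul (c : CompatibleActions G H) (g : G) (h : H) : NATensor c :=
  PresentedGroup.of (g, h)

/-- Conjugation actions of a group on itself form compatible actions. -/
def conjActions (G : Type u) [Group G] : CompatibleActions G G where
  actG := MulAut.conj
  actH := MulAut.conj
  compat_left := by intros; simp only [MulAut.conj_apply]; group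
  compat_right := by intros; simp only [MulAut.conj_apply]; group

/-- The non-abelian tensor square `G ⊗ G`. -/
def TensorSquare (G : Type u) [Group G] : Type u := NATensor (conjActions G)

instance (G : Type u) [Group G] : Group (TensorSquare G) := by
  unfold TensorSquare; infer_instance

/-- The derivative subgroup `D_H(G) = ⟨g ⬝ (ʰg)⁻¹ : g ∈ G, h ∈ H⟩ ≤ G`. -/
def derivSubgroupG (c : CompatibleActions G H) : Subgroup G :=
  Subgroup.closure {x | ∃ (g : G) (h : H), x = g * (c.actH h g)⁻¹}

/-- The derivative subgroup `D_G(H) = ⟨h ⬝ (ᵍh)⁻¹ : g ∈ G, h ∈ H⟩ ≤ H`. -/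
def derivSubgroupH (c : CompatibleActions G H) : Subgroup H :=
  Subgroup.closure {x | ∃ (g : G) (h : H), x = h * (c.actG g h)⁻¹}
/-- A group is supersolvable if it has a finite chain of subgroups, each normal in the
whole group, reaching from `⊥` to `⊤`, with all successive factors cyclic. -/
def IsSupersolvable (G : Type u) [Group G] : Prop :=
  ∃ (n : ℕ) (s : ℕ → Subgroup G), s 0 = ⊥ ∧ s n = ⊤ ∧
    (∀ i, s i ≤ s (i + 1)) ∧ (∀ i, (s i).Normal) ∧
    ∀ i, ∃ x ∈ s (i + 1), ∀ y ∈ s (i + 1), ∃ k : ℤ, (x ^ k)⁻¹ * y ∈ s i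

/-- A group is Noetherian if all of its subgroups are finitely generated. -/
def IsNoetherianGroup (G : Type u) [Group G] : Prop :=
  ∀ K : Subgroup G, K.FG

/-- A group is solvable-by-finite if it has a solvable normal subgroup of finite index. -/
def SolvableByFinite (G : Type u) [Group G] : Prop :=
  ∃ S : Subgroup G, S.Normal ∧ IsSolvable S ∧ Finite (G ⧸ S)

/-- A group is nilpotent-by-finite if it has a nilpotent normal subgroup of finite index. -/
def NilpotentByFinite (G : Type u) [Group G] : Prop :=
  ∃ S : Subgroup G, S.Normal ∧ Group.IsNilpotent S ∧ Finite (G ⧸ S)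

/-- The class `𝒞` of groups which are an extension of a finite group by a finitely
generated non-abelian free group, or an extension of a finitely generated non-abelian
free group by a finite group. -/
def ClassC (G : Type u) [Group G] : Prop :=
  (∃ (n : ℕ) (π : G →* FreeGroup (Fin n)), 2 ≤ n ∧ Function.Surjective π ∧
      Finite π.ker) ∨
  (∃ (F : Subgroup G) (n : ℕ), F.Normal ∧ 2 ≤ n ∧ Nonempty (F ≃* FreeGroup (Fin n)) ∧
      Finite (G ⧸ F))

/-- `n`-chains of the inhomogeneous bar complex computing the integral homology of `G`:
the free `ℤ`-module on `n`-tuples of elements of `G`. -/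
def barChains (G : Type u) [Group G] (n : ℕ) : Type u := (Fin n → G) →₀ ℤ

noncomputable instance (G : Type u) [Group G] (n : ℕ) : AddCommGroup (barChains G n) := by
  unfold barChains; infer_instance

noncomputable instance (G : Type u) [Group G] (n : ℕ) : Module ℤ (barChains G n) := by
  unfold barChains; infer_instance

/-- The boundary map `∂ : C_{n+1} → C_n` of the inhomogeneous bar complex (with trivial
`ℤ` coefficients). -/
noncomputable def barBoundary (G : Type u) [Group G] (n : ℕ) :
    barChains G (n + 1) →ₗ[ℤ] barChains G n :=
  Finsupp.lift (barChains G n) ℤ (Fin (n + 1) → G) fun g =>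
    Finsupp.single (Fin.tail g) 1
    + (∑ i : Fin n, ((-1 : ℤ) ^ ((i : ℕ) + 1)) •
        Finsupp.single (fun j : Fin n =>
          if (j : ℕ) < (i : ℕ) then g (Fin.castSucc j)
          else if (j : ℕ) = (i : ℕ) then g (Fin.castSucc j) * g (Fin.succ j)
          else g (Fin.succ j)) (1 : ℤ))
    + ((-1 : ℤ) ^ (n + 1)) • Finsupp.single (Fin.init g) 1

/-- The `n`-th integral homology group `H_n(G)` (for `n ≥ 1`), computed from the
inhomogeneous bar complex: `ker ∂ₙ / im ∂ₙ₊₁`. -/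
noncomputable def GroupHomology (G : Type u) [Group G] (n : ℕ) : Type u :=
  ↥(LinearMap.ker (barBoundary G (n - 1))) ⧸
    Submodule.comap (LinearMap.ker (barBoundary G (n - 1))).subtype
      (LinearMap.range (barBoundary G (n - 1 + 1)))


/-! ### Auxiliary development for Statement 12 -/

namespace Stmt12

section Tensor

variable {K : Type*} [Group K] (c : CompatibleActions G H)

lemma mk_rel_eq_one {r : FreeGroup (G × H)} (hr : r ∈ tensorRels c) :
    PresentedGroup.mk (tensorRels c) r = 1 :=
  (QuotientGroup.eq_one_iff r).mpr (Subgroup.subset_normalClosure hr)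

lemma tensor_rel1 (g g' : G) (h : H) :
    tmul c (g * g') h = tmul c (g * g' * g⁻¹) (c.actG g h) * tmul c g h := by
  have h1 := mk_rel_eq_one c (Or.inl ⟨g, g', h, rfl⟩)
  rw [map_mul, map_inv, map_mul, mul_inv_eq_one] at h1
  exact h1

lemma tensor_rel2 (g : G) (h h' : H) :
    tmul c g (h * h') = tmul c g h * tmul c (c.actH h g) (h * h' * h⁻¹) := by
  have h1 := mk_rel_eq_one c (Or.inr ⟨g, h, h', rfl⟩)
  rw [map_mul, map_inv, map_mul, mul_inv_eq_one] at h1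
  exact h1

lemma tmul_one (g : G) : tmul c g 1 = 1 := by
  have h1 := tensor_rel2 c g 1 1
  simp only [one_mul, mul_one, inv_one, map_one, MulAut.one_apply] at h1
  exact left_eq_mul.mp h1

lemma one_tmul (h : H) : tmul c 1 h = 1 := by
  have h1 := tensor_rel1 c 1 1 h
  simp only [one_mul, mul_one, inv_one, map_one, MulAut.one_apply] at h1
  exact right_eq_mul.mp h1

/-- Lift a function satisfying the tensor relations to a homomorphism. -/
def tlift (φ : G → H → K)
    (h1 : ∀ g g' h, φ (g * g') h = φ (g * g' * g⁻¹) (c.actG g h) * φ g h)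
    (h2 : ∀ g h h', φ g (h * h') = φ g h * φ (c.actH h g) (h * h' * h⁻¹)) :
    NATensor c →* K :=
  PresentedGroup.toGroup (f := fun p => φ p.1 p.2) (by
    rintro r (⟨g, g', h, rfl⟩ | ⟨g, h, h', rfl⟩) <;>
      rw [map_mul, map_inv, map_mul, mul_inv_eq_one] <;>
      simp only [FreeGroup.lift_apply_of]
    · exact h1 g g' h
    · exact h2 g h h')

@[simp] lemma tlift_tmul (φ : G → H → K) (h1) (h2) (g : G) (h : H) :
    tlift c φ h1 h2 (tmul c g h) = φ g h :=
  PresentedGroup.toGroup.of _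

lemma hom_ext {f₁ f₂ : NATensor c →* K}
    (hf : ∀ g h, f₁ (tmul c g h) = f₂ (tmul c g h)) : f₁ = f₂ :=
  PresentedGroup.ext (fun x => hf x.1 x.2)

section Aut

variable (c : CompatibleActions G H)

/-- The underlying hom of the action of `a : G` on the tensor product. -/
def phiHom (a : G) : NATensor c →* NATensor c :=
  tlift c (fun g h => tmul c (a * g * a⁻¹) (c.actG a h))
    (by
      intro g g' h
      have e1 : a * (g * g') * a⁻¹ = (a * g * a⁻¹) * (a * g' * a⁻¹) := by group
      have e2 : a * (g * g' * g⁻¹) * a⁻¹ =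
          (a * g * a⁻¹) * (a * g' * a⁻¹) * (a * g * a⁻¹)⁻¹ := by group
      have e3 : c.actG (a * g * a⁻¹) (c.actG a h) = c.actG a (c.actG g h) := by
        rw [map_mul, map_mul, map_inv]
        simp [MulAut.mul_apply]
      rw [e1, e2, ← e3]
      exact tensor_rel1 c (a * g * a⁻¹) (a * g' * a⁻¹) (c.actG a h)
    )
    (by
      intro g h h'
      have e4 : c.actG a (h * h') = c.actG a h * c.actG a h' := map_mul _ _ _
      have e5 : c.actH (c.actG a h) (a * g * a⁻¹) = a * (c.actH h g) * a⁻¹ := by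
        rw [c.compat_left]
        have : a⁻¹ * (a * g * a⁻¹) * a = g := by group
        rw [this]
      have e6 : c.actG a h * c.actG a h' * (c.actG a h)⁻¹ = c.actG a (h * h' * h⁻¹) := by
        rw [map_mul, map_mul, map_inv]
      rw [e4, ← e5, ← e6]
      exact tensor_rel2 c (a * g * a⁻¹) (c.actG a h) (c.actG a h')
    )

@[simp] lemma phiHom_tmul (a g : G) (h : H) :
    phiHom c a (tmul c g h) = tmul c (a * g * a⁻¹) (c.actG a h) :=
  tlift_tmul ..

/-- The underlying hom of the action of `k : H` on the tensor product. -/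
def psiHom (k : H) : NATensor c →* NATensor c :=
  tlift c (fun g h => tmul c (c.actH k g) (k * h * k⁻¹))
    (by
      intro g g' h
      have e1 : c.actH k (g * g') = c.actH k g * c.actH k g' := map_mul _ _ _
      have e2 : c.actH k (g * g' * g⁻¹) = c.actH k g * c.actH k g' * (c.actH k g)⁻¹ := by
        rw [map_mul, map_mul, map_inv]
      have e3 : c.actG (c.actH k g) (k * h * k⁻¹) = k * (c.actG g h) * k⁻¹ := by
        rw [c.compat_right]
        have : k⁻¹ * (k * h * k⁻¹) * k = h := by group
        rw [this]
      rw [e1, e2, ← e3]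
      exact tensor_rel1 c (c.actH k g) (c.actH k g') (k * h * k⁻¹)
    )
    (by
      intro g h h'
      have e1 : k * (h * h') * k⁻¹ = (k * h * k⁻¹) * (k * h' * k⁻¹) := by group
      have e2 : c.actH (k * h * k⁻¹) (c.actH k g) = c.actH k (c.actH h g) := by
        rw [← MulAut.mul_apply, ← map_mul, ← MulAut.mul_apply, ← map_mul]
        congr 1
        group
      have e3 : (k * h * k⁻¹) * (k * h' * k⁻¹) * (k * h * k⁻¹)⁻¹ =
          k * (h * h' * h⁻¹) * k⁻¹ := by group
      rw [e1, ← e2, ← e3]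
      exact tensor_rel2 c (c.actH k g) (k * h * k⁻¹) (k * h' * k⁻¹)
    )

@[simp] lemma psiHom_tmul (k : H) (g : G) (h : H) :
    psiHom c k (tmul c g h) = tmul c (c.actH k g) (k * h * k⁻¹) :=
  tlift_tmul ..

/-- Build an automorphism of the tensor product from two mutually inverse homs. -/
def mkAut (f g : NATensor c →* NATensor c)
    (h1 : ∀ p q, g (f (tmul c p q)) = tmul c p q)
    (h2 : ∀ p q, f (g (tmul c p q)) = tmul c p q) : MulAut (NATensor c) :=
  MonoidHom.toMulEquiv f g
    (hom_ext c (by intro p q; simp only [MonoidHom.comp_apply, MonoidHom.id_apply]; exact h1 p q))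
    (hom_ext c (by intro p q; simp only [MonoidHom.comp_apply, MonoidHom.id_apply]; exact h2 p q))

lemma mkAut_apply (f g : NATensor c →* NATensor c) (h1) (h2) (x : NATensor c) :
    mkAut c f g h1 h2 x = f x := rfl

lemma aut_eq_of_hom_eq {e₁ e₂ : MulAut (NATensor c)}
    (h : ∀ p q, e₁ (tmul c p q) = e₂ (tmul c p q)) : e₁ = e₂ := by
  apply MulEquiv.toMonoidHom_injective
  exact hom_ext c (by exact h)

/-- The action of `G` on the tensor product. -/
def Phi : G →* MulAut (NATensor c) where
  toFun a := mkAut c (phiHom c a) (phiHom c a⁻¹)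
    (by
      intro p q
      simp only [phiHom_tmul]
      have e1 : a⁻¹ * (a * p * a⁻¹) * a⁻¹⁻¹ = p := by group
      have e2 : c.actG a⁻¹ (c.actG a q) = q := by
        rw [← MulAut.mul_apply, ← map_mul, inv_mul_cancel, map_one, MulAut.one_apply]
      rw [e1, e2])
    (by
      intro p q
      simp only [phiHom_tmul]
      have e1 : a * (a⁻¹ * p * a⁻¹⁻¹) * a⁻¹ = p := by group
      have e2 : c.actG a (c.actG a⁻¹ q) = q := by
        rw [← MulAut.mul_apply, ← map_mul, mul_inv_cancel, map_one, MulAut.one_apply]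
      rw [e1, e2])
  map_one' := by
    apply aut_eq_of_hom_eq c
    intro p q
    show phiHom c 1 (tmul c p q) = tmul c p q
    simp
  map_mul' a b := by
    apply aut_eq_of_hom_eq c
    intro p q
    show phiHom c (a * b) (tmul c p q) = phiHom c a (phiHom c b (tmul c p q))
    simp only [phiHom_tmul]
    have e1 : a * b * p * (a * b)⁻¹ = a * (b * p * b⁻¹) * a⁻¹ := by group
    have e2 : c.actG (a * b) q = c.actG a (c.actG b q) := by
      rw [map_mul, MulAut.mul_apply]
    rw [e1, e2]

@[simp] lemma Phi_tmul (a g : G) (h : H) :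
    Phi c a (tmul c g h) = tmul c (a * g * a⁻¹) (c.actG a h) := rfl

/-- The action of `H` on the tensor product. -/
def Psi : H →* MulAut (NATensor c) where
  toFun k := mkAut c (psiHom c k) (psiHom c k⁻¹)
    (by
      intro p q
      simp only [psiHom_tmul]
      have e1 : c.actH k⁻¹ (c.actH k p) = p := by
        rw [← MulAut.mul_apply, ← map_mul, inv_mul_cancel, map_one, MulAut.one_apply]
      have e2 : k⁻¹ * (k * q * k⁻¹) * k⁻¹⁻¹ = q := by group
      rw [e1, e2])
    (by
      intro p q
      simp only [psiHom_tmul]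
      have e1 : c.actH k (c.actH k⁻¹ p) = p := by
        rw [← MulAut.mul_apply, ← map_mul, mul_inv_cancel, map_one, MulAut.one_apply]
      have e2 : k * (k⁻¹ * q * k⁻¹⁻¹) * k⁻¹ = q := by group
      rw [e1, e2])
  map_one' := by
    apply aut_eq_of_hom_eq c
    intro p q
    show psiHom c 1 (tmul c p q) = tmul c p q
    simp
  map_mul' a b := by
    apply aut_eq_of_hom_eq c
    intro p q
    show psiHom c (a * b) (tmul c p q) = psiHom c a (psiHom c b (tmul c p q))
    simp only [psiHom_tmul]
    have e1 : c.actH (a * b) p = c.actH a (c.actH b p) := by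
      rw [map_mul, MulAut.mul_apply]
    have e2 : a * b * q * (a * b)⁻¹ = a * (b * q * b⁻¹) * a⁻¹ := by group
    rw [e1, e2]

@[simp] lemma Psi_tmul (k : H) (g : G) (h : H) :
    Psi c k (tmul c g h) = tmul c (c.actH k g) (k * h * k⁻¹) := rfl

lemma exch_aux {M : Type*} [Group M] (P X Q Y R : M)
    (h : P * X * (Q * R) = P * Q * (Y * R)) : X * Q = Q * Y := by
  have h1 : P * (X * Q) * R = P * (Q * Y) * R := by
    calc P * (X * Q) * R = P * X * (Q * R) := by group
    _ = P * Q * (Y * R) := h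
    _ = P * (Q * Y) * R := by group
  exact mul_left_cancel (mul_right_cancel h1)

lemma solve_aux {M : Type*} [Group M] (C A B : M) (h : C * B * A = A * B) :
    C = A * (B * A⁻¹ * B⁻¹) := by
  have h1 : C * B * A * A⁻¹ * B⁻¹ = A * B * A⁻¹ * B⁻¹ := by rw [h]
  have h2 : C = A * B * A⁻¹ * B⁻¹ := by rw [← h1]; group
  rw [h2]; group

/-- `Ψ k Φ b Ψ k⁻¹ = Φ (ᵏb)`. -/
lemma psi_phi_psi_inv (k : H) (b : G) :
    Psi c k * Phi c b * (Psi c k)⁻¹ = Phi c (c.actH k b) := by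
  apply aut_eq_of_hom_eq c
  intro p q
  rw [← map_inv (Psi c)]
  simp only [MulAut.mul_apply, Psi_tmul, Phi_tmul]
  have einner : c.actH k (c.actH k⁻¹ p) = p := by
    rw [← MulAut.mul_apply, ← map_mul, mul_inv_cancel, map_one, MulAut.one_apply]
  have e1 : c.actH k (b * c.actH k⁻¹ p * b⁻¹) =
      c.actH k b * p * (c.actH k b)⁻¹ := by
    rw [map_mul, map_mul, einner, map_inv]
  have e2 : k * c.actG b (k⁻¹ * q * k⁻¹⁻¹) * k⁻¹ = c.actG (c.actH k b) q := by
    rw [c.compat_right]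
    congr 2
    group
  rw [e1, ← e2]

/-- The homomorphism `λ : G ⊗ H → G`, `g ⊗ h ↦ g ⋅ (ʰg)⁻¹`. -/
def lam : NATensor c →* G :=
  tlift c (fun g h => g * (c.actH h g)⁻¹)
    (by
      intro g g' h
      have e5 : c.actH (c.actG g h) (g * g' * g⁻¹) = g * (c.actH h g') * g⁻¹ := by
        rw [c.compat_left]
        have : g⁻¹ * (g * g' * g⁻¹) * g = g' := by group
        rw [this]
      rw [e5, map_mul]
      group)
    (by
      intro g h h'
      have e2 : c.actH (h * h' * h⁻¹) (c.actH h g) = c.actH (h * h') g := by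
        rw [← MulAut.mul_apply, ← map_mul]
        congr 2
        group
      rw [e2]
      group)

@[simp] lemma lam_tmul (g : G) (h : H) :
    lam c (tmul c g h) = g * (c.actH h g)⁻¹ :=
  tlift_tmul ..

/-- Conjugation by a generator is the `Φ`-action of its `λ`-image. -/
lemma conj_tmul (a : G) (h : H) :
    MulAut.conj (tmul c a h) = Phi c (a * (c.actH h a)⁻¹) := by
  -- Step 1: the exchange identity on generators.
  have step1 : ∀ b k, Phi c a (Psi c h (tmul c b k)) * tmul c a h
      = tmul c a h * Psi c h (Phi c a (tmul c b k)) := by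
    intro b k
    have E1 : tmul c (a * b) (h * k) =
        tmul c (a * b * a⁻¹) (c.actG a (h * k)) * tmul c a (h * k) :=
      tensor_rel1 c a b (h * k)
    -- expand the two inner factors of E1
    have E1a : tmul c (a * b * a⁻¹) (c.actG a (h * k)) =
        tmul c (a * b * a⁻¹) (c.actG a h) *
          Phi c a (Psi c h (tmul c b k)) := by
      have := tensor_rel2 c (a * b * a⁻¹) (c.actG a h) (c.actG a k)
      rw [← map_mul] at this
      rw [this]
      congr 1
      simp only [Phi_tmul, Psi_tmul]
      have u1 : c.actH (c.actG a h) (a * b * a⁻¹) = a * c.actH h b * a⁻¹ := by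
        rw [c.compat_left]
        have : a⁻¹ * (a * b * a⁻¹) * a = b := by group
        rw [this]
      have u2 : c.actG a (h * k) * (c.actG a h)⁻¹ = c.actG a (h * k * h⁻¹) := by
        rw [← map_inv, ← map_mul]
      rw [u1, u2]
    have E1b : tmul c a (h * k) =
        tmul c a h * tmul c (c.actH h a) (h * k * h⁻¹) := tensor_rel2 c a h k
    have E2 : tmul c (a * b) (h * k) =
        tmul c (a * b) h * tmul c (c.actH h (a * b)) (h * k * h⁻¹) :=
      tensor_rel2 c (a * b) h k
    have E2a : tmul c (a * b) h =
        tmul c (a * b * a⁻¹) (c.actG a h) * tmul c a h := tensor_rel1 c a b h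
    have E2b : tmul c (c.actH h (a * b)) (h * k * h⁻¹) =
        Psi c h (Phi c a (tmul c b k)) * tmul c (c.actH h a) (h * k * h⁻¹) := by
      have := tensor_rel1 c (c.actH h a) (c.actH h b) (h * k * h⁻¹)
      rw [← map_mul] at this
      rw [this]
      congr 1
      simp only [Phi_tmul, Psi_tmul]
      have u1 : c.actH h (a * b) * (c.actH h a)⁻¹ =
          c.actH h (a * b * a⁻¹) := by rw [← map_inv, ← map_mul]
      have u2 : c.actG (c.actH h a) (h * k * h⁻¹) = h * c.actG a k * h⁻¹ := by
        rw [c.compat_right]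
        have : h⁻¹ * (h * k * h⁻¹) * h = k := by group
        rw [this]
      rw [u1, u2]
    rw [E1a, E1b] at E1
    rw [E2a, E2b] at E2
    exact exch_aux _ _ _ _ _ (E1.symm.trans E2)
  -- Step 2: conj t * Ψ h * Φ a = Φ a * Ψ h
  have step2 : MulAut.conj (tmul c a h) * Psi c h * Phi c a = Phi c a * Psi c h := by
    apply aut_eq_of_hom_eq c
    intro p q
    simp only [MulAut.mul_apply, MulAut.conj_apply]
    rw [← step1 p q]
    group
  -- Step 3: solve for conj t
  have step3 : MulAut.conj (tmul c a h) =
      Phi c a * (Psi c h * (Phi c a)⁻¹ * (Psi c h)⁻¹) :=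
    solve_aux _ _ _ step2
  have minv : (Phi c a)⁻¹ = Phi c a⁻¹ := ((Phi c).map_inv a).symm
  rw [step3, minv, psi_phi_psi_inv, ← map_mul, map_inv]

/-- Conjugation equals `Φ ∘ λ`. -/
lemma conj_eq_phi_lam :
    (MulAut.conj : NATensor c →* MulAut (NATensor c)) = (Phi c).comp (lam c) := by
  apply hom_ext c
  intro g h
  rw [MonoidHom.comp_apply, lam_tmul]
  exact conj_tmul c g h

lemma ker_lam_le_center : (lam c).ker ≤ Subgroup.center (NATensor c) := by
  intro t ht
  rw [Subgroup.mem_center_iff]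
  intro x
  have h1 : MulAut.conj t = 1 := by
    have := congrArg (fun f : NATensor c →* MulAut (NATensor c) => f t) (conj_eq_phi_lam c)
    rw [MonoidHom.comp_apply, MonoidHom.mem_ker.mp ht, map_one] at this
    exact this
  have h2 : t * x * t⁻¹ = x := by
    have := congrArg (fun e : MulAut (NATensor c) => e x) h1
    simpa using this
  calc x * t = (t * x * t⁻¹) * t := by rw [h2]
  _ = t * x := by group

end Aut



end Tensor

section NSub

variable (c : CompatibleActions G H)

/-- Auxiliary: conjugation by `e x` equals `e ∘ conj x ∘ e⁻¹` for an automorphism `e`. -/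
lemma aut_conj_apply (e : MulAut G) (x : G) :
    MulAut.conj (e x) = e * MulAut.conj x * e⁻¹ := by
  apply MulEquiv.ext
  intro y
  simp only [MulAut.conj_apply, MulAut.mul_apply]
  rw [map_mul, map_mul, map_inv]
  congr 2
  exact (MulAut.apply_inv_self G e y).symm

/-- Compatibility, packaged: `conj g ∘ ψ h ∘ conj g⁻¹ = ψ (ᵍh)`. -/
lemma conj_actH (g : G) (h : H) :
    c.actH (c.actG g h) = MulAut.conj g * c.actH h * (MulAut.conj g)⁻¹ := by
  apply MulEquiv.ext
  intro y
  simp only [MulAut.mul_apply]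
  have hinv : (MulAut.conj g)⁻¹ y = g⁻¹ * y * g := by
    rw [← map_inv (MulAut.conj : G →* MulAut G) g, MulAut.conj_apply]
    group
  rw [c.compat_left, hinv, MulAut.conj_apply]

/-- The finite normal-ish subgroup `N` of `G`: elements whose conjugation action agrees
with the action of some element of `H`. -/
def NSub : Subgroup G := Subgroup.comap (MulAut.conj : G →* MulAut G) c.actH.range

lemma mem_NSub {x : G} : x ∈ NSub c ↔ ∃ h : H, c.actH h = MulAut.conj x := by
  rw [NSub, Subgroup.mem_comap, MonoidHom.mem_range]

lemma deriv_mem_NSub (g : G) (h : H) : g * (c.actH h g)⁻¹ ∈ NSub c := by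
  rw [mem_NSub]
  refine ⟨c.actG g h * h⁻¹, ?_⟩
  have h1 : c.actH (c.actG g h) = MulAut.conj g * c.actH h * (MulAut.conj g)⁻¹ :=
    conj_actH c g h
  have h2 : MulAut.conj (c.actH h g) = c.actH h * MulAut.conj g * (c.actH h)⁻¹ :=
    aut_conj_apply (c.actH h) g
  rw [map_mul, map_inv, h1, map_mul, map_inv, h2]
  group

lemma NSub_invariant (k : H) {x : G} (hx : x ∈ NSub c) : c.actH k x ∈ NSub c := by
  rw [mem_NSub] at hx ⊢
  obtain ⟨h, hh⟩ := hx
  refine ⟨k * h * k⁻¹, ?_⟩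
  rw [aut_conj_apply (c.actH k) x, ← hh, map_mul, map_mul, map_inv]

lemma finite_NSub [Finite H] (hZ : Finite (Subgroup.center G)) :
    Finite (NSub c) := by
  haveI : Finite c.actH.range :=
    Finite.of_surjective _ c.actH.rangeRestrict_surjective
  set ρ : NSub c →* MulAut G := (MulAut.conj : G →* MulAut G).comp (NSub c).subtype with hρ
  haveI hker : Finite ρ.ker := by
    have hmem : ∀ x : ρ.ker, (x.1.1 : G) ∈ Subgroup.center G := by
      intro x
      have h1 : MulAut.conj (x.1.1 : G) = 1 := x.2
      rw [Subgroup.mem_center_iff]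
      intro g
      have h2 := congrArg (fun e : MulAut G => e g) h1
      simp only [MulAut.one_apply, MulAut.conj_apply] at h2
      calc g * x.1.1 = (x.1.1 * g * x.1.1⁻¹) * x.1.1 := by rw [h2]
      _ = x.1.1 * g := by group
    refine Finite.of_injective
      (fun x : ρ.ker => (⟨x.1.1, hmem x⟩ : Subgroup.center G)) ?_
    intro a b hab
    dsimp only at hab
    have h3 : (a.1.1 : G) = b.1.1 := congrArg (fun z : ↥(Subgroup.center G) => (z : G)) hab
    exact Subtype.ext (Subtype.ext h3)
  haveI hrange : Finite ρ.range := by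
    have hle : ρ.range ≤ c.actH.range := by
      rintro y ⟨x, rfl⟩
      exact x.2
    exact Finite.of_injective (Subgroup.inclusion hle) (Subgroup.inclusion_injective hle)
  haveI : Finite (NSub c ⧸ ρ.ker) :=
    Finite.of_equiv _ (QuotientGroup.quotientKerEquivRange ρ).symm.toEquiv
  exact Finite.of_equiv _ (Subgroup.groupEquivQuotientProdSubgroup (s := ρ.ker)).symm

lemma tmul_generates :
    Subgroup.closure (Set.range fun p : G × H => tmul c p.1 p.2) = ⊤ :=
  PresentedGroup.closure_range_of (tensorRels c)

lemma lam_mem_NSub (t : NATensor c) : lam c t ∈ NSub c := by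
  have ht : t ∈ (⊤ : Subgroup (NATensor c)) := trivial
  rw [← tmul_generates c] at ht
  induction ht using Subgroup.closure_induction with
  | mem x hx =>
    obtain ⟨⟨g, h⟩, rfl⟩ := hx
    rw [lam_tmul]
    exact deriv_mem_NSub c g h
  | one => rw [map_one]; exact (NSub c).one_mem
  | mul x y _ _ hx hy => rw [map_mul]; exact (NSub c).mul_mem hx hy
  | inv x _ hx => rw [map_inv]; exact (NSub c).inv_mem hx

lemma finite_quot_center [Finite H] (hZ : Finite (Subgroup.center G)) :
    Finite (NATensor c ⧸ Subgroup.center (NATensor c)) := by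
  haveI hN : Finite (NSub c) := finite_NSub c hZ
  haveI : Finite (lam c).range := by
    have hmem : ∀ x : (lam c).range, (x : G) ∈ NSub c := by
      rintro ⟨x, t, rfl⟩
      exact lam_mem_NSub c t
    refine Finite.of_injective
      (fun x : (lam c).range => (⟨x.1, hmem x⟩ : NSub c)) ?_
    intro a b hab
    dsimp only at hab
    have h3 : (a.1 : G) = b.1 := congrArg (fun z : ↥(NSub c) => (z : G)) hab
    exact Subtype.ext h3
  haveI : Finite (NATensor c ⧸ (lam c).ker) :=
    Finite.of_equiv _ (QuotientGroup.quotientKerEquivRange (lam c)).symm.toEquiv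
  refine Finite.of_surjective
    (QuotientGroup.map (lam c).ker (Subgroup.center (NATensor c))
      (MonoidHom.id _) (fun x hx => ker_lam_le_center c hx)) ?_
  intro y
  obtain ⟨x, rfl⟩ := QuotientGroup.mk'_surjective _ y
  exact ⟨QuotientGroup.mk x, rfl⟩

end NSub

section CommSet

open scoped commutatorElement

variable {M : Type*} [Group M]

lemma comm_eq_of_center (a b z w : M) (hz : z ∈ Subgroup.center M)
    (hw : w ∈ Subgroup.center M) : ⁅a * z, b * w⁆ = ⁅a, b⁆ := by
  rw [Subgroup.mem_center_iff] at hz hw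
  have e1 : ⁅a * z, b * w⁆ = a * (z * (b * w)) * z⁻¹ * a⁻¹ * w⁻¹ * b⁻¹ := by
    rw [commutatorElement_def]; group
  rw [e1, ← hz (b * w)]
  have e2 : a * (b * w * z) * z⁻¹ * a⁻¹ * w⁻¹ * b⁻¹ = a * b * (w * a⁻¹) * w⁻¹ * b⁻¹ := by
    group
  rw [e2, ← hw a⁻¹]
  rw [commutatorElement_def]
  group

lemma finite_commutatorSet_of_finite_quot_center
    (hq : Finite (M ⧸ Subgroup.center M)) : Finite (commutatorSet M) := by
  set Z := Subgroup.center M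
  have hsub : commutatorSet M ⊆
      Set.range (fun p : (M ⧸ Z) × (M ⧸ Z) =>
        ⁅(Quotient.out p.1 : M), (Quotient.out p.2 : M)⁆) := by
    rintro x ⟨g₁, g₂, rfl⟩
    refine ⟨(QuotientGroup.mk g₁, QuotientGroup.mk g₂), ?_⟩
    dsimp only
    have h1 : (QuotientGroup.mk g₁ : M ⧸ Z).out = g₁ * (g₁⁻¹ * (QuotientGroup.mk g₁ : M ⧸ Z).out) := by group
    have h2 : (QuotientGroup.mk g₂ : M ⧸ Z).out = g₂ * (g₂⁻¹ * (QuotientGroup.mk g₂ : M ⧸ Z).out) := by group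
    rw [h1, h2, comm_eq_of_center]
    · exact QuotientGroup.eq.mp (QuotientGroup.out_eq' (QuotientGroup.mk g₁ : M ⧸ Z)).symm
    · exact QuotientGroup.eq.mp (QuotientGroup.out_eq' (QuotientGroup.mk g₂ : M ⧸ Z)).symm
  exact (Set.finite_range _).subset hsub |>.to_subtype

end CommSet

section Ab

variable (c : CompatibleActions G H)

/-- The image of `g ⊗ h` in the abelianization of the tensor product. -/
def fab (g : G) (h : H) : Abelianization (NATensor c) := Abelianization.of (tmul c g h)

lemma fab_def (g : G) (h : H) : fab c g h = Abelianization.of (tmul c g h) := rfl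

lemma fab_rel2 (g : G) (h h' : H) :
    fab c g (h * h') = fab c g h * fab c (c.actH h g) (h * h' * h⁻¹) := by
  rw [fab_def, fab_def, fab_def, ← map_mul, ← tensor_rel2]

lemma fab_rpeel (a b : G) (h : H) :
    fab c (a * b) h = fab c a (c.actG b h) * fab c b h := by
  have h1 := congrArg (Abelianization.of (G := NATensor c)) (tensor_rel1 c b (b⁻¹ * a * b) h)
  rw [map_mul] at h1
  have e1 : b * (b⁻¹ * a * b) = a * b := by group
  have e2 : b * (b⁻¹ * a * b) * b⁻¹ = a := by group
  rw [e2, e1] at h1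
  rw [fab_def, fab_def, fab_def]
  exact h1

lemma fab_one_left (h : H) : fab c 1 h = 1 := by rw [fab_def, one_tmul, map_one]

lemma fab_one_right (g : G) : fab c g 1 = 1 := by rw [fab_def, tmul_one, map_one]

lemma fab_inv (x : G) (h : H) : fab c x⁻¹ h = (fab c x (c.actG x⁻¹ h))⁻¹ := by
  have h1 := fab_rpeel c x⁻¹ x (c.actG x⁻¹ h)
  rw [inv_mul_cancel, fab_one_left] at h1
  have e : c.actG x (c.actG x⁻¹ h) = h := by
    rw [← MulAut.mul_apply, ← map_mul, mul_inv_cancel, map_one, MulAut.one_apply]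
  rw [e] at h1
  exact eq_inv_of_mul_eq_one_left h1.symm

lemma fab_pow (h : H) : ∀ (n : ℕ) (g : G),
    fab c g (h ^ n) = ∏ i ∈ Finset.range n, fab c (c.actH (h ^ i) g) h := by
  intro n
  induction n with
  | zero =>
    intro g
    rw [pow_zero, fab_one_right, Finset.range_zero, Finset.prod_empty]
  | succ n ih =>
    intro g
    rw [pow_succ', fab_rel2]
    have e1 : h * h ^ n * h⁻¹ = h ^ n := by group
    rw [e1, ih (c.actH h g), Finset.prod_range_succ']
    have e2 : ∀ i : ℕ, c.actH (h ^ i) (c.actH h g) = c.actH (h ^ (i + 1)) g := by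
      intro i
      rw [← MulAut.mul_apply, ← map_mul, ← pow_succ]
    simp only [e2]
    rw [pow_zero, map_one, MulAut.one_apply]
    exact mul_comm _ _

variable [Fintype (NSub c)]

/-- Sum over all of `N` of `f ν h`. -/
noncomputable def Ssum (h : H) : Abelianization (NATensor c) :=
  ∏ ν : NSub c, fab c (ν : G) h

/-- The bijection of `N` given by the action of `k`. -/
def actHEquiv (k : H) : NSub c ≃ NSub c where
  toFun ν := ⟨c.actH k ν, NSub_invariant c k ν.2⟩
  invFun ν := ⟨c.actH k⁻¹ ν, NSub_invariant c k⁻¹ ν.2⟩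
  left_inv ν := Subtype.ext (by
    show c.actH k⁻¹ (c.actH k ν) = ν
    rw [← MulAut.mul_apply, ← map_mul, inv_mul_cancel, map_one, MulAut.one_apply])
  right_inv ν := Subtype.ext (by
    show c.actH k (c.actH k⁻¹ ν) = ν
    rw [← MulAut.mul_apply, ← map_mul, mul_inv_cancel, map_one, MulAut.one_apply])

lemma Ssum_pow [Finite H] (h : H) : (Ssum c h) ^ (Nat.card H) = 1 := by
  have hm : ∀ ν : NSub c, (1 : Abelianization (NATensor c)) =
      ∏ i ∈ Finset.range (Nat.card H), fab c (c.actH (h ^ i) (ν : G)) h := by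
    intro ν
    have h1 := fab_pow c h (Nat.card H) (ν : G)
    rw [pow_card_eq_one', fab_one_right] at h1
    exact h1
  calc (Ssum c h) ^ (Nat.card H)
      = ∏ _i ∈ Finset.range (Nat.card H), Ssum c h := by
        rw [Finset.prod_const, Finset.card_range]
    _ = ∏ _i ∈ Finset.range (Nat.card H), ∏ ν : NSub c, fab c (ν : G) h := rfl
    _ = ∏ i ∈ Finset.range (Nat.card H), ∏ ν : NSub c, fab c (c.actH (h ^ i) (ν : G)) h := by
        refine Finset.prod_congr rfl (fun i _ => ?_)
        exact (Equiv.prod_comp (actHEquiv c (h ^ i))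
          (fun ν : NSub c => fab c (ν : G) h)).symm
    _ = ∏ ν : NSub c, ∏ i ∈ Finset.range (Nat.card H), fab c (c.actH (h ^ i) (ν : G)) h :=
        Finset.prod_comm
    _ = ∏ _ν : NSub c, (1 : Abelianization (NATensor c)) :=
        Finset.prod_congr rfl (fun ν _ => (hm ν).symm)
    _ = 1 := Finset.prod_const_one

lemma Ssum_shift (ν : NSub c) (h : H) :
    Ssum c h = Ssum c (c.actG (ν : G) h) * (fab c (ν : G) h) ^ (Fintype.card (NSub c)) := by
  calc Ssum c h = ∏ ν' : NSub c, fab c ((ν' * ν : NSub c) : G) h :=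
        (Equiv.prod_comp (Equiv.mulRight ν) (fun ν' : NSub c => fab c (ν' : G) h)).symm
    _ = ∏ ν' : NSub c, (fab c (ν' : G) (c.actG (ν : G) h) * fab c (ν : G) h) := by
        refine Finset.prod_congr rfl (fun ν' _ => ?_)
        rw [Subgroup.coe_mul, fab_rpeel]
    _ = Ssum c (c.actG (ν : G) h) * (fab c (ν : G) h) ^ (Fintype.card (NSub c)) := by
        rw [Finset.prod_mul_distrib, Finset.prod_const, Finset.card_univ]
        rfl

lemma fab_N_pow [Finite H] (ν : NSub c) (h : H) :
    (fab c (ν : G) h) ^ (Fintype.card (NSub c) * Nat.card H) = 1 := by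
  have h1 : (fab c (ν : G) h) ^ (Fintype.card (NSub c)) =
      (Ssum c (c.actG (ν : G) h))⁻¹ * Ssum c h := by
    rw [Ssum_shift c ν h]
    group
  rw [pow_mul, h1, mul_pow, inv_pow, Ssum_pow, Ssum_pow, inv_one, one_mul]

lemma fab_gen_pow [Finite H] (g : G) (h : H) :
    (fab c g h) ^ (Nat.card H * (Fintype.card (NSub c) * Nat.card H)) = 1 := by
  have hterm : ∀ i : ℕ, fab c (c.actH (h ^ i) g) h =
      fab c (c.actH (h ^ i) g * g⁻¹) (c.actG g h) * fab c g h := by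
    intro i
    have h1 := fab_rpeel c (c.actH (h ^ i) g * g⁻¹) g h
    rw [inv_mul_cancel_right] at h1
    exact h1
  have h1 : (1 : Abelianization (NATensor c)) =
      (∏ i ∈ Finset.range (Nat.card H), fab c (c.actH (h ^ i) g * g⁻¹) (c.actG g h)) *
        (fab c g h) ^ (Nat.card H) := by
    have h2 := fab_pow c h (Nat.card H) g
    rw [pow_card_eq_one', fab_one_right] at h2
    calc (1 : Abelianization (NATensor c))
        = ∏ i ∈ Finset.range (Nat.card H), fab c (c.actH (h ^ i) g) h := h2
      _ = ∏ i ∈ Finset.range (Nat.card H),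
            (fab c (c.actH (h ^ i) g * g⁻¹) (c.actG g h) * fab c g h) :=
          Finset.prod_congr rfl (fun i _ => hterm i)
      _ = _ := by rw [Finset.prod_mul_distrib, Finset.prod_const, Finset.card_range]
  have h1' : (fab c g h) ^ (Nat.card H) *
      (∏ i ∈ Finset.range (Nat.card H), fab c (c.actH (h ^ i) g * g⁻¹) (c.actG g h)) = 1 := by
    rw [mul_comm]
    exact h1.symm
  have h3 : (fab c g h) ^ (Nat.card H) =
      (∏ i ∈ Finset.range (Nat.card H), fab c (c.actH (h ^ i) g * g⁻¹) (c.actG g h))⁻¹ :=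
    eq_inv_of_mul_eq_one_left h1'
  have hmem : ∀ i : ℕ, c.actH (h ^ i) g * g⁻¹ ∈ NSub c := by
    intro i
    have := (NSub c).inv_mem (deriv_mem_NSub c g (h ^ i))
    rwa [mul_inv_rev, inv_inv] at this
  rw [pow_mul, h3, inv_pow, ← Finset.prod_pow]
  have h4 : ∀ i ∈ Finset.range (Nat.card H),
      (fab c (c.actH (h ^ i) g * g⁻¹) (c.actG g h)) ^ (Fintype.card (NSub c) * Nat.card H)
        = 1 := by
    intro i _
    exact fab_N_pow c ⟨_, hmem i⟩ (c.actG g h)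
  rw [Finset.prod_congr rfl h4, Finset.prod_const_one, inv_one]

omit [Fintype (NSub c)] in
lemma fab_generates :
    Subgroup.closure (Set.range fun p : G × H => fab c p.1 p.2) = ⊤ := by
  have hsurj : Function.Surjective
      (Abelianization.of : NATensor c →* Abelianization (NATensor c)) := by
    intro x
    exact QuotientGroup.induction_on x fun z => ⟨z, rfl⟩
  have h1 : (Set.range fun p : G × H => fab c p.1 p.2) =
      Abelianization.of '' (Set.range fun p : G × H => tmul c p.1 p.2) := by
    rw [← Set.range_comp]
    rfl
  rw [h1, ← MonoidHom.map_closure, tmul_generates c, ← MonoidHom.range_eq_map]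
  exact MonoidHom.range_eq_top.2 hsurj

lemma fab_torsion [Finite H] : Monoid.IsTorsion (Abelianization (NATensor c)) := by
  haveI : Nonempty H := ⟨1⟩
  haveI : Nonempty (NSub c) := ⟨1⟩
  set E := Nat.card H * (Fintype.card (NSub c) * Nat.card H) with hE
  have hEpos : 0 < E :=
    Nat.mul_pos Nat.card_pos (Nat.mul_pos Fintype.card_pos Nat.card_pos)
  set K : Subgroup (Abelianization (NATensor c)) :=
    { carrier := {x | x ^ E = 1}
      one_mem' := one_pow E
      mul_mem' := by
        intro a b ha hb
        simp only [Set.mem_setOf_eq] at *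
        rw [mul_pow, ha, hb, one_mul]
      inv_mem' := by
        intro a ha
        simp only [Set.mem_setOf_eq] at *
        rw [inv_pow, ha, inv_one] } with hK
  have hle : (⊤ : Subgroup (Abelianization (NATensor c))) ≤ K := by
    rw [← fab_generates c]
    refine (Subgroup.closure_le K).mpr ?_
    rintro x ⟨p, rfl⟩
    exact fab_gen_pow c p.1 p.2
  intro x
  rw [isOfFinOrder_iff_pow_eq_one]
  exact ⟨E, hEpos, hle (Subgroup.mem_top x)⟩

lemma fg_abelianization [Finite H] (hFG : Group.FG G) :
    Group.FG (Abelianization (NATensor c)) := by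
  obtain ⟨S, hScl, hSfin⟩ := Group.fg_iff.mp hFG
  haveI : Finite S := hSfin
  set S1 : Set (Abelianization (NATensor c)) :=
    Set.range (fun p : (NSub c) × H => fab c (p.1 : G) p.2) with hS1
  set S2 : Set (Abelianization (NATensor c)) := Set.image2 (fab c) S Set.univ with hS2
  have hfin : (S1 ∪ S2).Finite :=
    (Set.finite_range _).union (Set.Finite.image2 _ hSfin Set.finite_univ)
  rw [Group.fg_iff]
  refine ⟨S1 ∪ S2, ?_, hfin⟩
  have hmem : ∀ g : G, ∀ h : H, fab c g h ∈ Subgroup.closure (S1 ∪ S2) := by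
    intro g
    have hg : g ∈ Subgroup.closure S := hScl ▸ Subgroup.mem_top g
    induction hg using Subgroup.closure_induction with
    | mem x hx =>
      intro h
      exact Subgroup.subset_closure (Or.inr (Set.mem_image2_of_mem hx (Set.mem_univ h)))
    | one =>
      intro h
      rw [fab_one_left]
      exact one_mem _
    | mul x y hx hy ihx ihy =>
      intro h
      rw [fab_rpeel]
      exact mul_mem (ihx _) (ihy _)
    | inv x hx ihx =>
      intro h
      rw [fab_inv]
      exact inv_mem (ihx _)
  rw [eq_top_iff, ← fab_generates c]
  refine (Subgroup.closure_le _).mpr ?_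
  rintro x ⟨p, rfl⟩
  exact hmem p.1 p.2

omit [Fintype (NSub c)] in
lemma finite_abelianization [Finite H] (hN : Finite (NSub c)) (hFG : Group.FG G) :
    Finite (Abelianization (NATensor c)) := by
  letI := Fintype.ofFinite (NSub c)
  haveI := fg_abelianization c hFG
  exact CommGroup.finite_of_fg_torsion _ (fab_torsion c)

end Ab

section FreeCenter

lemma swap_ne : Equiv.swap (0 : Fin 3) 1 * Equiv.swap 1 2 ≠ Equiv.swap 1 2 * Equiv.swap (0 : Fin 3) 1 := by decide

lemma isFreeGroup_of_ne_comm {K : Type*} [Group K] [IsFreeGroup K]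
    {i j : IsFreeGroup.Generators K} (hij : i ≠ j) :
    IsFreeGroup.of i * IsFreeGroup.of j ≠ IsFreeGroup.of j * IsFreeGroup.of i := by
  intro hcomm
  classical
  set f : IsFreeGroup.Generators K → Equiv.Perm (Fin 3) := fun x =>
    if x = i then Equiv.swap 0 1 else if x = j then Equiv.swap 1 2 else 1 with hf
  have hfi : f i = Equiv.swap 0 1 := by simp only [hf, if_pos rfl]
  have hfj : f j = Equiv.swap 1 2 := by
    simp only [hf]
    rw [if_neg (Ne.symm hij)]
    simp
  have h1 := congrArg (IsFreeGroup.lift f) hcomm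
  rw [map_mul, map_mul, IsFreeGroup.lift_of, IsFreeGroup.lift_of, hfi, hfj] at h1
  exact swap_ne h1

lemma cyclic_of_comm_isFree {K : Type*} [Group K] [IsFreeGroup K]
    (hcomm : ∀ x y : K, x * y = y * x) :
    ∃ u : K, ∀ x : K, ∃ k : ℤ, x = u ^ k := by
  haveI hsing : Subsingleton (IsFreeGroup.Generators K) := by
    refine ⟨fun i j => ?_⟩
    by_contra hij
    exact isFreeGroup_of_ne_comm hij (hcomm _ _)
  rcases isEmpty_or_nonempty (IsFreeGroup.Generators K) with hE | ⟨⟨i0⟩⟩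
  · refine ⟨1, fun x => ⟨0, ?_⟩⟩
    rw [zpow_zero]
    obtain ⟨w, rfl⟩ := (IsFreeGroup.mulEquiv K).surjective x
    have hw : w ∈ (⊤ : Subgroup (FreeGroup (IsFreeGroup.Generators K))) := trivial
    rw [← FreeGroup.closure_range_of, Set.range_eq_empty, Subgroup.closure_empty] at hw
    rw [Subgroup.mem_bot.mp hw, map_one]
  · refine ⟨IsFreeGroup.of i0, fun x => ?_⟩
    obtain ⟨w, rfl⟩ := (IsFreeGroup.mulEquiv K).surjective x
    have hw : w ∈ Subgroup.closure (Set.range FreeGroup.of) := by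
      rw [FreeGroup.closure_range_of]; trivial
    induction hw using Subgroup.closure_induction with
    | mem y hy =>
      obtain ⟨i, rfl⟩ := hy
      refine ⟨1, ?_⟩
      rw [zpow_one, Subsingleton.elim i0 i]
      rfl
    | one => exact ⟨0, by rw [map_one, zpow_zero]⟩
    | mul y z _ _ ihy ihz =>
      obtain ⟨k1, hk1⟩ := ihy
      obtain ⟨k2, hk2⟩ := ihz
      exact ⟨k1 + k2, by rw [map_mul, hk1, hk2, zpow_add]⟩
    | inv y _ ihy =>
      obtain ⟨k1, hk1⟩ := ihy
      exact ⟨-k1, by rw [map_inv, hk1, zpow_neg]⟩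

lemma comm_closure_of_comm {M : Type*} [Group M] {S : Set M}
    (hS : ∀ x ∈ S, ∀ y ∈ S, Commute x y) :
    ∀ x ∈ Subgroup.closure S, ∀ y ∈ Subgroup.closure S, Commute x y := by
  intro x hx y hy
  exact Subgroup.closure_induction₂ (p := fun x y _ _ => Commute x y)
    (fun x y hx hy => hS x hx y hy)
    (fun x _ => Commute.one_left x)
    (fun x _ => Commute.one_right x)
    (fun x y z _ _ _ h1 h2 => h1.mul_left h2)
    (fun y z x _ _ _ h1 h2 => h1.mul_right h2)
    (fun x y _ _ h => h.inv_left)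
    (fun x y _ _ h => h.inv_right)
    hx hy

/-- Exponent-sum homomorphism of the free group. -/
def expSum {n : ℕ} (i0 : Fin n) : FreeGroup (Fin n) →* Multiplicative ℤ :=
  FreeGroup.lift (fun i => Multiplicative.ofAdd (if i = i0 then (1 : ℤ) else 0))

lemma expSum_zpow {n : ℕ} (i0 : Fin n) (u : FreeGroup (Fin n)) (k : ℤ) :
    Multiplicative.toAdd (expSum i0 (u ^ k)) = k * Multiplicative.toAdd (expSum i0 u) := by
  rw [map_zpow]
  rw [← smul_eq_mul, ← toAdd_zpow]

lemma freeGroup_center_eq_bot {n : ℕ} (hn : 2 ≤ n) {w : FreeGroup (Fin n)}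
    (hw : w ∈ Subgroup.center (FreeGroup (Fin n))) : w = 1 := by
  by_contra hw1
  have h0 : (0 : ℕ) < n := by omega
  have h1n : (1 : ℕ) < n := by omega
  set a : FreeGroup (Fin n) := FreeGroup.of ⟨0, h0⟩ with ha
  set b : FreeGroup (Fin n) := FreeGroup.of ⟨1, h1n⟩ with hb
  have hc := Subgroup.mem_center_iff.mp hw
  -- cyclic subgroups
  have main : ∀ x : FreeGroup (Fin n), ∃ (u : FreeGroup (Fin n)) (s t : ℤ),
      x = u ^ s ∧ w = u ^ t := by
    intro x
    set S : Set (FreeGroup (Fin n)) := {x, w} with hSdef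
    have hS : ∀ y ∈ S, ∀ z ∈ S, Commute y z := by
      intro y hy z hz
      simp only [hSdef, Set.mem_insert_iff, Set.mem_singleton_iff] at hy hz
      rcases hy with rfl | rfl
      · rcases hz with rfl | rfl
        · exact Commute.refl _
        · exact hc y
      · rcases hz with rfl | rfl
        · exact (hc z).symm
        · exact Commute.refl _
    set K : Subgroup (FreeGroup (Fin n)) := Subgroup.closure S with hK
    have hcommK : ∀ p q : K, p * q = q * p := by
      intro p q
      exact Subtype.ext (comm_closure_of_comm hS p.1 p.2 q.1 q.2)
    haveI : IsFreeGroup K := subgroupIsFreeOfIsFree K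
    obtain ⟨u, hu⟩ := cyclic_of_comm_isFree hcommK
    have hxK : x ∈ K := Subgroup.subset_closure (Set.mem_insert x _)
    have hwK : w ∈ K := Subgroup.subset_closure (Set.mem_insert_of_mem x rfl)
    obtain ⟨s, hs⟩ := hu ⟨x, hxK⟩
    obtain ⟨t, ht⟩ := hu ⟨w, hwK⟩
    refine ⟨u, s, t, ?_, ?_⟩
    · have := congrArg (fun z : K => (z : FreeGroup (Fin n))) hs
      simpa using this
    · have := congrArg (fun z : K => (z : FreeGroup (Fin n))) ht
      simpa using this
  obtain ⟨u, s, t, hxa, hwu⟩ := main a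
  obtain ⟨v, p, q, hxb, hwv⟩ := main b
  have ht0 : t ≠ 0 := by
    intro h
    rw [h, zpow_zero] at hwu
    exact hw1 hwu
  have hq0 : q ≠ 0 := by
    intro h
    rw [h, zpow_zero] at hwv
    exact hw1 hwv
  -- exponent sums
  have hea : Multiplicative.toAdd (expSum (⟨0, h0⟩ : Fin n) a) = 1 := by
    rw [ha]
    show Multiplicative.toAdd (FreeGroup.lift _ (FreeGroup.of _)) = 1
    rw [FreeGroup.lift_apply_of, if_pos rfl]
    rfl
  have heb1 : Multiplicative.toAdd (expSum (⟨1, h1n⟩ : Fin n) b) = 1 := by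
    rw [hb]
    show Multiplicative.toAdd (FreeGroup.lift _ (FreeGroup.of _)) = 1
    rw [FreeGroup.lift_apply_of, if_pos rfl]
    rfl
  have hea1 : Multiplicative.toAdd (expSum (⟨1, h1n⟩ : Fin n) a) = 0 := by
    rw [ha]
    show Multiplicative.toAdd (FreeGroup.lift _ (FreeGroup.of _)) = 0
    rw [FreeGroup.lift_apply_of, if_neg (by simp [Fin.ext_iff])]
    rfl
  -- from a = u^s : 1 = s * α0, 0 = s * α1
  have e1 : (1 : ℤ) = s * Multiplicative.toAdd (expSum (⟨0, h0⟩ : Fin n) u) := by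
    rw [← hea, hxa, expSum_zpow]
  have e2 : (0 : ℤ) = s * Multiplicative.toAdd (expSum (⟨1, h1n⟩ : Fin n) u) := by
    rw [← hea1, hxa, expSum_zpow]
  have e3 : Multiplicative.toAdd (expSum (⟨1, h1n⟩ : Fin n) w)
      = t * Multiplicative.toAdd (expSum (⟨1, h1n⟩ : Fin n) u) := by
    rw [hwu, expSum_zpow]
  have e4 : (1 : ℤ) = p * Multiplicative.toAdd (expSum (⟨1, h1n⟩ : Fin n) v) := by
    rw [← heb1, hxb, expSum_zpow]
  have e5 : Multiplicative.toAdd (expSum (⟨1, h1n⟩ : Fin n) w)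
      = q * Multiplicative.toAdd (expSum (⟨1, h1n⟩ : Fin n) v) := by
    rw [hwv, expSum_zpow]
  -- derive contradiction
  have hs0 : s ≠ 0 := by
    intro h
    rw [h, zero_mul] at e1
    exact one_ne_zero e1
  have hα1 : Multiplicative.toAdd (expSum (⟨1, h1n⟩ : Fin n) u) = 0 := by
    rcases mul_eq_zero.mp e2.symm with h | h
    · exact absurd h hs0
    · exact h
  have hW0 : Multiplicative.toAdd (expSum (⟨1, h1n⟩ : Fin n) w) = 0 := by
    rw [e3, hα1, mul_zero]
  have hβ0 : Multiplicative.toAdd (expSum (⟨1, h1n⟩ : Fin n) v) ≠ 0 := by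
    intro h
    rw [h, mul_zero] at e4
    exact one_ne_zero e4
  rw [hW0] at e5
  rcases mul_eq_zero.mp e5.symm with h | h
  · exact hq0 h
  · exact hβ0 h

end FreeCenter

section FGExt

lemma fg_of_normal_of_fg (N : Subgroup G) [N.Normal] (h1 : Group.FG N)
    (h2 : Group.FG (G ⧸ N)) : Group.FG G := by
  obtain ⟨S1, hS1cl, hS1fin⟩ := Group.fg_iff.mp h1
  obtain ⟨S2, hS2cl, hS2fin⟩ := Group.fg_iff.mp h2
  set T1 : Set G := Subtype.val '' S1 with hT1
  set T2 : Set G := Quotient.out '' S2 with hT2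
  rw [Group.fg_iff]
  refine ⟨T1 ∪ T2, ?_, (hS1fin.image _).union (hS2fin.image _)⟩
  set KK := Subgroup.closure (T1 ∪ T2) with hKK
  have hNle : N ≤ KK := by
    intro x hx
    have hx1 : (⟨x, hx⟩ : N) ∈ Subgroup.closure S1 := by rw [hS1cl]; trivial
    have hx2 : x ∈ Subgroup.map N.subtype (Subgroup.closure S1) :=
      ⟨⟨x, hx⟩, hx1, rfl⟩
    rw [MonoidHom.map_closure] at hx2
    exact Subgroup.closure_mono Set.subset_union_left hx2
  have key : ∀ q : G ⧸ N, q ∈ Subgroup.closure S2 →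
      ∀ x : G, QuotientGroup.mk x = q → x ∈ KK := by
    intro q hq
    induction hq using Subgroup.closure_induction with
    | mem y hy =>
      intro x hx
      have hmemN : (Quotient.out y)⁻¹ * x ∈ N :=
        QuotientGroup.eq.mp ((QuotientGroup.out_eq' y).trans hx.symm)
      have hout : Quotient.out y ∈ KK :=
        Subgroup.subset_closure (Or.inr ⟨y, hy, rfl⟩)
      have hxeq : x = Quotient.out y * ((Quotient.out y)⁻¹ * x) := by group
      rw [hxeq]
      exact mul_mem hout (hNle hmemN)
    | one =>
      intro x hx
      exact hNle ((QuotientGroup.eq_one_iff x).mp hx)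
    | mul q1 q2 _ _ ih1 ih2 =>
      intro x hx
      have h1' : (QuotientGroup.mk (Quotient.out q1) : G ⧸ N) = q1 :=
        QuotientGroup.out_eq' q1
      have h2' : (QuotientGroup.mk ((Quotient.out q1)⁻¹ * x) : G ⧸ N) = q2 := by
        have : (QuotientGroup.mk ((Quotient.out q1)⁻¹ * x) : G ⧸ N)
            = (QuotientGroup.mk (Quotient.out q1) : G ⧸ N)⁻¹ * QuotientGroup.mk x := by
          rw [QuotientGroup.mk_mul, QuotientGroup.mk_inv]
        rw [this, h1', hx]
        group
      have hxeq : x = Quotient.out q1 * ((Quotient.out q1)⁻¹ * x) := by group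
      rw [hxeq]
      exact mul_mem (ih1 _ h1') (ih2 _ h2')
    | inv q1 _ ih =>
      intro x hx
      have : (QuotientGroup.mk x⁻¹ : G ⧸ N) = q1 := by
        rw [QuotientGroup.mk_inv, hx, inv_inv]
      have hxinv : x⁻¹ ∈ KK := ih x⁻¹ this
      have hxeq : x = (x⁻¹)⁻¹ := by group
      rw [hxeq]
      exact inv_mem hxinv
  refine (Subgroup.eq_top_iff' _).mpr fun g => ?_
  have hq : (QuotientGroup.mk g : G ⧸ N) ∈ Subgroup.closure S2 := by
    rw [hS2cl]; trivial
  exact key _ hq g rfl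

lemma freeGroup_fin_fg (n : ℕ) : Group.FG (FreeGroup (Fin n)) :=
  Group.fg_iff.mpr ⟨Set.range FreeGroup.of, FreeGroup.closure_range_of _, Set.finite_range _⟩

end FGExt

section ClassCLemmas

lemma classC_center_finite (hC : ClassC G) : Finite (Subgroup.center G) := by
  rcases hC with ⟨n, π, hn, hsurj, hker⟩ | ⟨F, n, hnorm, hn, ⟨e⟩, hquot⟩
  · haveI := hker
    have hcent : ∀ z ∈ Subgroup.center G, z ∈ π.ker := by
      intro z hz
      rw [MonoidHom.mem_ker]
      apply freeGroup_center_eq_bot hn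
      rw [Subgroup.mem_center_iff]
      intro y
      obtain ⟨x, rfl⟩ := hsurj y
      rw [← map_mul, ← map_mul, Subgroup.mem_center_iff.mp hz x]
    refine Finite.of_injective
      (fun z : Subgroup.center G => (⟨z.1, hcent z.1 z.2⟩ : π.ker)) ?_
    intro v w hvw
    dsimp only at hvw
    exact Subtype.ext (congrArg (fun z : ↥π.ker => (z : G)) hvw)
  · haveI := hnorm
    haveI := hquot
    have hinj : ∀ z ∈ Subgroup.center G, z ∈ F → z = 1 := by
      intro z hz hzF
      have hcent' : (⟨z, hzF⟩ : F) ∈ Subgroup.center F := by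
        rw [Subgroup.mem_center_iff]
        intro y
        exact Subtype.ext (Subgroup.mem_center_iff.mp hz y.1)
      have hce : e ⟨z, hzF⟩ ∈ Subgroup.center (FreeGroup (Fin n)) := by
        rw [Subgroup.mem_center_iff]
        intro y
        rw [← e.apply_symm_apply y, ← map_mul, ← map_mul]
        exact congrArg e (Subgroup.mem_center_iff.mp hcent' (e.symm y))
      have h1 := freeGroup_center_eq_bot hn hce
      have h2 : (⟨z, hzF⟩ : F) = 1 := by
        apply e.injective
        rw [h1, map_one]
      exact congrArg (fun z : ↥F => (z : G)) h2
    refine Finite.of_injective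
      (fun z : Subgroup.center G => (QuotientGroup.mk z.1 : G ⧸ F)) ?_
    intro v w hvw
    dsimp only at hvw
    have hmem : (v.1)⁻¹ * w.1 ∈ F := QuotientGroup.eq.mp hvw
    have hz : (v.1)⁻¹ * w.1 ∈ Subgroup.center G :=
      mul_mem (inv_mem v.2) w.2
    have := hinj _ hz hmem
    have hvw' : v.1 = w.1 := by
      have h3 := congrArg (fun y => v.1 * y) this
      rw [mul_one] at h3
      rw [← h3]
      group
    exact Subtype.ext hvw'

lemma classC_fg (hC : ClassC G) : Group.FG G := by
  rcases hC with ⟨n, π, hn, hsurj, hker⟩ | ⟨F, n, hnorm, hn, ⟨e⟩, hquot⟩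
  · haveI := hker
    refine fg_of_normal_of_fg π.ker ?_ ?_
    · exact Group.fg_of_finite
    · haveI := freeGroup_fin_fg n
      exact Group.fg_of_surjective
        (f := (QuotientGroup.quotientKerEquivOfSurjective π hsurj).symm.toMonoidHom)
        (QuotientGroup.quotientKerEquivOfSurjective π hsurj).symm.surjective
  · haveI := hnorm
    haveI := hquot
    refine fg_of_normal_of_fg F ?_ ?_
    · haveI := freeGroup_fin_fg n
      exact Group.fg_of_surjective (f := e.symm.toMonoidHom) e.symm.surjective
    · exact Group.fg_of_finite

end ClassCLemmas

end Stmt12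

/-- if `G ∈ 𝒞` and `H` is finite and they act compatibly on each other,
then `G ⊗ H` is finite. -/
theorem tensor_finite_of_classC {G H : Type u} [Group G] [Group H] [Finite H]
    (hC : ClassC G) (c : CompatibleActions G H) :
    Finite (NATensor c) := by
  haveI hZ : Finite (Subgroup.center G) := Stmt12.classC_center_finite hC
  have hFG : Group.FG G := Stmt12.classC_fg hC
  haveI hN : Finite (Stmt12.NSub c) := Stmt12.finite_NSub c hZ
  haveI hAb : Finite (Abelianization (NATensor c)) :=
    Stmt12.finite_abelianization c hN hFG
  haveI hq : Finite (NATensor c ⧸ Subgroup.center (NATensor c)) :=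
    Stmt12.finite_quot_center c hZ
  haveI hcs : Finite (commutatorSet (NATensor c)) :=
    Stmt12.finite_commutatorSet_of_finite_quot_center hq
  haveI hcomm : Finite (_root_.commutator (NATensor c)) := inferInstance
  haveI hquot : Finite (NATensor c ⧸ _root_.commutator (NATensor c)) := hAb
  exact Finite.of_equiv _
    (Subgroup.groupEquivQuotientProdSubgroup (s := _root_.commutator (NATensor c))).symm
end

section
/- Let G be a finitely generated group and H a finite group acting compatibly on each other with the action of H on G trivial. Then G ⊗ H is finite. -/
universe u

variable {G H : Type u} [Group G] [Group H]

section AuxNATensor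

variable {G H : Type u} [Group G] [Group H]

private lemma natensor_mk_rel_one (c : CompatibleActions G H) {r : FreeGroup (G × H)}
    (hr : r ∈ tensorRels c) : PresentedGroup.mk (tensorRels c) r = 1 := by
  apply (QuotientGroup.eq_one_iff _).mpr
  exact Subgroup.subset_normalClosure hr

private lemma tmul_rel1 (c : CompatibleActions G H) (g g' : G) (h : H) :
    tmul c (g * g') h = tmul c (g * g' * g⁻¹) (c.actG g h) * tmul c g h := by
  have h1 := natensor_mk_rel_one c (Or.inl ⟨g, g', h, rfl⟩)
  rw [map_mul, map_inv, map_mul, mul_inv_eq_one] at h1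
  exact h1

private lemma tmul_rel2 (c : CompatibleActions G H) (g : G) (h h' : H) :
    tmul c g (h * h') = tmul c g h * tmul c (c.actH h g) (h * h' * h⁻¹) := by
  have h1 := natensor_mk_rel_one c (Or.inr ⟨g, h, h', rfl⟩)
  rw [map_mul, map_inv, map_mul, mul_inv_eq_one] at h1
  exact h1

private lemma tmul_one_right (c : CompatibleActions G H) (g : G) : tmul c g 1 = 1 := by
  have := tmul_rel2 c g 1 1
  simp only [mul_one, map_one, MonoidHom.one_apply, MulAut.one_apply, one_mul,
    inv_one] at this
  exact left_eq_mul.mp this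

private lemma tmul_one_left (c : CompatibleActions G H) (h : H) : tmul c 1 h = 1 := by
  have := tmul_rel1 c 1 1 h
  simp only [mul_one, one_mul, inv_one, map_one, MonoidHom.one_apply, MulAut.one_apply] at this
  exact left_eq_mul.mp this

/-- `(a*g) ⊗ h = (a ⊗ ᵍh)(g ⊗ h)`. -/
private lemma tmul_mul_left (c : CompatibleActions G H) (a g : G) (h : H) :
    tmul c (a * g) h = tmul c a (c.actG g h) * tmul c g h := by
  have := tmul_rel1 c g (g⁻¹ * a * g) h
  have e1 : g * (g⁻¹ * a * g) = a * g := by group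
  have e2 : a * g * g⁻¹ = a := by group
  rwa [e1, e2] at this

private lemma tmul_inv_left (c : CompatibleActions G H) (g : G) (h : H) :
    tmul c g⁻¹ h = (tmul c g (c.actG g⁻¹ h))⁻¹ := by
  have key := tmul_mul_left c g⁻¹ g (c.actG g⁻¹ h)
  have e : c.actG g (c.actG g⁻¹ h) = h := by
    rw [← MulAut.mul_apply, ← map_mul, mul_inv_cancel, map_one, MulAut.one_apply]
  rw [inv_mul_cancel, tmul_one_left, e] at key
  exact eq_inv_of_mul_eq_one_left key.symm

end AuxNATensor


section AuxNATensor2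

variable {G H : Type u} [Group G] [Group H] (c : CompatibleActions G H)
  (htriv : ∀ (h : H) (g : G), c.actH h g = g)

include htriv

private lemma tmul_rel2' (g : G) (h h' : H) :
    tmul c g (h * h') = tmul c g h * tmul c g (h * h' * h⁻¹) := by
  have := tmul_rel2 c g h h'
  rwa [htriv] at this

private lemma tmul_commute_aux (g g' : G) (h h' : H) :
    tmul c g h * tmul c (g * g' * g⁻¹) (c.actG g (h * h' * h⁻¹)) =
      tmul c (g * g' * g⁻¹) (c.actG g (h * h' * h⁻¹)) * tmul c g h := by
  have hG2 : c.actG g (h * h') = c.actG g h * c.actG g h' := map_mul _ _ _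
  have hG3 : c.actG g h * c.actG g h' * (c.actG g h)⁻¹ = c.actG g (h * h' * h⁻¹) := by
    rw [map_mul, map_mul, map_inv]
  have e1 : tmul c (g * g') (h * h') =
      tmul c (g * g' * g⁻¹) (c.actG g h) * tmul c (g * g' * g⁻¹) (c.actG g (h * h' * h⁻¹)) *
        (tmul c g h * tmul c g (h * h' * h⁻¹)) := by
    rw [tmul_rel1, tmul_rel2' c htriv g h h', hG2, tmul_rel2' c htriv (g * g' * g⁻¹), hG3]
  have e2 : tmul c (g * g') (h * h') =
      tmul c (g * g' * g⁻¹) (c.actG g h) * tmul c g h *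
        (tmul c (g * g' * g⁻¹) (c.actG g (h * h' * h⁻¹)) * tmul c g (h * h' * h⁻¹)) := by
    rw [tmul_rel2' c htriv (g * g') h h', tmul_rel1 c g g' h, tmul_rel1 c g g' (h * h' * h⁻¹)]
  have e3 := e1.symm.trans e2
  simp only [mul_assoc] at e3
  have e4 := mul_left_cancel e3
  simp only [← mul_assoc] at e4
  have e5 := mul_right_cancel e4
  exact e5.symm

private lemma tmul_comm_gen (g a : G) (h b : H) :
    tmul c g h * tmul c a b = tmul c a b * tmul c g h := by
  have e1 : g * (g⁻¹ * a * g) * g⁻¹ = a := by group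
  have e2 : c.actG g (h * (h⁻¹ * c.actG g⁻¹ b * h) * h⁻¹) = b := by
    have e : h * (h⁻¹ * c.actG g⁻¹ b * h) * h⁻¹ = c.actG g⁻¹ b := by group
    rw [e, ← MulAut.mul_apply, ← map_mul, mul_inv_cancel, map_one, MulAut.one_apply]
  have := tmul_commute_aux c htriv g (g⁻¹ * a * g) h (h⁻¹ * c.actG g⁻¹ b * h)
  rwa [e1, e2] at this

private lemma natensor_mul_comm : ∀ x y : NATensor c, x * y = y * x := by
  have hgen : ∀ p : G × H, ∀ y : NATensor c,
      tmul c p.1 p.2 * y = y * tmul c p.1 p.2 := by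
    intro p y
    have hy : y ∈ Subgroup.centralizer {tmul c p.1 p.2} := by
      refine PresentedGroup.generated_by (tensorRels c) _ ?_ y
      intro j
      apply Subgroup.mem_centralizer_iff.mpr
      rintro z rfl
      exact tmul_comm_gen c htriv p.1 j.1 p.2 j.2
    exact Subgroup.mem_centralizer_iff.mp hy _ rfl
  intro x y
  have hx : x ∈ Subgroup.center (NATensor c) := by
    refine PresentedGroup.generated_by (tensorRels c) _ ?_ x
    intro j
    exact Subgroup.mem_center_iff.mpr fun b => (hgen j b).symm
  exact (Subgroup.mem_center_iff.mp hx y).symm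

private lemma tmul_pow (g : G) (h : H) (n : ℕ) :
    tmul c g (h ^ n) = tmul c g h ^ n := by
  induction n with
  | zero => simpa using tmul_one_right c g
  | succ n ih =>
    have e : h * h ^ n * h⁻¹ = h ^ n := by
      rw [← pow_succ', pow_succ, mul_inv_cancel_right]
    rw [pow_succ', tmul_rel2' c htriv, e, ih, pow_succ']

end AuxNATensor2

/-- if `G` is finitely generated, `H` is finite, the actions are compatible
and `H` acts trivially on `G`, then `G ⊗ H` is finite. -/
theorem tensor_finite_of_fg_trivial_action {G H : Type u} [Group G] [Group H] [Finite H]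
    (hG : Group.FG G) (c : CompatibleActions G H)
    (htriv : ∀ (h : H) (g : G), c.actH h g = g) :
    Finite (NATensor c) := by
  classical
  obtain ⟨S, hS, hSfin⟩ := Group.fg_iff.mp hG
  set T : Set (NATensor c) := (fun p : G × H => tmul c p.1 p.2) '' (S ×ˢ (Set.univ : Set H))
    with hTdef
  have hTfin : T.Finite := (hSfin.prod Set.finite_univ).image _
  have hmem : ∀ g : G, ∀ h : H, tmul c g h ∈ Subgroup.closure T := by
    intro g
    have hg : g ∈ Subgroup.closure S := hS ▸ Subgroup.mem_top g
    refine Subgroup.closure_induction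
      (p := fun x _ => ∀ h : H, tmul c x h ∈ Subgroup.closure T) ?_ ?_ ?_ ?_ hg
    · intro x hx h
      exact Subgroup.subset_closure ⟨(x, h), ⟨hx, trivial⟩, rfl⟩
    · intro h
      rw [tmul_one_left]
      exact one_mem _
    · intro x y _ _ px py h
      rw [tmul_mul_left]
      exact mul_mem (px _) (py _)
    · intro x _ px h
      rw [tmul_inv_left]
      exact inv_mem (px _)
  have hT : ∀ x : NATensor c, x ∈ Subgroup.closure T := fun x =>
    PresentedGroup.generated_by (tensorRels c) _ (fun j => hmem j.1 j.2) x
  letI : CommGroup (NATensor c) :=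
    { (inferInstance : Group (NATensor c)) with
      mul_comm := natensor_mul_comm c htriv }
  haveI : Group.FG (NATensor c) :=
    Group.fg_iff.mpr ⟨T, eq_top_iff.mpr fun x _ => hT x, hTfin⟩
  have htor : Monoid.IsTorsion (NATensor c) := by
    intro x
    refine isOfFinOrder_iff_pow_eq_one.mpr ⟨Nat.card H, Nat.card_pos, ?_⟩
    have hker : Subgroup.closure T ≤
        (powMonoidHom (Nat.card H) : NATensor c →* NATensor c).ker := by
      rw [Subgroup.closure_le]
      rintro z ⟨⟨g, h⟩, _, rfl⟩
      simp only [SetLike.mem_coe, MonoidHom.mem_ker, powMonoidHom_apply]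
      rw [← tmul_pow c htriv, pow_card_eq_one', tmul_one_right]
    have hx := hker (hT x)
    simpa only [MonoidHom.mem_ker, powMonoidHom_apply] using hx
  exact CommGroup.finite_of_fg_torsion _ htor
end

section
/- Let G and H be finitely generated groups acting compatibly on each other. Then G ⊗ H is finitely generated if and only if both derivative subgroups D_G(H) and D_H(G) are finitely generated. -/
universe u

variable {G H : Type u} [Group G] [Group H]

namespace NT

variable (c : CompatibleActions G H)

/-! ### Basic facts about compatible actions -/

lemma actG_actG (g g' : G) (h : H) :
    c.actG g (c.actG g' h) = c.actG (g * g') h := by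
  rw [map_mul]; rfl

lemma actH_actH (h h' : H) (g : G) :
    c.actH h (c.actH h' g) = c.actH (h * h') g := by
  rw [map_mul]; rfl

lemma cl' (g a : G) (h : H) :
    c.actH (c.actG g h) (g * a * g⁻¹) = g * c.actH h a * g⁻¹ := by
  have e : g⁻¹ * (g * a * g⁻¹) * g = a := by group
  rw [c.compat_left g (g * a * g⁻¹) h, e]

lemma cr' (g : G) (h b : H) :
    c.actG (c.actH h g) (h * b * h⁻¹) = h * c.actG g b * h⁻¹ := by
  have e : h⁻¹ * (h * b * h⁻¹) * h = b := by group
  rw [c.compat_right g h (h * b * h⁻¹), e]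

/-! ### The defining relations, in the tensor product -/

lemma tmul_def (g : G) (h : H) :
    tmul c g h = PresentedGroup.mk (tensorRels c) (FreeGroup.of (g, h)) := rfl

lemma rel_one {r : FreeGroup (G × H)} (hr : r ∈ tensorRels c) :
    PresentedGroup.mk (tensorRels c) r = 1 := by
  have hmem : r ∈ Subgroup.normalClosure (tensorRels c) :=
    Subgroup.subset_normalClosure hr
  exact (QuotientGroup.eq_one_iff r).mpr hmem

lemma rel1 (g g' : G) (h : H) :
    tmul c (g * g') h = tmul c (g * g' * g⁻¹) (c.actG g h) * tmul c g h := by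
  have h1 := rel_one c (Set.mem_union_left _ ⟨g, g', h, rfl⟩)
  rw [map_mul, map_inv, map_mul] at h1
  rw [tmul_def, tmul_def, tmul_def]
  exact mul_inv_eq_one.mp h1

lemma rel2 (g : G) (h h' : H) :
    tmul c g (h * h') = tmul c g h * tmul c (c.actH h g) (h * h' * h⁻¹) := by
  have h1 := rel_one c (Set.mem_union_right _ ⟨g, h, h', rfl⟩)
  rw [map_mul, map_inv, map_mul] at h1
  rw [tmul_def, tmul_def, tmul_def]
  exact mul_inv_eq_one.mp h1

/-! ### Lifting maps out of the tensor product -/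

/-- Universal property of the tensor product. -/
def lift {K : Type*} [Group K] (f : G → H → K)
    (h1 : ∀ g g' h, f (g * g') h = f (g * g' * g⁻¹) (c.actG g h) * f g h)
    (h2 : ∀ g h h', f g (h * h') = f g h * f (c.actH h g) (h * h' * h⁻¹)) :
    NATensor c →* K :=
  PresentedGroup.toGroup (f := fun p => f p.1 p.2) <| by
    rintro r (⟨g, g', h, rfl⟩ | ⟨g, h, h', rfl⟩) <;>
      simp only [map_mul, map_inv, FreeGroup.lift_apply_of] <;>
      rw [mul_inv_eq_one]
    · exact h1 g g' h
    · exact h2 g h h'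

lemma lift_tmul {K : Type*} [Group K] (f : G → H → K) (h1 h2) (g : G) (h : H) :
    lift c f h1 h2 (tmul c g h) = f g h :=
  PresentedGroup.toGroup.of _

lemma hom_ext {K : Type*} [Group K] {φ ψ : NATensor c →* K}
    (hh : ∀ g h, φ (tmul c g h) = ψ (tmul c g h)) : φ = ψ :=
  PresentedGroup.ext fun x => hh x.1 x.2

/-! ### The homomorphisms `lam : T → G` and `mu : T → H` -/

/-- `g ⊗ h ↦ g ⬝ (ʰg)⁻¹`. -/
def lam : NATensor c →* G :=
  lift c (fun g h => g * (c.actH h g)⁻¹)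
    (by
      intro g g' h
      rw [cl' c g g' h, map_mul]
      group)
    (by
      intro g h h'
      have e1 : c.actH (h * h' * h⁻¹) (c.actH h g) = c.actH (h * h') g := by
        rw [actH_actH]
        congr 1
        group
      rw [e1]
      group)

/-- `g ⊗ h ↦ (ᵍh) ⬝ h⁻¹`. -/
def mu : NATensor c →* H :=
  lift c (fun g h => c.actG g h * h⁻¹)
    (by
      intro g g' h
      have e1 : c.actG (g * g' * g⁻¹) (c.actG g h) = c.actG (g * g') h := by
        rw [actG_actG]
        congr 1
        group
      rw [e1]
      group)
    (by
      intro g h h'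
      rw [cr' c g h h', map_mul]
      group)

lemma lam_tmul (g : G) (h : H) : lam c (tmul c g h) = g * (c.actH h g)⁻¹ :=
  lift_tmul c _ _ _ g h

lemma mu_tmul (g : G) (h : H) : mu c (tmul c g h) = c.actG g h * h⁻¹ :=
  lift_tmul c _ _ _ g h

/-! ### The actions `Dg : G → End T` and `Dh : H → End T` -/

/-- The action of `g : G` on the tensor product: `a ⊗ b ↦ (g a g⁻¹) ⊗ (ᵍ b)`. -/
def Dg (g : G) : NATensor c →* NATensor c :=
  lift c (fun a b => tmul c (g * a * g⁻¹) (c.actG g b))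
    (by
      intro a a' b
      have e1 : g * (a * a') * g⁻¹ = g * a * g⁻¹ * (g * a' * g⁻¹) := by group
      have e2 : g * (a * a' * a⁻¹) * g⁻¹ =
          g * a * g⁻¹ * (g * a' * g⁻¹) * (g * a * g⁻¹)⁻¹ := by group
      have e3 : c.actG (g * a * g⁻¹) (c.actG g b) = c.actG g (c.actG a b) := by
        rw [actG_actG, actG_actG]
        congr 1
        group
      rw [e1, e2, ← e3]
      exact rel1 c (g * a * g⁻¹) (g * a' * g⁻¹) (c.actG g b))
    (by
      intro a b b'
      have e1 : c.actG g (b * b') = c.actG g b * c.actG g b' := map_mul _ _ _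
      have e2 : c.actH (c.actG g b) (g * a * g⁻¹) = g * c.actH b a * g⁻¹ :=
        cl' c g a b
      have e3 : c.actG g b * c.actG g b' * (c.actG g b)⁻¹ =
          c.actG g (b * b' * b⁻¹) := by
        rw [map_mul, map_mul, map_inv]
      rw [e1, rel2 c (g * a * g⁻¹) (c.actG g b) (c.actG g b'), e2, e3])

/-- The action of `h : H` on the tensor product: `a ⊗ b ↦ (ʰ a) ⊗ (h b h⁻¹)`. -/
def Dh (h : H) : NATensor c →* NATensor c :=
  lift c (fun a b => tmul c (c.actH h a) (h * b * h⁻¹))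
    (by
      intro a a' b
      have e1 : c.actH h (a * a') = c.actH h a * c.actH h a' := map_mul _ _ _
      have e2 : c.actH h (a * a' * a⁻¹) =
          c.actH h a * c.actH h a' * (c.actH h a)⁻¹ := by
        rw [map_mul, map_mul, map_inv]
      have e3 : c.actG (c.actH h a) (h * b * h⁻¹) = h * c.actG a b * h⁻¹ :=
        cr' c a h b
      rw [e1, e2, rel1 c (c.actH h a) (c.actH h a') (h * b * h⁻¹), e3])
    (by
      intro a b b'
      have e1 : h * (b * b') * h⁻¹ = h * b * h⁻¹ * (h * b' * h⁻¹) := by group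
      have e2 : c.actH (h * b * h⁻¹) (c.actH h a) = c.actH h (c.actH b a) := by
        rw [actH_actH, actH_actH]
        congr 1
        group
      have e3 : h * b * h⁻¹ * (h * b' * h⁻¹) * (h * b * h⁻¹)⁻¹ =
          h * (b * b' * b⁻¹) * h⁻¹ := by group
      rw [e1, rel2 c (c.actH h a) (h * b * h⁻¹) (h * b' * h⁻¹), e2, e3])

lemma Dg_tmul (g a : G) (b : H) :
    Dg c g (tmul c a b) = tmul c (g * a * g⁻¹) (c.actG g b) :=
  lift_tmul c _ _ _ a b

lemma Dh_tmul (h : H) (a : G) (b : H) :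
    Dh c h (tmul c a b) = tmul c (c.actH h a) (h * b * h⁻¹) :=
  lift_tmul c _ _ _ a b

lemma Dg_mul (g₁ g₂ : G) : Dg c (g₁ * g₂) = (Dg c g₁).comp (Dg c g₂) := by
  apply hom_ext
  intro a b
  simp only [MonoidHom.comp_apply, Dg_tmul]
  congr 1
  · group
  · rw [actG_actG]

lemma Dg_mul_apply (g₁ g₂ : G) (t : NATensor c) :
    Dg c (g₁ * g₂) t = Dg c g₁ (Dg c g₂ t) := by
  rw [Dg_mul]; rfl

lemma Dg_one : Dg c 1 = MonoidHom.id (NATensor c) := by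
  apply hom_ext
  intro a b
  simp only [MonoidHom.id_apply, Dg_tmul, one_mul, inv_one, mul_one, map_one,
    MulAut.one_apply]

lemma Dg_one_apply (t : NATensor c) : Dg c 1 t = t := by
  rw [Dg_one]; rfl

lemma Dg_inv_cancel (g : G) (t : NATensor c) : Dg c g (Dg c g⁻¹ t) = t := by
  rw [← Dg_mul_apply, mul_inv_cancel, Dg_one_apply]

lemma Dg_inv_cancel' (g : G) (t : NATensor c) : Dg c g⁻¹ (Dg c g t) = t := by
  rw [← Dg_mul_apply, inv_mul_cancel, Dg_one_apply]

lemma Dh_mul (h₁ h₂ : H) : Dh c (h₁ * h₂) = (Dh c h₁).comp (Dh c h₂) := by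
  apply hom_ext
  intro a b
  simp only [MonoidHom.comp_apply, Dh_tmul]
  congr 1
  · rw [actH_actH]
  · group

lemma Dh_mul_apply (h₁ h₂ : H) (t : NATensor c) :
    Dh c (h₁ * h₂) t = Dh c h₁ (Dh c h₂ t) := by
  rw [Dh_mul]; rfl

lemma Dh_one : Dh c 1 = MonoidHom.id (NATensor c) := by
  apply hom_ext
  intro a b
  simp only [MonoidHom.id_apply, Dh_tmul, one_mul, inv_one, mul_one, map_one,
    MulAut.one_apply]

lemma Dh_one_apply (t : NATensor c) : Dh c 1 t = t := by
  rw [Dh_one]; rfl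

lemma Dh_inv_cancel (h : H) (t : NATensor c) : Dh c h (Dh c h⁻¹ t) = t := by
  rw [← Dh_mul_apply, mul_inv_cancel, Dh_one_apply]

lemma Dh_inv_cancel' (h : H) (t : NATensor c) : Dh c h⁻¹ (Dh c h t) = t := by
  rw [← Dh_mul_apply, inv_mul_cancel, Dh_one_apply]

/-! ### Expansion identities -/

lemma E1 (g a : G) (b : H) :
    tmul c (g * a) b = Dg c g (tmul c a b) * tmul c g b := by
  rw [Dg_tmul]
  exact rel1 c g a b

lemma E2 (g : G) (h b : H) :
    tmul c g (h * b) = tmul c g h * Dh c h (tmul c g b) := by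
  rw [Dh_tmul]
  exact rel2 c g h b

lemma tmul_one_left (h : H) : tmul c 1 h = 1 := by
  have h1 := rel1 c 1 1 h
  simp only [one_mul, mul_one, inv_one, map_one, MulAut.one_apply] at h1
  exact (left_eq_mul.mp h1)

lemma tmul_one_right (g : G) : tmul c g 1 = 1 := by
  have h1 := rel2 c g 1 1
  simp only [one_mul, mul_one, inv_one, map_one, MulAut.one_apply] at h1
  exact (left_eq_mul.mp h1)

/-! ### Commutation of the two actions (`star` identity) -/

lemma compat1 (g : G) (h : H) :
    (Dh c h).comp (Dg c g) = (Dg c (c.actH h g)).comp (Dh c h) := by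
  apply hom_ext
  intro a b
  simp only [MonoidHom.comp_apply, Dg_tmul, Dh_tmul]
  congr 1
  · rw [map_mul, map_mul, map_inv]
  · exact (cr' c g h b).symm

lemma compat1_apply (g : G) (h : H) (t : NATensor c) :
    Dh c h (Dg c g t) = Dg c (c.actH h g) (Dh c h t) := by
  have := congrArg (fun φ => φ t) (compat1 c g h)
  simpa using this

lemma compat2 (g : G) (h : H) :
    (Dg c g).comp (Dh c h) = (Dh c (c.actG g h)).comp (Dg c g) := by
  apply hom_ext
  intro a b
  simp only [MonoidHom.comp_apply, Dg_tmul, Dh_tmul]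
  congr 1
  · exact (cl' c g a h).symm
  · rw [map_mul, map_mul, map_inv]

lemma compat2_apply (g : G) (h : H) (t : NATensor c) :
    Dg c g (Dh c h t) = Dh c (c.actG g h) (Dg c g t) := by
  have := congrArg (fun φ => φ t) (compat2 c g h)
  simpa using this

lemma star_apply (g : G) (h : H) (t : NATensor c) :
    Dg c g (Dh c h t) = tmul c g h * Dh c h (Dg c g t) * (tmul c g h)⁻¹ := by
  have main : ∀ a b, Dg c g (Dh c h (tmul c a b)) =
      tmul c g h * Dh c h (Dg c g (tmul c a b)) * (tmul c g h)⁻¹ := by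
    intro a b
    have exp1 := E1 c g a (h * b)
    rw [E2 c a h b, map_mul, E2 c g h b] at exp1
    have exp2 := E2 c (g * a) h b
    rw [E1 c g a h, E1 c g a b, map_mul] at exp2
    -- exp1 : tmul (g*a) (h*b) = Dg g (a⊗h) * Dg g (Dh h (a⊗b)) * (tmul g h * Dh h (g⊗b))
    -- exp2 : tmul (g*a) (h*b) = Dg g (a⊗h) * tmul g h * (Dh h (Dg g (a⊗b)) * Dh h (g⊗b))
    have h1 := exp1.symm.trans exp2
    set A := Dg c g (tmul c a h)
    set P := Dg c g (Dh c h (tmul c a b))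
    set Q := tmul c g h
    set R := Dh c h (tmul c g b)
    set S := Dh c h (Dg c g (tmul c a b))
    -- h1 : A * P * (Q * R) = A * Q * (S * R)
    have h2 : P * Q = Q * S := by
      have h3 : A * (P * Q * R) = A * (Q * S * R) := by
        calc A * (P * Q * R) = A * P * (Q * R) := by group
          _ = A * Q * (S * R) := h1
          _ = A * (Q * S * R) := by group
      have h4 := mul_left_cancel h3
      exact mul_right_cancel h4
    show P = Q * S * Q⁻¹
    rw [eq_mul_inv_iff_mul_eq]
    exact h2
  -- extend to all t by hom extensionality
  have hhom : ((Dg c g).comp (Dh c h)) =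
      ((MulAut.conj (tmul c g h)).toMonoidHom.comp ((Dh c h).comp (Dg c g))) := by
    apply hom_ext
    intro a b
    simpa [MulAut.conj_apply, mul_assoc] using main a b
  have := congrArg (fun φ => φ t) hhom
  simpa [MulAut.conj_apply, mul_assoc] using this

/-! ### The Peiffer identities -/

lemma closure_tmul :
    Subgroup.closure {x : NATensor c | ∃ g h, x = tmul c g h} = ⊤ := by
  rw [eq_top_iff]
  intro x _
  refine PresentedGroup.generated_by _ _ (fun j => ?_) x
  exact Subgroup.subset_closure ⟨j.1, j.2, rfl⟩

lemma mem_closure_tmul (t : NATensor c) :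
    t ∈ Subgroup.closure {x : NATensor c | ∃ g h, x = tmul c g h} := by
  rw [closure_tmul]
  exact Subgroup.mem_top t

lemma peiffer_lam_gen (a : G) (b : H) (s : NATensor c) :
    Dg c (lam c (tmul c a b)) s = tmul c a b * s * (tmul c a b)⁻¹ := by
  rw [lam_tmul]
  have e1 : (c.actH b a)⁻¹ = c.actH b a⁻¹ := (map_inv (c.actH b) a).symm
  calc Dg c (a * (c.actH b a)⁻¹) s
      = Dg c a (Dg c (c.actH b a⁻¹) (Dh c b (Dh c b⁻¹ s))) := by
        rw [Dh_inv_cancel, ← e1, ← Dg_mul_apply]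
    _ = Dg c a (Dh c b (Dg c a⁻¹ (Dh c b⁻¹ s))) := by rw [← compat1_apply c a⁻¹ b]
    _ = tmul c a b * Dh c b (Dg c a (Dg c a⁻¹ (Dh c b⁻¹ s))) * (tmul c a b)⁻¹ :=
        star_apply c a b _
    _ = tmul c a b * s * (tmul c a b)⁻¹ := by rw [Dg_inv_cancel, Dh_inv_cancel]

lemma peiffer_mu_gen (a : G) (b : H) (s : NATensor c) :
    Dh c (mu c (tmul c a b)) s = tmul c a b * s * (tmul c a b)⁻¹ := by
  rw [mu_tmul]
  calc Dh c (c.actG a b * b⁻¹) s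
      = Dh c (c.actG a b) (Dh c b⁻¹ s) := by rw [← Dh_mul_apply]
    _ = Dh c (c.actG a b) (Dg c a (Dg c a⁻¹ (Dh c b⁻¹ s))) := by rw [Dg_inv_cancel]
    _ = Dg c a (Dh c b (Dg c a⁻¹ (Dh c b⁻¹ s))) := by rw [compat2_apply c a b]
    _ = tmul c a b * Dh c b (Dg c a (Dg c a⁻¹ (Dh c b⁻¹ s))) * (tmul c a b)⁻¹ :=
        star_apply c a b _
    _ = tmul c a b * s * (tmul c a b)⁻¹ := by rw [Dg_inv_cancel, Dh_inv_cancel]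

lemma peiffer_lam (t s : NATensor c) :
    Dg c (lam c t) s = t * s * t⁻¹ := by
  revert s
  refine Subgroup.closure_induction
    (p := fun t _ => ∀ s, Dg c (lam c t) s = t * s * t⁻¹)
    ?_ ?_ ?_ ?_ (mem_closure_tmul c t)
  · rintro x ⟨g, h, rfl⟩ s
    exact peiffer_lam_gen c g h s
  · intro s
    rw [map_one (lam c), Dg_one_apply]
    group
  · intro x y _ _ px py s
    rw [map_mul (lam c) x y, Dg_mul_apply, px, py]
    group
  · intro x _ px s
    have h3 : Dg c (lam c x) (Dg c (lam c x)⁻¹ s) = s := Dg_inv_cancel c _ s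
    rw [px] at h3
    rw [map_inv (lam c) x, inv_inv]
    -- h3 : x * Dg (lam x)⁻¹ s * x⁻¹ = s
    calc Dg c (lam c x)⁻¹ s
        = x⁻¹ * (x * Dg c (lam c x)⁻¹ s * x⁻¹) * x := by group
      _ = x⁻¹ * s * x := by rw [h3]

lemma peiffer_mu (t s : NATensor c) :
    Dh c (mu c t) s = t * s * t⁻¹ := by
  revert s
  refine Subgroup.closure_induction
    (p := fun t _ => ∀ s, Dh c (mu c t) s = t * s * t⁻¹)
    ?_ ?_ ?_ ?_ (mem_closure_tmul c t)
  · rintro x ⟨g, h, rfl⟩ s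
    exact peiffer_mu_gen c g h s
  · intro s
    rw [map_one (mu c), Dh_one_apply]
    group
  · intro x y _ _ px py s
    rw [map_mul (mu c) x y, Dh_mul_apply, px, py]
    group
  · intro x _ px s
    have h3 : Dh c (mu c x) (Dh c (mu c x)⁻¹ s) = s := Dh_inv_cancel c _ s
    rw [px] at h3
    rw [map_inv (mu c) x, inv_inv]
    calc Dh c (mu c x)⁻¹ s
        = x⁻¹ * (x * Dh c (mu c x)⁻¹ s * x⁻¹) * x := by group
      _ = x⁻¹ * s * x := by rw [h3]

/-! ### Slot-inverse identities -/

lemma inv_slot1 (g : G) (h : H) :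
    tmul c g⁻¹ h = Dg c g⁻¹ ((tmul c g h)⁻¹) := by
  have h0 := E1 c g g⁻¹ h
  rw [mul_inv_cancel, tmul_one_left] at h0
  -- h0 : 1 = Dg g (g⁻¹ ⊗ h) * (g ⊗ h)
  have h1 : Dg c g (tmul c g⁻¹ h) = (tmul c g h)⁻¹ :=
    (inv_eq_of_mul_eq_one_left h0.symm).symm
  rw [← h1, Dg_inv_cancel']

lemma inv_slot2 (g : G) (h : H) :
    tmul c g h⁻¹ = Dh c h⁻¹ ((tmul c g h)⁻¹) := by
  have h0 := E2 c g h h⁻¹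
  rw [mul_inv_cancel, tmul_one_right] at h0
  have h1 : Dh c h (tmul c g h⁻¹) = (tmul c g h)⁻¹ :=
    (mul_eq_one_iff_inv_eq.mp h0.symm).symm
  rw [← h1, Dh_inv_cancel']

/-! ### The derivation identities I1 and I2 -/

lemma I1_gen (g a : G) (b : H) :
    Dg c g (tmul c a b) = tmul c g (mu c (tmul c a b)) * tmul c a b := by
  -- k1 : g ⊗ (ᵃb) = tmul (g*a) b * (a ⊗ b)⁻¹
  have t1 : Dg c a (tmul c (a⁻¹ * g * a) b) =
      tmul c (a * (a⁻¹ * g * a)) b * (tmul c a b)⁻¹ := by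
    rw [E1 c a (a⁻¹ * g * a) b]
    group
  have e1 : a * (a⁻¹ * g * a) * a⁻¹ = g := by group
  have e2 : a * (a⁻¹ * g * a) = g * a := by group
  rw [Dg_tmul, e1] at t1
  rw [e2] at t1
  -- t1 : tmul g (ᵃb) = tmul (g*a) b * (a ⊗ b)⁻¹
  have k1 : tmul c g (c.actG a b) =
      Dg c g (tmul c a b) * tmul c g b * (tmul c a b)⁻¹ := by
    rw [t1, E1 c g a b]
  -- expand tmul g (ᵃb * b⁻¹)
  have k2 : tmul c g (c.actG a b * b⁻¹) =
      tmul c g (c.actG a b) * Dh c (c.actG a b) (tmul c g b⁻¹) :=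
    E2 c g (c.actG a b) b⁻¹
  have k3 : Dh c (c.actG a b) (tmul c g b⁻¹) =
      tmul c a b * (tmul c g b)⁻¹ * (tmul c a b)⁻¹ := by
    rw [inv_slot2, ← Dh_mul_apply]
    have : Dh c (c.actG a b * b⁻¹) ((tmul c g b)⁻¹) =
        tmul c a b * (tmul c g b)⁻¹ * (tmul c a b)⁻¹ := by
      rw [← mu_tmul c a b, peiffer_mu]
    exact this
  rw [mu_tmul, k2, k3, k1]
  group

lemma I2_gen (a : G) (b h : H) :
    tmul c (lam c (tmul c a b)) h = tmul c a b * (Dh c h (tmul c a b))⁻¹ := by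
  -- j1 : (ᵇa) ⊗ h = (a⊗b)⁻¹ * (a⊗h) * Dh h (a⊗b)
  have j1 : tmul c (c.actH b a) h =
      (tmul c a b)⁻¹ * tmul c a h * Dh c h (tmul c a b) := by
    have e1 : b * (b⁻¹ * h * b) * b⁻¹ = h := by group
    have e2 : b * (b⁻¹ * h * b) = h * b := by group
    have t1 := E2 c a b (b⁻¹ * h * b)
    rw [Dh_tmul, e1] at t1
    rw [e2] at t1
    -- t1 : tmul a (h*b) = tmul a b * tmul (ᵇa) h
    rw [E2 c a h b] at t1
    -- t1 : tmul a h * Dh h (a⊗b) = tmul a b * tmul (ᵇa) h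
    calc tmul c (c.actH b a) h
        = (tmul c a b)⁻¹ * (tmul c a b * tmul c (c.actH b a) h) := by group
      _ = (tmul c a b)⁻¹ * (tmul c a h * Dh c h (tmul c a b)) := by rw [← t1]
      _ = (tmul c a b)⁻¹ * tmul c a h * Dh c h (tmul c a b) := by group
  have j2 : tmul c (c.actH b a)⁻¹ h =
      Dg c (c.actH b a)⁻¹ ((tmul c (c.actH b a) h)⁻¹) :=
    inv_slot1 c (c.actH b a) h
  have main : tmul c (a * (c.actH b a)⁻¹) h =
      tmul c a b * (Dh c h (tmul c a b))⁻¹ := by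
    rw [E1 c a (c.actH b a)⁻¹ h, j2, ← Dg_mul_apply]
    have hp : Dg c (a * (c.actH b a)⁻¹) ((tmul c (c.actH b a) h)⁻¹) =
        tmul c a b * (tmul c (c.actH b a) h)⁻¹ * (tmul c a b)⁻¹ := by
      rw [← lam_tmul c a b, peiffer_lam]
    rw [hp, j1]
    group
  rw [lam_tmul]
  exact main

lemma I1 (g : G) (t : NATensor c) :
    Dg c g t = tmul c g (mu c t) * t := by
  refine Subgroup.closure_induction
    (p := fun t _ => Dg c g t = tmul c g (mu c t) * t)
    ?_ ?_ ?_ ?_ (mem_closure_tmul c t)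
  · rintro x ⟨a, b, rfl⟩
    exact I1_gen c g a b
  · rw [map_one (Dg c g), map_one (mu c), tmul_one_right, mul_one]
  · intro x y _ _ px py
    rw [map_mul (Dg c g) x y, map_mul (mu c) x y, px, py,
      E2 c g (mu c x) (mu c y), peiffer_mu]
    group
  · intro x _ px
    rw [map_inv (Dg c g) x, map_inv (mu c) x, px, inv_slot2 c g (mu c x),
      ← map_inv (mu c) x, peiffer_mu]
    group

lemma I2 (h : H) (t : NATensor c) :
    tmul c (lam c t) h = t * (Dh c h t)⁻¹ := by
  refine Subgroup.closure_induction
    (p := fun t _ => tmul c (lam c t) h = t * (Dh c h t)⁻¹)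
    ?_ ?_ ?_ ?_ (mem_closure_tmul c t)
  · rintro x ⟨a, b, rfl⟩
    exact I2_gen c a b h
  · rw [map_one (lam c), map_one (Dh c h), tmul_one_left]
    group
  · intro x y _ _ px py
    rw [map_mul (lam c) x y, map_mul (Dh c h) x y,
      E1 c (lam c x) (lam c y) h, px, py, peiffer_lam]
    group
  · intro x _ px
    rw [map_inv (lam c) x, map_inv (Dh c h) x, inv_slot1 c (lam c x) h,
      ← map_inv (lam c) x, peiffer_lam, px]
    group

lemma I2' (h : H) (t : NATensor c) :
    Dh c h t = (tmul c (lam c t) h)⁻¹ * t := by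
  rw [I2]
  group

/-! ### Ranges of `lam` and `mu` -/

lemma range_lam : (lam c).range = derivSubgroupG c := by
  have h1 : (lam c).range =
      Subgroup.map (lam c)
        (Subgroup.closure {x : NATensor c | ∃ g h, x = tmul c g h}) := by
    rw [closure_tmul]
    exact MonoidHom.range_eq_map _
  rw [h1, MonoidHom.map_closure]
  show _ = Subgroup.closure _
  congr 1
  ext z
  simp only [Set.mem_image, Set.mem_setOf_eq]
  constructor
  · rintro ⟨x, ⟨g, h, rfl⟩, rfl⟩
    exact ⟨g, h, (lam_tmul c g h)⟩
  · rintro ⟨g, h, rfl⟩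
    exact ⟨tmul c g h, ⟨g, h, rfl⟩, lam_tmul c g h⟩

lemma range_mu : (mu c).range = derivSubgroupH c := by
  have h1 : (mu c).range =
      Subgroup.map (mu c)
        (Subgroup.closure {x : NATensor c | ∃ g h, x = tmul c g h}) := by
    rw [closure_tmul]
    exact MonoidHom.range_eq_map _
  rw [h1, MonoidHom.map_closure]
  show _ = Subgroup.closure _
  rw [← Subgroup.closure_inv {x : H | ∃ g h, x = h * (c.actG g h)⁻¹}]
  congr 1
  ext z
  simp only [Set.mem_image, Set.mem_setOf_eq, Set.mem_inv]
  constructor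
  · rintro ⟨x, ⟨g, h, rfl⟩, rfl⟩
    refine ⟨g, h, ?_⟩
    rw [mu_tmul]
    group
  · rintro ⟨g, h, hz⟩
    refine ⟨tmul c g h, ⟨g, h, rfl⟩, ?_⟩
    rw [mu_tmul]
    rw [show z = (h * (c.actG g h)⁻¹)⁻¹ from inv_injective (by rw [inv_inv, hz])]
    group

lemma lam_mem (t : NATensor c) : lam c t ∈ derivSubgroupG c := by
  rw [← range_lam]
  exact ⟨t, rfl⟩

lemma mu_mem (t : NATensor c) : mu c t ∈ derivSubgroupH c := by
  rw [← range_mu]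
  exact ⟨t, rfl⟩

end NT

/-- for finitely generated `G` and `H` acting compatibly on each other,
`G ⊗ H` is finitely generated iff `D_G(H)` and `D_H(G)` are finitely generated. -/
theorem tensor_fg_iff_derivs_fg {G H : Type u} [Group G] [Group H]
    (c : CompatibleActions G H) (hG : Group.FG G) (hH : Group.FG H) :
    Group.FG (NATensor c) ↔ (derivSubgroupH c).FG ∧ (derivSubgroupG c).FG := by
  constructor
  · intro hT
    haveI := hT
    constructor
    · rw [← NT.range_mu c]
      exact (Group.fg_iff_subgroup_fg _).mp (Group.fg_range (NT.mu c))
    · rw [← NT.range_lam c]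
      exact (Group.fg_iff_subgroup_fg _).mp (Group.fg_range (NT.lam c))
  · rintro ⟨hDH, hDG⟩
    obtain ⟨SE, hSE⟩ := hDH
    obtain ⟨SD, hSD⟩ := hDG
    obtain ⟨SG, hSG⟩ := hG.out
    obtain ⟨SH, hSH⟩ := hH.out
    -- choose preimages of elements of the derivative subgroups
    have exD : ∀ d : G, ∃ t : NATensor c, d ∈ derivSubgroupG c → NT.lam c t = d := by
      intro d
      by_cases hd : d ∈ derivSubgroupG c
      · rw [← NT.range_lam c] at hd
        obtain ⟨t, ht⟩ := hd
        exact ⟨t, fun _ => ht⟩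
      · exact ⟨1, fun h => absurd h hd⟩
    choose tD htD using exD
    have exE : ∀ e : H, ∃ s : NATensor c, e ∈ derivSubgroupH c → NT.mu c s = e := by
      intro e
      by_cases he : e ∈ derivSubgroupH c
      · rw [← NT.range_mu c] at he
        obtain ⟨s, hs⟩ := he
        exact ⟨s, fun _ => hs⟩
      · exact ⟨1, fun h => absurd h he⟩
    choose sE hsE using exE
    -- the finite generating set
    set F : Set (NATensor c) :=
      (Set.image2 (tmul c) ↑SG ↑SH ∪ (tD '' ↑SD ∪ sE '' ↑SE)) ∪
      (Set.image2 (tmul c) ↑SG ↑SE ∪ Set.image2 (tmul c) ↑SD ↑SH) with hF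
    have hFfin : F.Finite := by
      refine Set.Finite.union (Set.Finite.union ?_ (Set.Finite.union ?_ ?_))
        (Set.Finite.union ?_ ?_)
      · exact Set.Finite.image2 _ (SG.finite_toSet) (SH.finite_toSet)
      · exact Set.Finite.image _ (SD.finite_toSet)
      · exact Set.Finite.image _ (SE.finite_toSet)
      · exact Set.Finite.image2 _ (SG.finite_toSet) (SE.finite_toSet)
      · exact Set.Finite.image2 _ (SD.finite_toSet) (SH.finite_toSet)
    set M : Subgroup (NATensor c) := Subgroup.closure F with hM
    have hmem1 : ∀ x ∈ SG, ∀ y ∈ SH, tmul c x y ∈ M := fun x hx y hy =>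
      Subgroup.subset_closure (Or.inl (Or.inl (Set.mem_image2_of_mem hx hy)))
    have hmemtD : ∀ d ∈ SD, tD d ∈ M := fun d hd =>
      Subgroup.subset_closure (Or.inl (Or.inr (Or.inl ⟨d, hd, rfl⟩)))
    have hmemsE : ∀ e ∈ SE, sE e ∈ M := fun e he =>
      Subgroup.subset_closure (Or.inl (Or.inr (Or.inr ⟨e, he, rfl⟩)))
    have hmem4 : ∀ x ∈ SG, ∀ e ∈ SE, tmul c x e ∈ M := fun x hx e he =>
      Subgroup.subset_closure (Or.inr (Or.inl (Set.mem_image2_of_mem hx he)))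
    have hmem5 : ∀ d ∈ SD, ∀ y ∈ SH, tmul c d y ∈ M := fun d hd y hy =>
      Subgroup.subset_closure (Or.inr (Or.inr (Set.mem_image2_of_mem hd hy)))
    have hSDsub : ∀ d ∈ SD, d ∈ derivSubgroupG c := fun d hd => by
      rw [← hSD]; exact Subgroup.subset_closure hd
    have hSEsub : ∀ e ∈ SE, e ∈ derivSubgroupH c := fun e he => by
      rw [← hSE]; exact Subgroup.subset_closure he
    -- Step 1: for e in D_G(H): a preimage of e lies in M, and x ⊗ e ∈ M for x ∈ SG
    have step1 : ∀ e ∈ derivSubgroupH c,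
        (∃ s ∈ M, NT.mu c s = e) ∧ ∀ x ∈ SG, tmul c x e ∈ M := by
      intro e he
      rw [← hSE] at he
      refine Subgroup.closure_induction
        (p := fun e _ => (∃ s ∈ M, NT.mu c s = e) ∧ ∀ x ∈ SG, tmul c x e ∈ M)
        ?_ ?_ ?_ ?_ he
      · intro e' he'
        exact ⟨⟨sE e', hmemsE e' he', hsE e' (hSEsub e' he')⟩,
          fun x hx => hmem4 x hx e' he'⟩
      · refine ⟨⟨1, M.one_mem, map_one _⟩, fun x _ => ?_⟩
        rw [NT.tmul_one_right]
        exact M.one_mem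
      · rintro e₁ e₂ _ _ ⟨⟨s₁, hs₁M, hs₁⟩, hx₁⟩ ⟨⟨s₂, hs₂M, hs₂⟩, hx₂⟩
        refine ⟨⟨s₁ * s₂, M.mul_mem hs₁M hs₂M, by rw [map_mul, hs₁, hs₂]⟩, ?_⟩
        intro x hx
        have hDh : NT.Dh c e₁ (tmul c x e₂) = s₁ * tmul c x e₂ * s₁⁻¹ := by
          rw [← hs₁, NT.peiffer_mu]
        rw [NT.E2 c x e₁ e₂, hDh]
        exact M.mul_mem (hx₁ x hx)
          (M.mul_mem (M.mul_mem hs₁M (hx₂ x hx)) (M.inv_mem hs₁M))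
      · rintro e₀ _ ⟨⟨s, hsM, hs⟩, hx⟩
        refine ⟨⟨s⁻¹, M.inv_mem hsM, by rw [map_inv, hs]⟩, ?_⟩
        intro x hx'
        have h0 := NT.E2 c x e₀ e₀⁻¹
        rw [mul_inv_cancel, NT.tmul_one_right] at h0
        have h1 : NT.Dh c e₀ (tmul c x e₀⁻¹) = (tmul c x e₀)⁻¹ :=
          (mul_eq_one_iff_inv_eq.mp h0.symm).symm
        have h2 : s * tmul c x e₀⁻¹ * s⁻¹ = (tmul c x e₀)⁻¹ := by
          rw [← h1, ← hs, NT.peiffer_mu]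
        have h3 : tmul c x e₀⁻¹ = s⁻¹ * (tmul c x e₀)⁻¹ * s := by
          calc tmul c x e₀⁻¹ = s⁻¹ * (s * tmul c x e₀⁻¹ * s⁻¹) * s := by group
            _ = s⁻¹ * (tmul c x e₀)⁻¹ * s := by rw [h2]
        rw [h3]
        exact M.mul_mem (M.mul_mem (M.inv_mem hsM) (M.inv_mem (hx x hx'))) hsM
    -- Step 2: g ⊗ e ∈ M for all g and e ∈ D_G(H)
    have step2 : ∀ g : G, ∀ e ∈ derivSubgroupH c, tmul c g e ∈ M := by
      intro g
      have hg : g ∈ Subgroup.closure (↑SG : Set G) := by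
        rw [hSG]; exact Subgroup.mem_top g
      refine Subgroup.closure_induction
        (p := fun g _ => ∀ e ∈ derivSubgroupH c, tmul c g e ∈ M)
        ?_ ?_ ?_ ?_ hg
      · intro x hx e he
        exact (step1 e he).2 x hx
      · intro e _
        rw [NT.tmul_one_left]
        exact M.one_mem
      · intro g₁ g₂ _ _ ih₁ ih₂ e he
        rw [NT.E1 c g₁ g₂ e, NT.I1]
        exact M.mul_mem
          (M.mul_mem (ih₁ _ (NT.mu_mem c _)) (ih₂ e he)) (ih₁ e he)
      · intro g₀ _ ih e he
        have h0 := NT.E1 c g₀ g₀⁻¹ e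
        rw [mul_inv_cancel, NT.tmul_one_left, NT.I1] at h0
        -- h0 : 1 = tmul g₀ (mu (tmul g₀⁻¹ e)) * tmul g₀⁻¹ e * tmul g₀ e
        set A := tmul c g₀ (NT.mu c (tmul c g₀⁻¹ e))
        set B := tmul c g₀⁻¹ e
        set Cc := tmul c g₀ e
        have h1 : B = A⁻¹ * Cc⁻¹ := by
          calc B = A⁻¹ * (A * B * Cc) * Cc⁻¹ := by group
            _ = A⁻¹ * 1 * Cc⁻¹ := by rw [← h0]
            _ = A⁻¹ * Cc⁻¹ := by group
        rw [h1]
        exact M.mul_mem (M.inv_mem (ih _ (NT.mu_mem c _))) (M.inv_mem (ih e he))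
    -- Step 3a: for d ∈ D_H(G): a preimage of d lies in M, and d ⊗ y ∈ M for y ∈ SH
    have step3a : ∀ d ∈ derivSubgroupG c,
        (∃ t ∈ M, NT.lam c t = d) ∧ ∀ y ∈ SH, tmul c d y ∈ M := by
      intro d hd
      rw [← hSD] at hd
      refine Subgroup.closure_induction
        (p := fun d _ => (∃ t ∈ M, NT.lam c t = d) ∧ ∀ y ∈ SH, tmul c d y ∈ M)
        ?_ ?_ ?_ ?_ hd
      · intro d' hd'
        exact ⟨⟨tD d', hmemtD d' hd', htD d' (hSDsub d' hd')⟩,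
          fun y hy => hmem5 d' hd' y hy⟩
      · refine ⟨⟨1, M.one_mem, map_one _⟩, fun y _ => ?_⟩
        rw [NT.tmul_one_left]
        exact M.one_mem
      · rintro d₁ d₂ _ _ ⟨⟨t₁, ht₁M, ht₁⟩, hy₁⟩ ⟨⟨t₂, ht₂M, ht₂⟩, hy₂⟩
        refine ⟨⟨t₁ * t₂, M.mul_mem ht₁M ht₂M, by rw [map_mul, ht₁, ht₂]⟩, ?_⟩
        intro y hy
        have hDg : NT.Dg c d₁ (tmul c d₂ y) = t₁ * tmul c d₂ y * t₁⁻¹ := by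
          rw [← ht₁, NT.peiffer_lam]
        rw [NT.E1 c d₁ d₂ y, hDg]
        exact M.mul_mem
          (M.mul_mem (M.mul_mem ht₁M (hy₂ y hy)) (M.inv_mem ht₁M)) (hy₁ y hy)
      · rintro d₀ _ ⟨⟨t, htM, ht⟩, hy⟩
        refine ⟨⟨t⁻¹, M.inv_mem htM, by rw [map_inv, ht]⟩, ?_⟩
        intro y hy'
        have h0 := NT.E1 c d₀ d₀⁻¹ y
        rw [mul_inv_cancel, NT.tmul_one_left] at h0
        have h1 : NT.Dg c d₀ (tmul c d₀⁻¹ y) = (tmul c d₀ y)⁻¹ :=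
          (inv_eq_of_mul_eq_one_left h0.symm).symm
        have h2 : t * tmul c d₀⁻¹ y * t⁻¹ = (tmul c d₀ y)⁻¹ := by
          rw [← h1, ← ht, NT.peiffer_lam]
        have h3 : tmul c d₀⁻¹ y = t⁻¹ * (tmul c d₀ y)⁻¹ * t := by
          calc tmul c d₀⁻¹ y = t⁻¹ * (t * tmul c d₀⁻¹ y * t⁻¹) * t := by group
            _ = t⁻¹ * (tmul c d₀ y)⁻¹ * t := by rw [h2]
        rw [h3]
        exact M.mul_mem (M.mul_mem (M.inv_mem htM) (M.inv_mem (hy y hy'))) htM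
    -- Step 3: d ⊗ h ∈ M for all h and d ∈ D_H(G)
    have step3 : ∀ h : H, ∀ d ∈ derivSubgroupG c, tmul c d h ∈ M := by
      intro h
      have hh : h ∈ Subgroup.closure (↑SH : Set H) := by
        rw [hSH]; exact Subgroup.mem_top h
      refine Subgroup.closure_induction
        (p := fun h _ => ∀ d ∈ derivSubgroupG c, tmul c d h ∈ M)
        ?_ ?_ ?_ ?_ hh
      · intro y hy d hd
        exact (step3a d hd).2 y hy
      · intro d _
        rw [NT.tmul_one_right]
        exact M.one_mem
      · intro h₁ h₂ _ _ ih₁ ih₂ d hd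
        rw [NT.E2 c d h₁ h₂, NT.I2']
        exact M.mul_mem (ih₁ d hd)
          (M.mul_mem (M.inv_mem (ih₁ _ (NT.lam_mem c _))) (ih₂ d hd))
      · intro h₀ _ ih d hd
        have h0 := NT.E2 c d h₀ h₀⁻¹
        rw [mul_inv_cancel, NT.tmul_one_right, NT.I2'] at h0
        -- h0 : 1 = tmul d h₀ * ((tmul (lam (tmul d h₀⁻¹)) h₀)⁻¹ * tmul d h₀⁻¹)
        set A := tmul c d h₀
        set B := tmul c (NT.lam c (tmul c d h₀⁻¹)) h₀
        set X := tmul c d h₀⁻¹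
        have h1 : X = B * A⁻¹ := by
          calc X = B * A⁻¹ * (A * (B⁻¹ * X)) := by group
            _ = B * A⁻¹ * 1 := by rw [← h0]
            _ = B * A⁻¹ := by group
        rw [h1]
        exact M.mul_mem (ih _ (NT.lam_mem c _)) (M.inv_mem (ih d hd))
    -- Step 4a: x ⊗ h ∈ M for x ∈ SG and all h
    have step4a : ∀ h : H, ∀ x ∈ SG, tmul c x h ∈ M := by
      intro h
      have hh : h ∈ Subgroup.closure (↑SH : Set H) := by
        rw [hSH]; exact Subgroup.mem_top h
      refine Subgroup.closure_induction
        (p := fun h _ => ∀ x ∈ SG, tmul c x h ∈ M)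
        ?_ ?_ ?_ ?_ hh
      · intro y hy x hx
        exact hmem1 x hx y hy
      · intro x _
        rw [NT.tmul_one_right]
        exact M.one_mem
      · intro h₁ h₂ _ _ ih₁ ih₂ x hx
        rw [NT.E2 c x h₁ h₂, NT.I2']
        exact M.mul_mem (ih₁ x hx)
          (M.mul_mem (M.inv_mem (step3 h₁ _ (NT.lam_mem c _))) (ih₂ x hx))
      · intro h₀ _ ih x hx
        have h0 := NT.E2 c x h₀ h₀⁻¹
        rw [mul_inv_cancel, NT.tmul_one_right, NT.I2'] at h0
        set A := tmul c x h₀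
        set B := tmul c (NT.lam c (tmul c x h₀⁻¹)) h₀
        set X := tmul c x h₀⁻¹
        have h1 : X = B * A⁻¹ := by
          calc X = B * A⁻¹ * (A * (B⁻¹ * X)) := by group
            _ = B * A⁻¹ * 1 := by rw [← h0]
            _ = B * A⁻¹ := by group
        rw [h1]
        exact M.mul_mem (step3 h₀ _ (NT.lam_mem c _)) (M.inv_mem (ih x hx))
    -- Step 4: all generators lie in M
    have step4 : ∀ (g : G) (h : H), tmul c g h ∈ M := by
      intro g
      have hg : g ∈ Subgroup.closure (↑SG : Set G) := by
        rw [hSG]; exact Subgroup.mem_top g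
      refine Subgroup.closure_induction
        (p := fun g _ => ∀ h : H, tmul c g h ∈ M)
        ?_ ?_ ?_ ?_ hg
      · intro x hx h
        exact step4a h x hx
      · intro h
        rw [NT.tmul_one_left]
        exact M.one_mem
      · intro g₁ g₂ _ _ ih₁ ih₂ h
        rw [NT.E1 c g₁ g₂ h, NT.I1]
        exact M.mul_mem
          (M.mul_mem (step2 g₁ _ (NT.mu_mem c _)) (ih₂ h)) (ih₁ h)
      · intro g₀ _ ih h
        have h0 := NT.E1 c g₀ g₀⁻¹ h
        rw [mul_inv_cancel, NT.tmul_one_left, NT.I1] at h0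
        set A := tmul c g₀ (NT.mu c (tmul c g₀⁻¹ h))
        set B := tmul c g₀⁻¹ h
        set Cc := tmul c g₀ h
        have h1 : B = A⁻¹ * Cc⁻¹ := by
          calc B = A⁻¹ * (A * B * Cc) * Cc⁻¹ := by group
            _ = A⁻¹ * 1 * Cc⁻¹ := by rw [← h0]
            _ = A⁻¹ * Cc⁻¹ := by group
        rw [h1]
        exact M.mul_mem (M.inv_mem (step2 g₀ _ (NT.mu_mem c _)))
          (M.inv_mem (ih h))
    -- conclude
    have htop : Subgroup.closure F = (⊤ : Subgroup (NATensor c)) := by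
      rw [eq_top_iff]
      intro t _
      refine PresentedGroup.generated_by _ _ (fun j => ?_) t
      exact step4 j.1 j.2
    exact Group.fg_iff.mpr ⟨F, htop, hFfin⟩
end

section
/- Let G be a finitely generated group. Then the tensor square G ⊗ G is finitely generated if and only if the commutator subgroup [G, G] is finitely generated. -/
universe u

variable {G H : Type u} [Group G] [Group H]

namespace TensorFGProof

open scoped commutatorElement

variable {G : Type u} [Group G]

/-- abbreviation for the tensor-square generator -/
def tm (x y : G) : TensorSquare G := tmul (conjActions G) x y

lemma rel_mk {r : FreeGroup (G × G)} (hr : r ∈ tensorRels (conjActions G)) :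
    PresentedGroup.mk (tensorRels (conjActions G)) r = 1 :=
  (QuotientGroup.eq_one_iff _).mpr (Subgroup.subset_normalClosure hr)

lemma rel1 (g g' h : G) :
    tm (g * g') h = tm (g * g' * g⁻¹) (g * h * g⁻¹) * tm g h := by
  have h0 := rel_mk (Or.inl ⟨g, g', h, rfl⟩)
  rw [map_mul, map_inv, map_mul, mul_inv_eq_one] at h0
  simp only [conjActions, MulAut.conj_apply] at h0
  exact h0

lemma rel2 (g h h' : G) :
    tm g (h * h') = tm g h * tm (h * g * h⁻¹) (h * h' * h⁻¹) := by
  have h0 := rel_mk (Or.inr ⟨g, h, h', rfl⟩)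
  rw [map_mul, map_inv, map_mul, mul_inv_eq_one] at h0
  simp only [conjActions, MulAut.conj_apply] at h0
  exact h0

lemma tm_one_left (h : G) : tm (1 : G) h = 1 := by
  have h0 := rel1 (1 : G) 1 h
  simp only [one_mul, mul_one, inv_one] at h0
  exact mul_eq_left.mp h0.symm

lemma tm_one_right (g : G) : tm g (1 : G) = 1 := by
  have h0 := rel2 g (1 : G) 1
  simp only [one_mul, mul_one, inv_one] at h0
  exact mul_eq_left.mp h0.symm

theorem hom_ext {K : Type*} [Group K] {φ ψ : TensorSquare G →* K}
    (h : ∀ x y : G, φ (tm x y) = ψ (tm x y)) : φ = ψ :=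
  PresentedGroup.ext fun ⟨x, y⟩ => h x y

lemma phi_cond (u : G) : ∀ r ∈ tensorRels (conjActions G),
    FreeGroup.lift (fun p : G × G => tm (u * p.1 * u⁻¹) (u * p.2 * u⁻¹)) r = 1 := by
  rintro r (⟨g, g', h, rfl⟩ | ⟨g, h, h', rfl⟩) <;>
    simp only [map_mul, map_inv, FreeGroup.lift_apply_of, conjActions, MulAut.conj_apply,
      mul_inv_eq_one]
  · have e := rel1 (u * g * u⁻¹) (u * g' * u⁻¹) (u * h * u⁻¹)
    rw [show (u * g * u⁻¹) * (u * g' * u⁻¹) = u * (g * g') * u⁻¹ by group] at e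
    rw [show u * (g * g') * u⁻¹ * (u * g * u⁻¹)⁻¹ = u * (g * g' * g⁻¹) * u⁻¹ by group] at e
    rw [show u * g * u⁻¹ * (u * h * u⁻¹) * (u * g * u⁻¹)⁻¹ = u * (g * h * g⁻¹) * u⁻¹ by group]
      at e
    exact e
  · have e := rel2 (u * g * u⁻¹) (u * h * u⁻¹) (u * h' * u⁻¹)
    rw [show (u * h * u⁻¹) * (u * h' * u⁻¹) = u * (h * h') * u⁻¹ by group] at e
    rw [show u * h * u⁻¹ * (u * g * u⁻¹) * (u * h * u⁻¹)⁻¹ = u * (h * g * h⁻¹) * u⁻¹ by group]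
      at e
    rw [show u * (h * h') * u⁻¹ * (u * h * u⁻¹)⁻¹ = u * (h * h' * h⁻¹) * u⁻¹ by group] at e
    exact e

/-- The diagonal conjugation endomorphism of the tensor square. -/
def phi (u : G) : TensorSquare G →* TensorSquare G :=
  PresentedGroup.toGroup (phi_cond u)

@[simp] lemma phi_tm (u x y : G) : phi u (tm x y) = tm (u * x * u⁻¹) (u * y * u⁻¹) :=
  PresentedGroup.toGroup.of (phi_cond u)

lemma tm_congr {a a' b b' : G} (ha : a = a') (hb : b = b') : tm a b = tm a' b' := by
  rw [ha, hb]

lemma phi_phi (u v : G) (t : TensorSquare G) : phi u (phi v t) = phi (u * v) t := by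
  have h : (phi u).comp (phi v) = phi (u * v) := hom_ext fun x y => by
    simp only [MonoidHom.comp_apply, phi_tm]
    exact tm_congr (by group) (by group)
  exact DFunLike.congr_fun h t

lemma phi_one (t : TensorSquare G) : phi (1 : G) t = t := by
  have h : phi (1 : G) = MonoidHom.id (TensorSquare G) := hom_ext fun x y => by
    simp [phi_tm]
  exact DFunLike.congr_fun h t

/-- Key identity: `(^{gh}x ⊗ ^{gh}y) (g⊗h) = (g⊗h) (^{hg}x ⊗ ^{hg}y)`. -/
lemma key_identity (g h x y : G) :
    tm (g * h * x * (g * h)⁻¹) (g * h * y * (g * h)⁻¹) * tm g h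
      = tm g h * tm (h * g * x * (h * g)⁻¹) (h * g * y * (h * g)⁻¹) := by
  have W1 : tm (g * x) (h * y) = tm (g * x * g⁻¹) (g * (h * y) * g⁻¹) * tm g (h * y) :=
    rel1 g x (h * y)
  have A : tm (g * x * g⁻¹) (g * (h * y) * g⁻¹)
      = tm (g * x * g⁻¹) (g * h * g⁻¹)
        * tm (g * h * x * (g * h)⁻¹) (g * h * y * (g * h)⁻¹) := by
    have e := rel2 (g * x * g⁻¹) (g * h * g⁻¹) (g * y * g⁻¹)
    rw [show (g * h * g⁻¹) * (g * y * g⁻¹) = g * (h * y) * g⁻¹ by group] at e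
    rw [show g * h * g⁻¹ * (g * x * g⁻¹) * (g * h * g⁻¹)⁻¹ = g * h * x * (g * h)⁻¹ by group]
      at e
    rw [show g * (h * y) * g⁻¹ * (g * h * g⁻¹)⁻¹ = g * h * y * (g * h)⁻¹ by group] at e
    exact e
  have B : tm g (h * y) = tm g h * tm (h * g * h⁻¹) (h * y * h⁻¹) := rel2 g h y
  have W2 : tm (g * x) (h * y) = tm (g * x) h * tm (h * (g * x) * h⁻¹) (h * y * h⁻¹) :=
    rel2 (g * x) h y
  have Cm : tm (g * x) h = tm (g * x * g⁻¹) (g * h * g⁻¹) * tm g h := rel1 g x h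
  have D : tm (h * (g * x) * h⁻¹) (h * y * h⁻¹)
      = tm (h * g * x * (h * g)⁻¹) (h * g * y * (h * g)⁻¹)
        * tm (h * g * h⁻¹) (h * y * h⁻¹) := by
    have e := rel1 (h * g * h⁻¹) (h * x * h⁻¹) (h * y * h⁻¹)
    rw [show (h * g * h⁻¹) * (h * x * h⁻¹) = h * (g * x) * h⁻¹ by group] at e
    rw [show h * (g * x) * h⁻¹ * (h * g * h⁻¹)⁻¹ = h * g * x * (h * g)⁻¹ by group] at e
    rw [show h * g * h⁻¹ * (h * y * h⁻¹) * (h * g * h⁻¹)⁻¹ = h * g * y * (h * g)⁻¹ by group]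
      at e
    exact e
  have E : tm (g * x * g⁻¹) (g * h * g⁻¹)
        * (tm (g * h * x * (g * h)⁻¹) (g * h * y * (g * h)⁻¹)
          * (tm g h * tm (h * g * h⁻¹) (h * y * h⁻¹)))
      = tm (g * x * g⁻¹) (g * h * g⁻¹)
        * (tm g h * (tm (h * g * x * (h * g)⁻¹) (h * g * y * (h * g)⁻¹)
          * tm (h * g * h⁻¹) (h * y * h⁻¹))) := by
    have e1 : tm (g * x) (h * y)
        = tm (g * x * g⁻¹) (g * h * g⁻¹)
          * (tm (g * h * x * (g * h)⁻¹) (g * h * y * (g * h)⁻¹)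
            * (tm g h * tm (h * g * h⁻¹) (h * y * h⁻¹))) := by
      rw [W1, A, B]; group
    have e2 : tm (g * x) (h * y)
        = tm (g * x * g⁻¹) (g * h * g⁻¹)
          * (tm g h * (tm (h * g * x * (h * g)⁻¹) (h * g * y * (h * g)⁻¹)
            * tm (h * g * h⁻¹) (h * y * h⁻¹))) := by
      rw [W2, Cm, D]; group
    rw [← e1, ← e2]
  have E2 := mul_left_cancel E
  rw [← mul_assoc, ← mul_assoc] at E2
  exact mul_right_cancel E2

/-- Conjugation in the tensor square is the diagonal action of the commutator. -/
lemma conj_tm (g h u v : G) :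
    tm g h * tm u v * (tm g h)⁻¹
      = tm (⁅g, h⁆ * u * ⁅g, h⁆⁻¹) (⁅g, h⁆ * v * ⁅g, h⁆⁻¹) := by
  have e := key_identity g h ((h * g)⁻¹ * u * (h * g)) ((h * g)⁻¹ * v * (h * g))
  rw [show g * h * ((h * g)⁻¹ * u * (h * g)) * (g * h)⁻¹
      = ⁅g, h⁆ * u * ⁅g, h⁆⁻¹ by rw [commutatorElement_def]; group] at e
  rw [show g * h * ((h * g)⁻¹ * v * (h * g)) * (g * h)⁻¹
      = ⁅g, h⁆ * v * ⁅g, h⁆⁻¹ by rw [commutatorElement_def]; group] at e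
  rw [show h * g * ((h * g)⁻¹ * u * (h * g)) * (h * g)⁻¹ = u by group] at e
  rw [show h * g * ((h * g)⁻¹ * v * (h * g)) * (h * g)⁻¹ = v by group] at e
  rw [← e]
  group

lemma kappa_cond : ∀ r ∈ tensorRels (conjActions G),
    FreeGroup.lift (fun p : G × G => ⁅p.1, p.2⁆) r = 1 := by
  rintro r (⟨g, g', h, rfl⟩ | ⟨g, h, h', rfl⟩) <;>
    simp only [map_mul, map_inv, FreeGroup.lift_apply_of, conjActions, MulAut.conj_apply,
      mul_inv_eq_one, commutatorElement_def] <;> group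

/-- The commutator homomorphism `G ⊗ G →* G`. -/
def kappa : TensorSquare G →* G := PresentedGroup.toGroup kappa_cond

@[simp] lemma kappa_tm (x y : G) : kappa (tm x y) = ⁅x, y⁆ :=
  PresentedGroup.toGroup.of kappa_cond

lemma closure_tm_top :
    Subgroup.closure (Set.range fun p : G × G => (tm p.1 p.2 : TensorSquare G)) = ⊤ := by
  have : (Set.range fun p : G × G => (tm p.1 p.2 : TensorSquare G))
      = Set.range (PresentedGroup.of (rels := tensorRels (conjActions G))) := by
    congr 1
  rw [this]
  exact PresentedGroup.closure_range_of _

lemma kappa_range : (kappa (G := G)).range = commutator G := by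
  have h1 : (kappa (G := G)).range
      = Subgroup.map kappa (⊤ : Subgroup (TensorSquare G)) := kappa.range_eq_map
  rw [h1, ← closure_tm_top, MonoidHom.map_closure, commutator_eq_closure]
  congr 1
  ext z
  constructor
  · rintro ⟨w, ⟨p, rfl⟩, rfl⟩
    exact ⟨p.1, p.2, (kappa_tm p.1 p.2).symm⟩
  · rintro ⟨a, b, rfl⟩
    exact ⟨tm a b, ⟨(a, b), rfl⟩, kappa_tm a b⟩

/-- Conjugation in the tensor square is the diagonal `G`-action through `kappa`. -/
lemma conj_eq_phi (t : TensorSquare G) (ξ : TensorSquare G) :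
    t * ξ * t⁻¹ = phi (kappa t) ξ := by
  have ht : t ∈ Subgroup.closure
      (Set.range fun p : G × G => (tm p.1 p.2 : TensorSquare G)) := by
    rw [closure_tm_top]; trivial
  induction ht using Subgroup.closure_induction generalizing ξ with
  | mem t' ht' =>
    obtain ⟨⟨x, y⟩, rfl⟩ := ht'
    have h : ((MulAut.conj (tm x y : TensorSquare G)).toMonoidHom :
        TensorSquare G →* TensorSquare G) = phi (kappa (tm x y)) := by
      refine hom_ext fun a b => ?_
      simp only [MulEquiv.coe_toMonoidHom, MulAut.conj_apply, kappa_tm, phi_tm]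
      exact conj_tm x y a b
    simpa using DFunLike.congr_fun h ξ
  | one =>
    simp only [one_mul, inv_one, mul_one, map_one]
    exact (phi_one ξ).symm
  | mul a b _ _ iha ihb =>
    have : a * b * ξ * (a * b)⁻¹ = a * (b * ξ * b⁻¹) * a⁻¹ := by group
    rw [this, ihb, iha, phi_phi, map_mul]
  | inv a _ iha =>
    have h1 : a * (phi (kappa a⁻¹) ξ) * a⁻¹ = ξ := by
      rw [iha, phi_phi, map_inv, mul_inv_cancel]
      exact phi_one ξ
    calc a⁻¹ * ξ * a⁻¹⁻¹ = a⁻¹ * (a * (phi (kappa a⁻¹) ξ) * a⁻¹) * a⁻¹⁻¹ := by rw [h1]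
    _ = phi (kappa a⁻¹) ξ := by group

/-- The image of `x ⊗ y` in the abelianization of the tensor square. -/
def bb (x y : G) : Abelianization (TensorSquare G) := Abelianization.of (tm x y)

lemma bb_rel1 (g g' h : G) :
    bb (g * g') h = bb (g * g' * g⁻¹) (g * h * g⁻¹) * bb g h := by
  unfold bb; rw [rel1 g g' h, map_mul]

lemma bb_rel2 (g h h' : G) :
    bb g (h * h') = bb g h * bb (h * g * h⁻¹) (h * h' * h⁻¹) := by
  unfold bb; rw [rel2 g h h', map_mul]

@[simp] lemma bb_one_left (h : G) : bb (1 : G) h = 1 := by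
  unfold bb; rw [tm_one_left, map_one]

@[simp] lemma bb_one_right (g : G) : bb g (1 : G) = 1 := by
  unfold bb; rw [tm_one_right, map_one]

/-- Diagonal conjugation by an element of the commutator subgroup acts trivially on
the abelianization of the tensor square. -/
lemma bb_conj {c : G} (hc : c ∈ commutator G) (x y : G) :
    bb (c * x * c⁻¹) (c * y * c⁻¹) = bb x y := by
  rw [commutator_eq_closure] at hc
  induction hc using Subgroup.closure_induction generalizing x y with
  | mem c' hc' =>
    obtain ⟨g, h, rfl⟩ := hc'
    unfold bb
    rw [← conj_tm g h x y, map_mul, map_mul, map_inv]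
    rw [mul_comm (Abelianization.of (tm g h))]
    rw [mul_assoc, mul_inv_cancel, mul_one]
  | one => simp
  | mul a b _ _ iha ihb =>
    have e1 : a * b * x * (a * b)⁻¹ = a * (b * x * b⁻¹) * a⁻¹ := by group
    have e2 : a * b * y * (a * b)⁻¹ = a * (b * y * b⁻¹) * a⁻¹ := by group
    rw [e1, e2, iha, ihb]
  | inv a _ iha =>
    have := iha (a⁻¹ * x * a) (a⁻¹ * y * a)
    rw [show a * (a⁻¹ * x * a) * a⁻¹ = x by group,
        show a * (a⁻¹ * y * a) * a⁻¹ = y by group] at this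
    rw [show a⁻¹ * x * a⁻¹⁻¹ = a⁻¹ * x * a by group,
        show a⁻¹ * y * a⁻¹⁻¹ = a⁻¹ * y * a by group, this]

lemma bb_add_left {c : G} (hc : c ∈ commutator G) (x h : G) :
    bb (c * x) h = bb x h * bb c h := by
  have e := bb_rel1 c x h
  rwa [show c * x * c⁻¹ = c * x * c⁻¹ from rfl, bb_conj hc x h] at e

lemma bb_add_right {c : G} (hc : c ∈ commutator G) (g y : G) :
    bb g (c * y) = bb g c * bb g y := by
  have e := bb_rel2 g c y
  rwa [bb_conj hc g y] at e

lemma bb_inv_left {c : G} (hc : c ∈ commutator G) (h : G) :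
    bb c⁻¹ h = (bb c h)⁻¹ := by
  have e := bb_rel1 c c⁻¹ h
  rw [mul_inv_cancel, bb_one_left, one_mul] at e
  have e2 : bb c⁻¹ (c * h * c⁻¹) = bb c⁻¹ h := by
    have := bb_conj hc c⁻¹ h
    rwa [show c * c⁻¹ * c⁻¹ = c⁻¹ by group] at this
  rw [e2] at e
  exact eq_inv_of_mul_eq_one_left e.symm

lemma bb_inv_right {c : G} (hc : c ∈ commutator G) (g : G) :
    bb g c⁻¹ = (bb g c)⁻¹ := by
  have e := bb_rel2 g c c⁻¹
  rw [mul_inv_cancel, bb_one_right, one_mul] at e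
  have e2 : bb (c * g * c⁻¹) c⁻¹ = bb g c⁻¹ := by
    have := bb_conj hc g c⁻¹
    rwa [show c * c⁻¹ * c⁻¹ = c⁻¹ by group] at this
  rw [e2] at e
  rw [mul_comm] at e
  exact eq_inv_of_mul_eq_one_left e.symm

lemma comm_mem (a b : G) : ⁅a, b⁆ ∈ commutator G := by
  rw [commutator_eq_closure]
  exact Subgroup.subset_closure ⟨a, b, rfl⟩

lemma conj_expand (a b : G) : a * b * a⁻¹ = ⁅a, b⁆ * b := by
  rw [commutatorElement_def]; group

lemma bb_second_inv (c y : G) : bb c y⁻¹ = (bb (y⁻¹ * c * y) y)⁻¹ := by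
  have e := bb_rel2 c y⁻¹ y
  rw [inv_mul_cancel, bb_one_right] at e
  rw [show y⁻¹ * c * y⁻¹⁻¹ = y⁻¹ * c * y by group,
      show (1 : G) * y⁻¹⁻¹ = y by group] at e
  exact eq_inv_of_mul_eq_one_left e.symm

lemma bb_first_inv (x y : G) : bb x⁻¹ y = (bb x (x⁻¹ * y * x))⁻¹ := by
  have e := bb_rel1 x⁻¹ x y
  rw [inv_mul_cancel, bb_one_left] at e
  rw [show (1 : G) * x⁻¹⁻¹ = x by group,
      show x⁻¹ * y * x⁻¹⁻¹ = x⁻¹ * y * x by group] at e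
  exact eq_inv_of_mul_eq_one_right e.symm

/-- The central generation theorem: every `bb x y` lies in the subgroup generated by
tensors of generators of `G` and of generators of the commutator subgroup. -/
lemma bb_mem_closure (S C : Set G) (hS : Subgroup.closure S = ⊤)
    (hC : Subgroup.closure C = commutator G) (x y : G) :
    bb x y ∈ Subgroup.closure (Set.image2 (bb (G := G)) (S ∪ C) (S ∪ C)) := by
  set M := Subgroup.closure (Set.image2 (bb (G := G)) (S ∪ C) (S ∪ C)) with hM
  have nrm : (commutator G).Normal := inferInstance
  have hCsub : ∀ c ∈ C, c ∈ commutator G := fun c hc => hC ▸ Subgroup.subset_closure hc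
  have hgen : ∀ a ∈ S ∪ C, ∀ b ∈ S ∪ C, bb a b ∈ M :=
    fun a ha b hb => Subgroup.subset_closure (Set.mem_image2_of_mem ha hb)
  -- L0a
  have L0a : ∀ a ∈ S ∪ C, ∀ c ∈ commutator G, bb c a ∈ M ∧ bb a c ∈ M := by
    intro a ha c hc
    rw [← hC] at hc
    induction hc using Subgroup.closure_induction with
    | mem c' hc' => exact ⟨hgen c' (Or.inr hc') a ha, hgen a ha c' (Or.inr hc')⟩
    | one => exact ⟨by rw [bb_one_left]; exact one_mem M, by rw [bb_one_right]; exact one_mem M⟩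
    | mul c d hcc _ ihc ihd =>
      have hcG : c ∈ commutator G := hC ▸ hcc
      refine ⟨?_, ?_⟩
      · rw [bb_add_left hcG]; exact mul_mem ihd.1 ihc.1
      · rw [bb_add_right hcG]; exact mul_mem ihc.2 ihd.2
    | inv c hcc ihc =>
      have hcG : c ∈ commutator G := hC ▸ hcc
      exact ⟨by rw [bb_inv_left hcG]; exact inv_mem ihc.1,
             by rw [bb_inv_right hcG]; exact inv_mem ihc.2⟩
  -- L0
  have L0 : ∀ d ∈ commutator G, ∀ c ∈ commutator G, bb c d ∈ M := by
    intro d hd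
    rw [← hC] at hd
    induction hd using Subgroup.closure_induction with
    | mem d' hd' => exact fun c hc => (L0a d' (Or.inr hd') c hc).1
    | one => exact fun c hc => by rw [bb_one_right]; exact one_mem M
    | mul d e hdc _ ihd ihe =>
      intro c hc
      rw [bb_add_right (hC ▸ hdc)]
      exact mul_mem (ihd c hc) (ihe c hc)
    | inv d hdc ihd =>
      intro c hc
      rw [bb_inv_right (hC ▸ hdc)]
      exact inv_mem (ihd c hc)
  -- L1
  have L1 : ∀ y : G, ∀ c ∈ commutator G, bb c y ∈ M ∧ bb y c ∈ M := by
    intro y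
    have hy : y ∈ Subgroup.closure S := by rw [hS]; trivial
    induction hy using Subgroup.closure_induction with
    | mem s hs => exact fun c hc => L0a s (Or.inl hs) c hc
    | one => exact fun c hc =>
        ⟨by rw [bb_one_right]; exact one_mem M, by rw [bb_one_left]; exact one_mem M⟩
    | mul y₁ y₂ _ _ ih1 ih2 =>
      intro c hc
      have hc' : y₁ * c * y₁⁻¹ ∈ commutator G := nrm.conj_mem c hc y₁
      have hcm : ⁅y₁, y₂⁆ ∈ commutator G := comm_mem y₁ y₂
      constructor
      · rw [bb_rel2 c y₁ y₂]
        refine mul_mem (ih1 c hc).1 ?_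
        rw [conj_expand y₁ y₂, bb_add_right hcm]
        exact mul_mem (L0 ⁅y₁, y₂⁆ hcm _ hc') ((ih2 _ hc').1)
      · rw [bb_rel1 y₁ y₂ c]
        refine mul_mem ?_ (ih1 c hc).2
        rw [conj_expand y₁ y₂, bb_add_left hcm]
        exact mul_mem ((ih2 _ hc').2) (L0 _ hc' ⁅y₁, y₂⁆ hcm)
    | inv y _ ih =>
      intro c hc
      have hc' : y⁻¹ * c * y ∈ commutator G := by
        have := nrm.conj_mem c hc y⁻¹
        rwa [inv_inv] at this
      constructor
      · rw [bb_second_inv c y]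
        exact inv_mem ((ih _ hc').1)
      · rw [bb_first_inv y c]
        exact inv_mem ((ih _ hc').2)
  -- L2
  have L2 : ∀ y : G, ∀ a ∈ S ∪ C, bb a y ∈ M ∧ bb y a ∈ M := by
    intro y
    have hy : y ∈ Subgroup.closure S := by rw [hS]; trivial
    induction hy using Subgroup.closure_induction with
    | mem t ht =>
      intro a ha
      rcases ha with hs | hcC
      · exact ⟨hgen a (Or.inl hs) t (Or.inl ht), hgen t (Or.inl ht) a (Or.inl hs)⟩
      · exact L0a t (Or.inl ht) a (hCsub a hcC)
    | one => exact fun a ha =>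
        ⟨by rw [bb_one_right]; exact one_mem M, by rw [bb_one_left]; exact one_mem M⟩
    | mul y₁ y₂ _ _ ih1 ih2 =>
      intro a ha
      have hc₁ : ⁅y₁, a⁆ ∈ commutator G := comm_mem y₁ a
      have hc₂ : ⁅y₁, y₂⁆ ∈ commutator G := comm_mem y₁ y₂
      constructor
      · rw [bb_rel2 a y₁ y₂]
        refine mul_mem (ih1 a ha).1 ?_
        rw [conj_expand y₁ a, conj_expand y₁ y₂, bb_add_left hc₁]
        refine mul_mem ?_ ?_
        · rw [bb_add_right hc₂]
          exact mul_mem ((L1 a _ hc₂).2) ((ih2 a ha).1)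
        · rw [bb_add_right hc₂]
          exact mul_mem (L0 _ hc₂ _ hc₁) ((L1 y₂ _ hc₁).1)
      · rw [bb_rel1 y₁ y₂ a]
        refine mul_mem ?_ (ih1 a ha).2
        rw [conj_expand y₁ y₂, conj_expand y₁ a, bb_add_left hc₂]
        refine mul_mem ?_ ?_
        · rw [bb_add_right hc₁]
          exact mul_mem ((L1 y₂ _ hc₁).2) ((ih2 a ha).2)
        · rw [bb_add_right hc₁]
          exact mul_mem (L0 _ hc₁ _ hc₂) ((L1 a _ hc₂).1)
    | inv y _ ih =>
      intro a ha
      have hc₃ : ⁅y⁻¹, a⁆ ∈ commutator G := comm_mem y⁻¹ a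
      constructor
      · rw [bb_second_inv a y]
        rw [show y⁻¹ * a * y = y⁻¹ * a * y⁻¹⁻¹ by rw [inv_inv], conj_expand y⁻¹ a]
        rw [bb_add_left hc₃]
        exact inv_mem (mul_mem ((ih a ha).1) ((L1 y _ hc₃).1))
      · rw [bb_first_inv y a]
        rw [show y⁻¹ * a * y = y⁻¹ * a * y⁻¹⁻¹ by rw [inv_inv], conj_expand y⁻¹ a]
        rw [bb_add_right hc₃]
        exact inv_mem (mul_mem ((L1 y _ hc₃).2) ((ih a ha).2))
  -- L3
  have hx : x ∈ Subgroup.closure S := by rw [hS]; trivial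
  induction hx using Subgroup.closure_induction generalizing y with
  | mem s hs => exact (L2 y s (Or.inl hs)).1
  | one => rw [bb_one_left]; exact one_mem M
  | mul x₁ x₂ _ _ ih1 ih2 =>
    rw [bb_rel1 x₁ x₂ y]
    refine mul_mem ?_ (ih1 y)
    rw [conj_expand x₁ x₂, bb_add_left (comm_mem x₁ x₂)]
    exact mul_mem (ih2 _) ((L1 _ _ (comm_mem x₁ x₂)).1)
  | inv x _ ih =>
    rw [bb_first_inv x y]
    exact inv_mem (ih _)

lemma central_commute {z : TensorSquare G} (hz : z ∈ (kappa (G := G)).ker)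
    (w : TensorSquare G) : z * w = w * z := by
  have h := conj_eq_phi z w
  rw [MonoidHom.mem_ker.mp hz, phi_one] at h
  calc z * w = z * w * z⁻¹ * z := by group
  _ = w * z := by rw [h]

lemma comm_mul_central {T : Type*} [Group T] {u₁ z₁ u₂ z₂ : T}
    (h₁ : ∀ w, z₁ * w = w * z₁) (h₂ : ∀ w, z₂ * w = w * z₂) :
    ⁅u₁ * z₁, u₂ * z₂⁆ = ⁅u₁, u₂⁆ := by
  have step1 : ∀ a v : T, ⁅a * z₁, v⁆ = ⁅a, v⁆ := by
    intro a v
    calc ⁅a * z₁, v⁆ = a * (z₁ * v) * (z₁⁻¹ * a⁻¹) * v⁻¹ := by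
          rw [commutatorElement_def]; group
    _ = a * (v * z₁) * (z₁⁻¹ * a⁻¹) * v⁻¹ := by rw [h₁ v]
    _ = ⁅a, v⁆ := by rw [commutatorElement_def]; group
  have step2 : ∀ v : T, ⁅u₁, v * z₂⁆ = ⁅u₁, v⁆ := by
    intro v
    calc ⁅u₁, v * z₂⁆ = u₁ * v * (z₂ * u₁⁻¹) * (z₂⁻¹ * v⁻¹) := by
          rw [commutatorElement_def]; group
    _ = u₁ * v * (u₁⁻¹ * z₂) * (z₂⁻¹ * v⁻¹) := by rw [h₂ u₁⁻¹]
    _ = ⁅u₁, v⁆ := by rw [commutatorElement_def]; group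
  rw [step1 u₁ (u₂ * z₂), step2 u₂]

end TensorFGProof

open TensorFGProof in
/-- for a finitely generated group `G`, the tensor square `G ⊗ G` is
finitely generated iff the commutator subgroup `[G,G]` is finitely generated. -/
theorem tensorSquare_fg_iff_commutator_fg {G : Type u} [Group G] (hG : Group.FG G) :
    Group.FG (TensorSquare G) ↔ (commutator G).FG := by
  constructor
  · intro hT
    haveI : Group.FG (TensorSquare G) := hT
    have h1 : Group.FG (kappa (G := G)).range := Group.fg_range kappa
    rw [← kappa_range]
    exact (Group.fg_iff_subgroup_fg _).mp h1
  · intro hcomm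
    obtain ⟨S, hSc, hSfin⟩ := Group.fg_iff.mp hG
    obtain ⟨C, hCc, hCfin⟩ := (Subgroup.fg_iff _).mp hcomm
    -- lift the generators of the commutator subgroup to the tensor square
    have hex : ∀ c : G, ∃ t : TensorSquare G, c ∈ commutator G → kappa t = c := by
      intro c
      by_cases h : c ∈ commutator G
      · have hc : c ∈ (kappa (G := G)).range := kappa_range (G := G) ▸ h
        obtain ⟨t, ht⟩ := hc
        exact ⟨t, fun _ => ht⟩
      · exact ⟨1, fun hh => absurd hh h⟩
    choose f hf using hex
    set X : Set (TensorSquare G) := f '' C with hX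
    set Y : Set (TensorSquare G) := Set.image2 (tm (G := G)) (S ∪ C) (S ∪ C) with hY
    set D := Subgroup.closure (X ∪ Y) with hD
    have hXD : Subgroup.closure X ≤ D := Subgroup.closure_mono Set.subset_union_left
    -- every element decomposes as (element of ⟨X⟩) * (central element)
    have hdecomp : ∀ t : TensorSquare G, ∃ u z, u ∈ Subgroup.closure X ∧
        z ∈ (kappa (G := G)).ker ∧ t = u * z := by
      intro t
      have h1 : kappa t ∈ commutator G := kappa_range (G := G) ▸ ⟨t, rfl⟩
      have h2 : commutator G ≤ Subgroup.map kappa (Subgroup.closure X) := by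
        rw [← hCc]
        refine (Subgroup.closure_le _).mpr ?_
        intro c hc
        exact ⟨f c, Subgroup.subset_closure ⟨c, hc, rfl⟩,
          hf c (hCc ▸ Subgroup.subset_closure hc)⟩
      obtain ⟨u, hu, hku⟩ := h2 h1
      refine ⟨u, u⁻¹ * t, hu, ?_, by group⟩
      rw [MonoidHom.mem_ker, map_mul, map_inv, hku]
      exact inv_mul_cancel _
    -- the commutator subgroup of the tensor square lies in ⟨X⟩
    have hcommT : commutator (TensorSquare G) ≤ Subgroup.closure X := by
      rw [commutator_def]
      refine Subgroup.commutator_le.mpr ?_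
      intro t₁ _ t₂ _
      obtain ⟨u₁, z₁, hu₁, hz₁, rfl⟩ := hdecomp t₁
      obtain ⟨u₂, z₂, hu₂, hz₂, rfl⟩ := hdecomp t₂
      rw [comm_mul_central (central_commute hz₁) (central_commute hz₂),
        commutatorElement_def]
      exact mul_mem (mul_mem (mul_mem hu₁ hu₂) (inv_mem hu₁)) (inv_mem hu₂)
    -- the abelianization is generated by the images of Y
    have hMle : Subgroup.closure (Set.image2 (bb (G := G)) (S ∪ C) (S ∪ C)) ≤
        Subgroup.map (Abelianization.of) D := by
      refine (Subgroup.closure_le _).mpr ?_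
      rintro a ⟨p, hp, q, hq, rfl⟩
      exact ⟨tm p q, Subgroup.subset_closure (Or.inr (Set.mem_image2_of_mem hp hq)), rfl⟩
    have hofM : ∀ t : TensorSquare G,
        Abelianization.of t ∈ Subgroup.closure (Set.image2 (bb (G := G)) (S ∪ C) (S ∪ C)) := by
      intro t
      have ht : t ∈ Subgroup.closure (Set.range fun p : G × G => tm p.1 p.2) := by
        rw [closure_tm_top]; trivial
      induction ht using Subgroup.closure_induction with
      | mem t' ht' =>
        obtain ⟨⟨a, b⟩, rfl⟩ := ht'
        exact bb_mem_closure S C hSc hCc a b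
      | one => rw [map_one]; exact one_mem _
      | mul a b _ _ iha ihb => rw [map_mul]; exact mul_mem iha ihb
      | inv a _ iha => rw [map_inv]; exact inv_mem iha
    -- conclude that D is everything
    have htop : ∀ t : TensorSquare G, t ∈ D := by
      intro t
      obtain ⟨d, hd, hdt⟩ := hMle (hofM t)
      have hker : d⁻¹ * t ∈ commutator (TensorSquare G) := by
        have h1 : Abelianization.of (d⁻¹ * t) = 1 := by
          rw [map_mul, map_inv, hdt]
          exact inv_mul_cancel _
        exact (QuotientGroup.eq_one_iff _).mp h1
      have h2 : t = d * (d⁻¹ * t) := by group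
      rw [h2]
      exact mul_mem hd (hXD (hcommT hker))
    refine Group.fg_iff.mpr ⟨X ∪ Y, eq_top_iff.mpr fun t _ => htop t, ?_⟩
    exact (hCfin.image f).union
      (Set.Finite.image2 _ (hSfin.union hCfin) (hSfin.union hCfin))
end

section
/- Let G and H be Noetherian groups acting compatibly on each other. If D_H(G) is finite, then G ⊗ H is Noetherian. -/
universe u

variable {G H : Type u} [Group G] [Group H]

/-! ### Auxiliary development for Statement 16 -/

namespace NATensorAux

open Subgroup
open scoped commutatorElement

variable {G H : Type u} [Group G] [Group H] (c : CompatibleActions G H)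

/-! #### Basic action lemmas -/

lemma actG_actG (a b : G) (x : H) : c.actG a (c.actG b x) = c.actG (a * b) x := by
  rw [map_mul, MulAut.mul_apply]

lemma actG_one (x : H) : c.actG 1 x = x := by
  rw [map_one, MulAut.one_apply]

lemma actH_actH (a b : H) (x : G) : c.actH a (c.actH b x) = c.actH (a * b) x := by
  rw [map_mul, MulAut.mul_apply]

lemma actH_one (x : G) : c.actH 1 x = x := by
  rw [map_one, MulAut.one_apply]

/-! #### The defining relations, in the tensor product -/

lemma mk_rel_one {r : FreeGroup (G × H)} (hr : r ∈ tensorRels c) :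
    PresentedGroup.mk (tensorRels c) r = 1 :=
  (QuotientGroup.eq_one_iff r).mpr (Subgroup.subset_normalClosure hr)

lemma tmul_rel1 (g g' : G) (h : H) :
    tmul c (g * g') h = tmul c (g * g' * g⁻¹) (c.actG g h) * tmul c g h := by
  have h1 := mk_rel_one c (Or.inl ⟨g, g', h, rfl⟩)
  rw [map_mul, map_inv, map_mul, mul_inv_eq_one] at h1
  exact h1

lemma tmul_rel2 (g : G) (h h' : H) :
    tmul c g (h * h') = tmul c g h * tmul c (c.actH h g) (h * h' * h⁻¹) := by
  have h1 := mk_rel_one c (Or.inr ⟨g, h, h', rfl⟩)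
  rw [map_mul, map_inv, map_mul, mul_inv_eq_one] at h1
  exact h1

omit [Group G] [Group H] in
/-- Helper: to check that a relator of the standard shape maps to `1`, it suffices to
check the corresponding equation. -/
lemma lift_rel_eq_one {β : Type*} [Group β] (f : G × H → β) (p1 p2 p3 : G × H)
    (hf : f p1 = f p2 * f p3) :
    FreeGroup.lift f (FreeGroup.of p1 * (FreeGroup.of p2 * FreeGroup.of p3)⁻¹) = 1 := by
  rw [map_mul, map_inv, map_mul, FreeGroup.lift_apply_of, FreeGroup.lift_apply_of, FreeGroup.lift_apply_of,
    hf, mul_inv_cancel]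

/-! #### The action endomorphisms on the tensor product -/

/-- The endomorphism of `G ⊗ H` induced by the action of `a : G`. -/
def lamM (a : G) : NATensor c →* NATensor c :=
  PresentedGroup.toGroup (f := fun p => tmul c (a * p.1 * a⁻¹) (c.actG a p.2)) (by
    rintro r (⟨g, g', h, rfl⟩ | ⟨g, h, h', rfl⟩)
    · refine lift_rel_eq_one _ _ _ _ ?_
      show tmul c (a * (g * g') * a⁻¹) (c.actG a h)
        = tmul c (a * (g * g' * g⁻¹) * a⁻¹) (c.actG a (c.actG g h))
          * tmul c (a * g * a⁻¹) (c.actG a h)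
      have e1 := tmul_rel1 c (a * g * a⁻¹) (a * g' * a⁻¹) (c.actG a h)
      have e3 : a * g * a⁻¹ * (a * g' * a⁻¹) * (a * g * a⁻¹)⁻¹
          = a * (g * g' * g⁻¹) * a⁻¹ := by group
      have e2 : a * g * a⁻¹ * (a * g' * a⁻¹) = a * (g * g') * a⁻¹ := by group
      have e4 : c.actG (a * g * a⁻¹) (c.actG a h) = c.actG a (c.actG g h) := by
        rw [actG_actG, actG_actG]
        congr 1
        group
      rw [e3, e2, e4] at e1
      exact e1
    · refine lift_rel_eq_one _ _ _ _ ?_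
      show tmul c (a * g * a⁻¹) (c.actG a (h * h'))
        = tmul c (a * g * a⁻¹) (c.actG a h)
          * tmul c (a * c.actH h g * a⁻¹) (c.actG a (h * h' * h⁻¹))
      have e1 := tmul_rel2 c (a * g * a⁻¹) (c.actG a h) (c.actG a h')
      have e2 : c.actG a h * c.actG a h' = c.actG a (h * h') :=
        (map_mul (c.actG a) h h').symm
      have e4 : c.actG a (h * h') * (c.actG a h)⁻¹ = c.actG a (h * h' * h⁻¹) := by
        rw [map_mul (c.actG a) (h * h') h⁻¹, map_inv (c.actG a) h]
      have e3 : c.actH (c.actG a h) (a * g * a⁻¹) = a * c.actH h g * a⁻¹ := by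
        rw [c.compat_left]
        rw [show a⁻¹ * (a * g * a⁻¹) * a = g from by group]
      rw [e2, e4, e3] at e1
      exact e1)

@[simp] lemma lamM_tmul (a g : G) (h : H) :
    lamM c a (tmul c g h) = tmul c (a * g * a⁻¹) (c.actG a h) :=
  PresentedGroup.toGroup.of _

/-- The endomorphism of `G ⊗ H` induced by the action of `b : H`. -/
def muM (b : H) : NATensor c →* NATensor c :=
  PresentedGroup.toGroup (f := fun p => tmul c (c.actH b p.1) (b * p.2 * b⁻¹)) (by
    rintro r (⟨g, g', h, rfl⟩ | ⟨g, h, h', rfl⟩)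
    · refine lift_rel_eq_one _ _ _ _ ?_
      show tmul c (c.actH b (g * g')) (b * h * b⁻¹)
        = tmul c (c.actH b (g * g' * g⁻¹)) (b * c.actG g h * b⁻¹)
          * tmul c (c.actH b g) (b * h * b⁻¹)
      have e1 := tmul_rel1 c (c.actH b g) (c.actH b g') (b * h * b⁻¹)
      have e2 : c.actH b g * c.actH b g' = c.actH b (g * g') :=
        (map_mul (c.actH b) g g').symm
      have e3 : c.actH b (g * g') * (c.actH b g)⁻¹ = c.actH b (g * g' * g⁻¹) := by
        rw [map_mul (c.actH b) (g * g') g⁻¹, map_inv (c.actH b) g]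
      have e4 : c.actG (c.actH b g) (b * h * b⁻¹) = b * c.actG g h * b⁻¹ := by
        rw [c.compat_right]
        rw [show b⁻¹ * (b * h * b⁻¹) * b = h from by group]
      rw [e2, e3, e4] at e1
      exact e1
    · refine lift_rel_eq_one _ _ _ _ ?_
      show tmul c (c.actH b g) (b * (h * h') * b⁻¹)
        = tmul c (c.actH b g) (b * h * b⁻¹)
          * tmul c (c.actH b (c.actH h g)) (b * (h * h' * h⁻¹) * b⁻¹)
      have e1 := tmul_rel2 c (c.actH b g) (b * h * b⁻¹) (b * h' * b⁻¹)
      have e2 : b * h * b⁻¹ * (b * h' * b⁻¹) = b * (h * h') * b⁻¹ := by group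
      have e4 : b * (h * h') * b⁻¹ * (b * h * b⁻¹)⁻¹ = b * (h * h' * h⁻¹) * b⁻¹ := by
        group
      have e3 : c.actH (b * h * b⁻¹) (c.actH b g) = c.actH b (c.actH h g) := by
        rw [actH_actH, actH_actH]
        congr 1
        group
      rw [e2, e4, e3] at e1
      exact e1)

@[simp] lemma muM_tmul (b : H) (g : G) (h : H) :
    muM c b (tmul c g h) = tmul c (c.actH b g) (b * h * b⁻¹) :=
  PresentedGroup.toGroup.of _

/-! #### The fundamental commutation identity -/

lemma cancel_aux {α : Type*} [Group α] {A B C D E : α}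
    (h : A * B * (C * D) = A * C * (E * D)) : B * C = C * E := by
  have h1 : A * (B * C) * D = A * (C * E) * D := by
    calc A * (B * C) * D = A * B * (C * D) := by group
      _ = A * C * (E * D) := h
      _ = A * (C * E) * D := by group
  exact mul_left_cancel (mul_right_cancel h1)

lemma comm_identity (g g' : G) (h h' : H) :
    lamM c g (muM c h (tmul c g' h')) * tmul c g h
      = tmul c g h * muM c h (lamM c g (tmul c g' h')) := by
  have way1 : tmul c (g * g') (h * h')
      = tmul c (g * g' * g⁻¹) (c.actG g h)
        * tmul c (c.actH (c.actG g h) (g * g' * g⁻¹))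
            (c.actG g h * c.actG g h' * (c.actG g h)⁻¹)
        * (tmul c g h * tmul c (c.actH h g) (h * h' * h⁻¹)) := by
    calc tmul c (g * g') (h * h')
        = tmul c (g * g' * g⁻¹) (c.actG g (h * h')) * tmul c g (h * h') :=
          tmul_rel1 c g g' (h * h')
      _ = tmul c (g * g' * g⁻¹) (c.actG g h * c.actG g h')
            * (tmul c g h * tmul c (c.actH h g) (h * h' * h⁻¹)) := by
          rw [map_mul (c.actG g) h h', tmul_rel2 c g h h']
      _ = _ := by
          rw [tmul_rel2 c (g * g' * g⁻¹) (c.actG g h) (c.actG g h')]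
  have way2 : tmul c (g * g') (h * h')
      = tmul c (g * g' * g⁻¹) (c.actG g h) * tmul c g h
        * (tmul c (c.actH h g * c.actH h g' * (c.actH h g)⁻¹)
            (c.actG (c.actH h g) (h * h' * h⁻¹))
          * tmul c (c.actH h g) (h * h' * h⁻¹)) := by
    calc tmul c (g * g') (h * h')
        = tmul c (g * g') h * tmul c (c.actH h (g * g')) (h * h' * h⁻¹) :=
          tmul_rel2 c (g * g') h h'
      _ = tmul c (g * g' * g⁻¹) (c.actG g h) * tmul c g h
            * tmul c (c.actH h g * c.actH h g') (h * h' * h⁻¹) := by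
          rw [tmul_rel1 c g g' h, map_mul (c.actH h) g g']
      _ = _ := by
          rw [tmul_rel1 c (c.actH h g) (c.actH h g') (h * h' * h⁻¹), mul_assoc]
  have cancel := cancel_aux (way1.symm.trans way2)
  have hBval : lamM c g (muM c h (tmul c g' h'))
      = tmul c (c.actH (c.actG g h) (g * g' * g⁻¹))
          (c.actG g h * c.actG g h' * (c.actG g h)⁻¹) := by
    rw [muM_tmul, lamM_tmul]
    congr 1
    · rw [c.compat_left]
      rw [show g⁻¹ * (g * g' * g⁻¹) * g = g' from by group]
    · rw [map_mul (c.actG g) (h * h') h⁻¹, map_mul (c.actG g) h h', map_inv (c.actG g) h]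
  have hEval : muM c h (lamM c g (tmul c g' h'))
      = tmul c (c.actH h g * c.actH h g' * (c.actH h g)⁻¹)
          (c.actG (c.actH h g) (h * h' * h⁻¹)) := by
    rw [lamM_tmul, muM_tmul]
    congr 1
    · rw [map_mul (c.actH h) (g * g') g⁻¹, map_mul (c.actH h) g g', map_inv (c.actH h) g]
    · rw [c.compat_right]
      rw [show h⁻¹ * (h * h' * h⁻¹) * h = h' from by group]
  rw [hBval, hEval]
  exact cancel

/-! #### Conjugation formulas (Peiffer identities on generators) -/

lemma conj_tmul_both (g g' : G) (h h' : H) :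
    (tmul c g h * tmul c g' h' =
      tmul c ((g * (c.actH h g)⁻¹) * g' * (g * (c.actH h g)⁻¹)⁻¹)
          (c.actG (g * (c.actH h g)⁻¹) h') * tmul c g h)
    ∧ (tmul c g h * tmul c g' h' =
      tmul c (c.actH (c.actG g h * h⁻¹) g')
          ((c.actG g h * h⁻¹) * h' * (c.actG g h * h⁻¹)⁻¹) * tmul c g h) := by
  have main := comm_identity c g (g⁻¹ * (c.actH h).symm g' * g) h ((c.actG g).symm (h⁻¹ * h' * h))
  have rhs : muM c h (lamM c g
        (tmul c (g⁻¹ * (c.actH h).symm g' * g) ((c.actG g).symm (h⁻¹ * h' * h))))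
      = tmul c g' h' := by
    rw [lamM_tmul]
    rw [show g * (g⁻¹ * (c.actH h).symm g' * g) * g⁻¹ = (c.actH h).symm g' from by group]
    rw [(c.actG g).apply_symm_apply, muM_tmul, (c.actH h).apply_symm_apply]
    rw [show h * (h⁻¹ * h' * h) * h⁻¹ = h' from by group]
  have lhs : lamM c g (muM c h
        (tmul c (g⁻¹ * (c.actH h).symm g' * g) ((c.actG g).symm (h⁻¹ * h' * h))))
      = tmul c ((g * (c.actH h g)⁻¹) * g' * (g * (c.actH h g)⁻¹)⁻¹)
          (c.actG g h * (h⁻¹ * h' * h) * (c.actG g h)⁻¹) := by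
    rw [muM_tmul, lamM_tmul]
    congr 1
    · have e1 : c.actH h (g⁻¹ * (c.actH h).symm g' * g)
          = (c.actH h g)⁻¹ * g' * c.actH h g := by
        rw [map_mul (c.actH h) (g⁻¹ * (c.actH h).symm g') g,
          map_mul (c.actH h) g⁻¹ ((c.actH h).symm g'),
          (c.actH h).apply_symm_apply, map_inv (c.actH h) g]
      rw [e1]
      group
    · have e2 : c.actG g (h * (c.actG g).symm (h⁻¹ * h' * h) * h⁻¹)
          = c.actG g h * (h⁻¹ * h' * h) * (c.actG g h)⁻¹ := by
        rw [map_mul (c.actG g) (h * (c.actG g).symm (h⁻¹ * h' * h)) h⁻¹,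
          map_mul (c.actG g) h ((c.actG g).symm (h⁻¹ * h' * h)),
          (c.actG g).apply_symm_apply, map_inv (c.actG g) h]
      rw [e2]
  rw [rhs, lhs] at main
  have comp_lam : c.actG (g * (c.actH h g)⁻¹) h'
      = c.actG g h * (h⁻¹ * h' * h) * (c.actG g h)⁻¹ := by
    rw [← map_inv (c.actH h) g, ← actG_actG, c.compat_right,
      map_mul (c.actG g) (h * c.actG g⁻¹ (h⁻¹ * h' * h)) h⁻¹,
      map_mul (c.actG g) h (c.actG g⁻¹ (h⁻¹ * h' * h)),
      map_inv (c.actG g) h, actG_actG, mul_inv_cancel, actG_one]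
  have comp_mu1 : c.actH (c.actG g h * h⁻¹) g'
      = (g * (c.actH h g)⁻¹) * g' * (g * (c.actH h g)⁻¹)⁻¹ := by
    rw [← actH_actH, c.compat_left,
      map_mul (c.actH h) (g⁻¹ * c.actH h⁻¹ g') g,
      map_mul (c.actH h) g⁻¹ (c.actH h⁻¹ g'),
      actH_actH, mul_inv_cancel, actH_one, map_inv (c.actH h) g]
    group
  have comp_mu2 : (c.actG g h * h⁻¹) * h' * (c.actG g h * h⁻¹)⁻¹
      = c.actG g h * (h⁻¹ * h' * h) * (c.actG g h)⁻¹ := by group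
  constructor
  · rw [comp_lam]
    exact main.symm
  · rw [comp_mu1, comp_mu2]
    exact main.symm

lemma conj_tmul_lam (g g' : G) (h h' : H) :
    tmul c g h * tmul c g' h' =
      tmul c ((g * (c.actH h g)⁻¹) * g' * (g * (c.actH h g)⁻¹)⁻¹)
          (c.actG (g * (c.actH h g)⁻¹) h') * tmul c g h :=
  (conj_tmul_both c g g' h h').1

lemma conj_tmul_mu (g g' : G) (h h' : H) :
    tmul c g h * tmul c g' h' =
      tmul c (c.actH (c.actG g h * h⁻¹) g')
          ((c.actG g h * h⁻¹) * h' * (c.actG g h * h⁻¹)⁻¹) * tmul c g h :=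
  (conj_tmul_both c g g' h h').2

/-! #### The homomorphism `κ : G ⊗ H → G` -/

/-- The homomorphism `G ⊗ H → G`, `g ⊗ h ↦ g ⬝ (ʰg)⁻¹`. -/
def kappa : NATensor c →* G :=
  PresentedGroup.toGroup (f := fun p => p.1 * (c.actH p.2 p.1)⁻¹) (by
    rintro r (⟨g, g', h, rfl⟩ | ⟨g, h, h', rfl⟩)
    · refine lift_rel_eq_one _ _ _ _ ?_
      show g * g' * (c.actH h (g * g'))⁻¹
        = g * g' * g⁻¹ * (c.actH (c.actG g h) (g * g' * g⁻¹))⁻¹ * (g * (c.actH h g)⁻¹)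
      rw [c.compat_left]
      rw [show g⁻¹ * (g * g' * g⁻¹) * g = g' from by group]
      rw [map_mul (c.actH h) g g']
      group
    · refine lift_rel_eq_one _ _ _ _ ?_
      show g * (c.actH (h * h') g)⁻¹
        = g * (c.actH h g)⁻¹ * (c.actH h g * (c.actH (h * h' * h⁻¹) (c.actH h g))⁻¹)
      rw [actH_actH]
      rw [show h * h' * h⁻¹ * h = h * h' from by group]
      group)

@[simp] lemma kappa_tmul (g : G) (h : H) :
    kappa c (tmul c g h) = g * (c.actH h g)⁻¹ :=
  PresentedGroup.toGroup.of _

lemma kappa_mem_deriv (t : NATensor c) : kappa c t ∈ derivSubgroupG c := by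
  refine PresentedGroup.generated_by (tensorRels c) ((derivSubgroupG c).comap (kappa c)) ?_ t
  rintro ⟨g, h⟩
  show kappa c (tmul c g h) ∈ derivSubgroupG c
  rw [kappa_tmul]
  exact Subgroup.subset_closure ⟨g, h, rfl⟩

/-! #### Multiplicativity of `lamM` and the global Peiffer identity -/

lemma lamM_mul (a b : G) (t : NATensor c) :
    lamM c (a * b) t = lamM c a (lamM c b t) := by
  have key : lamM c (a * b) = (lamM c a).comp (lamM c b) := by
    apply PresentedGroup.ext
    rintro ⟨g, h⟩
    show lamM c (a * b) (tmul c g h) = lamM c a (lamM c b (tmul c g h))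
    rw [lamM_tmul, lamM_tmul, lamM_tmul, actG_actG]
    rw [show a * (b * g * b⁻¹) * a⁻¹ = (a * b) * g * (a * b)⁻¹ from by group]
  rw [key]
  rfl

lemma lamM_one (t : NATensor c) : lamM c 1 t = t := by
  have key : lamM c (1 : G) = MonoidHom.id (NATensor c) := by
    apply PresentedGroup.ext
    rintro ⟨g, h⟩
    show lamM c (1 : G) (tmul c g h) = tmul c g h
    rw [lamM_tmul, actG_one]
    rw [show (1 : G) * g * (1 : G)⁻¹ = g from by group]
  rw [key]
  rfl

lemma conj_eq_lam_kappa (u t : NATensor c) :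
    u * t * u⁻¹ = lamM c (kappa c u) t := by
  let S : Subgroup (NATensor c) :=
    { carrier := { u | ∀ t, u * t * u⁻¹ = lamM c (kappa c u) t }
      one_mem' := by
        intro t
        rw [map_one, lamM_one]
        group
      mul_mem' := by
        intro x y hx hy t
        have h1 : x * y * t * (x * y)⁻¹ = x * (y * t * y⁻¹) * x⁻¹ := by group
        rw [h1, hy t, hx (lamM c (kappa c y) t), map_mul, lamM_mul]
      inv_mem' := by
        intro x hx t
        have h2 : x * (lamM c (kappa c x⁻¹) t) * x⁻¹ = t := by
          rw [hx (lamM c (kappa c x⁻¹) t), ← lamM_mul, map_inv, mul_inv_cancel, lamM_one]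
        calc x⁻¹ * t * (x⁻¹)⁻¹
            = x⁻¹ * (x * (lamM c (kappa c x⁻¹) t) * x⁻¹) * (x⁻¹)⁻¹ := by rw [h2]
          _ = lamM c (kappa c x⁻¹) t := by group }
  have hgen : ∀ p : G × H, (PresentedGroup.of p : NATensor c) ∈ S := by
    rintro ⟨g, h⟩
    intro t
    have hhom : (MulAut.conj (tmul c g h)).toMonoidHom = lamM c (g * (c.actH h g)⁻¹) := by
      apply PresentedGroup.ext
      rintro ⟨g', h'⟩
      show tmul c g h * tmul c g' h' * (tmul c g h)⁻¹
          = lamM c (g * (c.actH h g)⁻¹) (tmul c g' h')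
      rw [lamM_tmul, conj_tmul_lam c g g' h h', mul_inv_cancel_right]
    have happ := DFunLike.congr_fun hhom t
    simp only [MulEquiv.toMonoidHom_eq_coe, MonoidHom.coe_coe, MulAut.conj_apply] at happ
    show tmul c g h * t * (tmul c g h)⁻¹ = lamM c (kappa c (tmul c g h)) t
    rw [kappa_tmul]
    exact happ
  exact PresentedGroup.generated_by (tensorRels c) S hgen u t

lemma ker_kappa_le_center : (kappa c).ker ≤ Subgroup.center (NATensor c) := by
  intro t ht
  rw [Subgroup.mem_center_iff]
  intro u
  have h1 := conj_eq_lam_kappa c t u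
  rw [MonoidHom.mem_ker.mp ht, lamM_one] at h1
  have h2 : t * u = u * t := by
    calc t * u = (t * u * t⁻¹) * t := by group
      _ = u * t := by rw [h1]
  exact h2.symm

/-! #### The abelianization of the tensor product -/

/-- The image of `g ⊗ h` in the abelianization of `G ⊗ H`. -/
def cc (g : G) (h : H) : Abelianization (NATensor c) := Abelianization.of (tmul c g h)

lemma cc_rel1 (g g' : G) (h : H) :
    cc c (g * g') h = cc c (g * g' * g⁻¹) (c.actG g h) * cc c g h := by
  unfold cc
  rw [← map_mul, tmul_rel1]

lemma cc_rel2 (g : G) (h h' : H) :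
    cc c g (h * h') = cc c g h * cc c (c.actH h g) (h * h' * h⁻¹) := by
  unfold cc
  rw [← map_mul, tmul_rel2]

lemma cc_one_left (h : H) : cc c 1 h = 1 := by
  have h1 := cc_rel1 c 1 1 h
  rw [one_mul, one_mul, inv_one, actG_one] at h1
  exact right_eq_mul.mp h1

lemma cc_one_right (g : G) : cc c g 1 = 1 := by
  have h1 := cc_rel2 c g 1 1
  rw [one_mul, one_mul, inv_one, actH_one] at h1
  exact right_eq_mul.mp (h1.trans (mul_comm _ _))

lemma cc_peiffer_lam (g g' : G) (h h' : H) :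
    cc c ((g * (c.actH h g)⁻¹) * g' * (g * (c.actH h g)⁻¹)⁻¹)
        (c.actG (g * (c.actH h g)⁻¹) h') = cc c g' h' := by
  have h1 := congrArg (Abelianization.of (G := NATensor c)) (conj_tmul_lam c g g' h h')
  rw [map_mul, map_mul] at h1
  have h2 := h1.trans (mul_comm _ _)
  exact (mul_left_cancel h2).symm

lemma cc_peiffer_mu (g g' : G) (h h' : H) :
    cc c (c.actH (c.actG g h * h⁻¹) g')
        ((c.actG g h * h⁻¹) * h' * (c.actG g h * h⁻¹)⁻¹) = cc c g' h' := by
  have h1 := congrArg (Abelianization.of (G := NATensor c)) (conj_tmul_mu c g g' h h')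
  rw [map_mul, map_mul] at h1
  have h2 := h1.trans (mul_comm _ _)
  exact (mul_left_cancel h2).symm

/-! #### Additivity of `cc` relative to the derivative subgroups -/

lemma cc_D_mul {a : G} (ha : a ∈ derivSubgroupG c) (g' : G) (h' : H) :
    cc c (a * g') h' = cc c g' h' * cc c a h' := by
  let S : Subgroup G :=
    { carrier := { a | ∀ g' h', cc c (a * g') h' = cc c g' h' * cc c a h' }
      one_mem' := by
        intro g' h'
        rw [one_mul, cc_one_left, mul_one]
      mul_mem' := by
        intro x y hx hy g' h'
        rw [show x * y * g' = x * (y * g') from by group, hx (y * g') h', hy g' h', hx y h',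
          mul_assoc]
      inv_mem' := by
        intro x hx g' h'
        have hinv : cc c x⁻¹ h' = (cc c x h')⁻¹ := by
          have h1 := hx x⁻¹ h'
          rw [mul_inv_cancel, cc_one_left] at h1
          exact eq_inv_of_mul_eq_one_left h1.symm
        have h2 := hx (x⁻¹ * g') h'
        rw [show x * (x⁻¹ * g') = g' from by group] at h2
        rw [hinv, eq_mul_inv_iff_mul_eq]
        exact h2.symm }
  have hle : derivSubgroupG c ≤ S := by
    rw [derivSubgroupG]
    refine (Subgroup.closure_le _).mpr ?_
    rintro x ⟨g, h, rfl⟩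
    show ∀ g' h', cc c ((g * (c.actH h g)⁻¹) * g') h'
        = cc c g' h' * cc c (g * (c.actH h g)⁻¹) h'
    intro g' h'
    rw [cc_rel1 c (g * (c.actH h g)⁻¹) g' h', cc_peiffer_lam c g g' h h']
  exact hle ha g' h'

lemma cc_E_mul {b : H} (hb : b ∈ derivSubgroupH c) (g' : G) (h' : H) :
    cc c g' (b * h') = cc c g' h' * cc c g' b := by
  let S : Subgroup H :=
    { carrier := { b | ∀ g' h', cc c g' (b * h') = cc c g' h' * cc c g' b }
      one_mem' := by
        intro g' h'
        rw [one_mul, cc_one_right, mul_one]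
      mul_mem' := by
        intro x y hx hy g' h'
        rw [show x * y * h' = x * (y * h') from by group, hx g' (y * h'), hy g' h', hx g' y,
          mul_assoc]
      inv_mem' := by
        intro x hx g' h'
        have hinv : cc c g' x⁻¹ = (cc c g' x)⁻¹ := by
          have h1 := hx g' x⁻¹
          rw [mul_inv_cancel, cc_one_right] at h1
          exact eq_inv_of_mul_eq_one_left h1.symm
        have h2 := hx g' (x⁻¹ * h')
        rw [show x * (x⁻¹ * h') = h' from by group] at h2
        rw [hinv, eq_mul_inv_iff_mul_eq]
        exact h2.symm }
  have hle : derivSubgroupH c ≤ S := by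
    rw [derivSubgroupH]
    refine (Subgroup.closure_le _).mpr ?_
    rintro x ⟨g, h, rfl⟩
    have hxinv : h * (c.actG g h)⁻¹ = (c.actG g h * h⁻¹)⁻¹ := by group
    rw [hxinv]
    refine S.inv_mem ?_
    show ∀ g' h', cc c g' ((c.actG g h * h⁻¹) * h')
        = cc c g' h' * cc c g' (c.actG g h * h⁻¹)
    intro g' h'
    rw [cc_rel2 c g' (c.actG g h * h⁻¹) h', cc_peiffer_mu c g g' h h']
    exact mul_comm _ _
  exact hle hb g' h'

/-! #### Base-point-shift (KEY) identities -/

lemma hDmem (g₀ : G) (h₀ : H) : c.actH h₀ g₀ * g₀⁻¹ ∈ derivSubgroupG c := by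
  have h1 : g₀ * (c.actH h₀ g₀)⁻¹ ∈ derivSubgroupG c := Subgroup.subset_closure ⟨g₀, h₀, rfl⟩
  have h2 := inv_mem h1
  rwa [mul_inv_rev, inv_inv] at h2

lemma hEmem (a : G) (k : H) : c.actG a k * k⁻¹ ∈ derivSubgroupH c := by
  have h1 : k * (c.actG a k)⁻¹ ∈ derivSubgroupH c := Subgroup.subset_closure ⟨a, k, rfl⟩
  have h2 := inv_mem h1
  rwa [mul_inv_rev, inv_inv] at h2

lemma key1 (g : G) (k h : H) :
    cc c g (k * h) = cc c g h * (cc c g k * cc c (c.actH h g * g⁻¹) k) := by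
  have h1 := cc_rel2 c g h (h⁻¹ * k * h)
  rw [show h * (h⁻¹ * k * h) * h⁻¹ = k from by group,
      show h * (h⁻¹ * k * h) = k * h from by group] at h1
  have h3 := cc_D_mul c (hDmem c g h) g k
  rw [show c.actH h g * g⁻¹ * g = c.actH h g from by group] at h3
  rw [h1, h3]

lemma key2 (b a : G) (k : H) :
    cc c (b * a) k = cc c b k * cc c b (c.actG a k * k⁻¹) * cc c a k := by
  have h1 := cc_rel1 c a (a⁻¹ * b * a) k
  rw [show a * (a⁻¹ * b * a) * a⁻¹ = b from by group,
      show a * (a⁻¹ * b * a) = b * a from by group] at h1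
  have h3 := cc_E_mul c (hEmem c a k) b k
  rw [show c.actG a k * k⁻¹ * k = c.actG a k from by group] at h3
  rw [h1, h3]

/-- `E = D_G(H)` is invariant under the action of `G`. -/
lemma actG_mem_derivH (a : G) {e : H} (he : e ∈ derivSubgroupH c) :
    c.actG a e ∈ derivSubgroupH c := by
  induction he using Subgroup.closure_induction with
  | mem x hx =>
      obtain ⟨g, h, rfl⟩ := hx
      rw [map_mul (c.actG a) h (c.actG g h)⁻¹, map_inv (c.actG a) (c.actG g h), actG_actG]
      have m1 : h * (c.actG a h)⁻¹ ∈ derivSubgroupH c := Subgroup.subset_closure ⟨a, h, rfl⟩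
      have m2 : h * (c.actG (a * g) h)⁻¹ ∈ derivSubgroupH c :=
        Subgroup.subset_closure ⟨a * g, h, rfl⟩
      have h3 := mul_mem (inv_mem m1) m2
      rwa [show (h * (c.actG a h)⁻¹)⁻¹ * (h * (c.actG (a * g) h)⁻¹)
          = c.actG a h * (c.actG (a * g) h)⁻¹ from by group] at h3
  | one => rw [map_one]; exact one_mem _
  | mul x y hx hy px py => rw [map_mul]; exact mul_mem px py
  | inv x hx px => rw [map_inv]; exact inv_mem px


/-! #### Finite generation of the abelianization of the tensor product -/

lemma abelianization_fg [Finite (derivSubgroupG c)] (hGfg : Group.FG G) (hHfg : Group.FG H)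
    (hE : (derivSubgroupH c).FG) :
    Group.FG (Abelianization (NATensor c)) := by
  obtain ⟨X, hXc, hXf⟩ := Group.fg_iff.mp hGfg
  obtain ⟨Y, hYc, hYf⟩ := Group.fg_iff.mp hHfg
  obtain ⟨Efin, hEc⟩ := hE
  have hDf : ((derivSubgroupG c : Set G)).Finite := Set.toFinite _
  have hX'f : (X ∪ X⁻¹).Finite := hXf.union hXf.inv
  have hY'f : (Y ∪ Y⁻¹).Finite := hYf.union hYf.inv
  have hSSf : ((fun p : G × H => cc c p.1 p.2) ''
      ((X ∪ X⁻¹) ×ˢ (Y ∪ Y⁻¹) ∪ (X ∪ X⁻¹) ×ˢ (↑Efin : Set H)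
        ∪ (derivSubgroupG c : Set G) ×ˢ (Y ∪ Y⁻¹))).Finite :=
    (((hX'f.prod hY'f).union (hX'f.prod Efin.finite_toSet)).union (hDf.prod hY'f)).image _
  refine Group.fg_iff.mpr ⟨_, ?_, hSSf⟩
  set M := Subgroup.closure ((fun p : G × H => cc c p.1 p.2) ''
      ((X ∪ X⁻¹) ×ˢ (Y ∪ Y⁻¹) ∪ (X ∪ X⁻¹) ×ˢ (↑Efin : Set H)
        ∪ (derivSubgroupG c : Set G) ×ˢ (Y ∪ Y⁻¹))) with hMdef
  have hinvX : ∀ x ∈ X, x⁻¹ ∈ X ∪ X⁻¹ := fun x hx => Or.inr (by simp [Set.mem_inv, hx])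
  have hinvY : ∀ y ∈ Y, y⁻¹ ∈ Y ∪ Y⁻¹ := fun y hy => Or.inr (by simp [Set.mem_inv, hy])
  have hmem1 : ∀ x ∈ X ∪ X⁻¹, ∀ y ∈ Y ∪ Y⁻¹, cc c x y ∈ M := fun x hx y hy =>
    Subgroup.subset_closure ⟨(x, y), Or.inl (Or.inl ⟨hx, hy⟩), rfl⟩
  have hmem2 : ∀ x ∈ X ∪ X⁻¹, ∀ e ∈ (↑Efin : Set H), cc c x e ∈ M := fun x hx e he =>
    Subgroup.subset_closure ⟨(x, e), Or.inl (Or.inr ⟨hx, he⟩), rfl⟩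
  have hmem3 : ∀ d ∈ (derivSubgroupG c : Set G), ∀ y ∈ Y ∪ Y⁻¹, cc c d y ∈ M :=
    fun d hd y hy => Subgroup.subset_closure ⟨(d, y), Or.inr ⟨hd, hy⟩, rfl⟩
  -- Step A: all `cc d h` with `d` in the derivative subgroup of `G`
  have stepA : ∀ h : H, ∀ d ∈ (derivSubgroupG c : Set G), cc c d h ∈ M ∧ cc c d h⁻¹ ∈ M := by
    intro h
    have hh : h ∈ Subgroup.closure Y := by rw [hYc]; exact Subgroup.mem_top h
    induction hh using Subgroup.closure_induction with
    | mem y hy =>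
        intro d hd
        exact ⟨hmem3 d hd y (Or.inl hy), hmem3 d hd y⁻¹ (hinvY y hy)⟩
    | one =>
        intro d hd
        exact ⟨by rw [cc_one_right]; exact one_mem M,
          by rw [inv_one, cc_one_right]; exact one_mem M⟩
    | mul u v hu hv pu pv =>
        intro d hd
        constructor
        · rw [key1 c d u v]
          exact mul_mem (pv d hd).1 (mul_mem (pu d hd).1
            (pu (c.actH v d * d⁻¹) (hDmem c d v)).1)
        · rw [mul_inv_rev, key1 c d v⁻¹ u⁻¹]
          exact mul_mem (pu d hd).2 (mul_mem (pv d hd).2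
            (pv (c.actH u⁻¹ d * d⁻¹) (hDmem c d u⁻¹)).2)
    | inv u hu pu =>
        intro d hd
        exact ⟨(pu d hd).2, by rw [inv_inv]; exact (pu d hd).1⟩
  -- Step B: all `cc g e` with `e` in the derivative subgroup of `H`
  have stepB : ∀ g : G, ∀ e ∈ derivSubgroupH c, cc c g e ∈ M ∧ cc c g⁻¹ e ∈ M := by
    intro g
    have hg : g ∈ Subgroup.closure X := by rw [hXc]; exact Subgroup.mem_top g
    induction hg using Subgroup.closure_induction with
    | mem x hx =>
        intro e he
        rw [← hEc] at he
        induction he using Subgroup.closure_induction with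
        | mem e0 he0 =>
            exact ⟨hmem2 x (Or.inl hx) e0 he0, hmem2 x⁻¹ (hinvX x hx) e0 he0⟩
        | one =>
            exact ⟨by rw [cc_one_right]; exact one_mem M,
              by rw [cc_one_right]; exact one_mem M⟩
        | mul e e' heq heq' pe pe' =>
            have heE : e ∈ derivSubgroupH c := by rw [← hEc]; exact heq
            rw [cc_E_mul c heE x e', cc_E_mul c heE x⁻¹ e']
            exact ⟨mul_mem pe'.1 pe.1, mul_mem pe'.2 pe.2⟩
        | inv e heq pe =>
            have heE : e ∈ derivSubgroupH c := by rw [← hEc]; exact heq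
            have hinv : ∀ g₀ : G, cc c g₀ e⁻¹ = (cc c g₀ e)⁻¹ := by
              intro g₀
              have h1 := cc_E_mul c heE g₀ e⁻¹
              rw [mul_inv_cancel, cc_one_right] at h1
              exact eq_inv_of_mul_eq_one_left h1.symm
            rw [hinv x, hinv x⁻¹]
            exact ⟨inv_mem pe.1, inv_mem pe.2⟩
    | one =>
        intro e he
        exact ⟨by rw [cc_one_left]; exact one_mem M,
          by rw [inv_one, cc_one_left]; exact one_mem M⟩
    | mul u v hu hv pu pv =>
        intro e he
        have he1 : c.actG v e * e⁻¹ ∈ derivSubgroupH c :=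
          mul_mem (actG_mem_derivH c v he) (inv_mem he)
        have he2 : c.actG u⁻¹ e * e⁻¹ ∈ derivSubgroupH c :=
          mul_mem (actG_mem_derivH c u⁻¹ he) (inv_mem he)
        constructor
        · rw [key2 c u v e]
          exact mul_mem (mul_mem (pu e he).1 (pu _ he1).1) (pv e he).1
        · rw [mul_inv_rev, key2 c v⁻¹ u⁻¹ e]
          exact mul_mem (mul_mem (pv e he).2 (pv _ he2).2) (pu e he).2
    | inv u hu pu =>
        intro e he
        exact ⟨(pu e he).2, by rw [inv_inv]; exact (pu e he).1⟩
  -- Step C: all `cc g y` with `y` a generator of `H`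
  have stepC : ∀ g : G, ∀ y ∈ Y ∪ Y⁻¹, cc c g y ∈ M ∧ cc c g⁻¹ y ∈ M := by
    intro g
    have hg : g ∈ Subgroup.closure X := by rw [hXc]; exact Subgroup.mem_top g
    induction hg using Subgroup.closure_induction with
    | mem x hx =>
        intro y hy
        exact ⟨hmem1 x (Or.inl hx) y hy, hmem1 x⁻¹ (hinvX x hx) y hy⟩
    | one =>
        intro y hy
        exact ⟨by rw [cc_one_left]; exact one_mem M,
          by rw [inv_one, cc_one_left]; exact one_mem M⟩
    | mul u v hu hv pu pv =>
        intro y hy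
        constructor
        · rw [key2 c u v y]
          exact mul_mem (mul_mem (pu y hy).1 (stepB u _ (hEmem c v y)).1) (pv y hy).1
        · rw [mul_inv_rev, key2 c v⁻¹ u⁻¹ y]
          exact mul_mem (mul_mem (pv y hy).2 (stepB v _ (hEmem c u⁻¹ y)).2) (pu y hy).2
    | inv u hu pu =>
        intro y hy
        exact ⟨(pu y hy).2, by rw [inv_inv]; exact (pu y hy).1⟩
  -- Step D: all `cc g h`
  have stepD : ∀ h : H, ∀ g : G, cc c g h ∈ M ∧ cc c g h⁻¹ ∈ M := by
    intro h
    have hh : h ∈ Subgroup.closure Y := by rw [hYc]; exact Subgroup.mem_top h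
    induction hh using Subgroup.closure_induction with
    | mem y hy =>
        intro g
        exact ⟨(stepC g y (Or.inl hy)).1, (stepC g y⁻¹ (hinvY y hy)).1⟩
    | one =>
        intro g
        exact ⟨by rw [cc_one_right]; exact one_mem M,
          by rw [inv_one, cc_one_right]; exact one_mem M⟩
    | mul u v hu hv pu pv =>
        intro g
        constructor
        · rw [key1 c g u v]
          exact mul_mem (pv g).1 (mul_mem (pu g).1 (stepA u _ (hDmem c g v)).1)
        · rw [mul_inv_rev, key1 c g v⁻¹ u⁻¹]
          exact mul_mem (pu g).2 (mul_mem (pv g).2 (stepA v⁻¹ _ (hDmem c g u⁻¹)).1)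
    | inv u hu pu =>
        intro g
        exact ⟨(pu g).2, by rw [inv_inv]; exact (pu g).1⟩
  -- conclude
  have hgen : ∀ s : NATensor c, Abelianization.of s ∈ M := fun s =>
    PresentedGroup.generated_by (tensorRels c)
      (M.comap (Abelianization.of : NATensor c →* Abelianization (NATensor c)))
      (fun p => Subgroup.mem_comap.mpr (stepD p.2 p.1).1) s
  rw [Subgroup.eq_top_iff']
  intro t
  refine QuotientGroup.induction_on t ?_
  intro s
  exact hgen s

/-! #### Finiteness of the commutator set -/

lemma comm_central_left {K : Type u} [Group K] {a : K} (ha : a ∈ Subgroup.center K)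
    (s t : K) : ⁅s * a, t⁆ = ⁅s, t⁆ := by
  have h1 : a * t = t * a := (Subgroup.mem_center_iff.mp ha t).symm
  rw [commutatorElement_def, commutatorElement_def, mul_inv_rev]
  calc s * a * t * (a⁻¹ * s⁻¹) * t⁻¹ = s * (a * t) * a⁻¹ * s⁻¹ * t⁻¹ := by group
    _ = s * (t * a) * a⁻¹ * s⁻¹ * t⁻¹ := by rw [h1]
    _ = s * t * s⁻¹ * t⁻¹ := by group

lemma comm_central_right {K : Type u} [Group K] {b : K} (hb : b ∈ Subgroup.center K)
    (s t : K) : ⁅s, t * b⁆ = ⁅s, t⁆ := by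
  have h1 : b * s⁻¹ = s⁻¹ * b := (Subgroup.mem_center_iff.mp hb s⁻¹).symm
  rw [commutatorElement_def, commutatorElement_def, mul_inv_rev]
  calc s * (t * b) * s⁻¹ * (b⁻¹ * t⁻¹) = s * t * (b * s⁻¹) * b⁻¹ * t⁻¹ := by group
    _ = s * t * (s⁻¹ * b) * b⁻¹ * t⁻¹ := by rw [h1]
    _ = s * t * s⁻¹ * t⁻¹ := by group

lemma finite_quotient_ker [Finite (derivSubgroupG c)] :
    Finite (NATensor c ⧸ (kappa c).ker) := by
  have hrange : Finite ((kappa c).range) := by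
    have hsub : ((kappa c).range : Set G) ⊆ (derivSubgroupG c : Set G) := by
      rintro x ⟨t, rfl⟩
      exact kappa_mem_deriv c t
    have hfin : ((derivSubgroupG c : Set G)).Finite := Set.toFinite _
    exact (hfin.subset hsub).to_subtype
  exact Finite.of_equiv _ (QuotientGroup.quotientKerEquivRange (kappa c)).toEquiv.symm

lemma finite_commutatorSet [Finite (derivSubgroupG c)] :
    Finite (commutatorSet (NATensor c)) := by
  haveI hQ : Finite (NATensor c ⧸ (kappa c).ker) := finite_quotient_ker c
  have hcent := ker_kappa_le_center c
  have hsub : commutatorSet (NATensor c) ⊆ Set.range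
      (fun p : (NATensor c ⧸ (kappa c).ker) × (NATensor c ⧸ (kappa c).ker) =>
        ⁅p.1.out, p.2.out⁆) := by
    rintro x ⟨s, t, rfl⟩
    refine ⟨(QuotientGroup.mk s, QuotientGroup.mk t), ?_⟩
    obtain ⟨a, ha⟩ := QuotientGroup.mk_out_eq_mul (kappa c).ker s
    obtain ⟨b, hb⟩ := QuotientGroup.mk_out_eq_mul (kappa c).ker t
    show ⁅(QuotientGroup.mk s : NATensor c ⧸ (kappa c).ker).out,
        (QuotientGroup.mk t : NATensor c ⧸ (kappa c).ker).out⁆ = ⁅s, t⁆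
    rw [ha, hb, comm_central_left (hcent a.2), comm_central_right (hcent b.2)]
  exact (Set.Finite.subset (Set.finite_range _) hsub).to_subtype

/-! #### General finite-generation lemmas -/

lemma fg_of_normal_fg_quotient_fg {K : Type u} [Group K] (N : Subgroup K) [N.Normal]
    (h1 : N.FG) (h2 : Group.FG (K ⧸ N)) : Group.FG K := by
  classical
  obtain ⟨SN, hSN⟩ := h1
  obtain ⟨SQ0, hSQ0, hSQf⟩ := Group.fg_iff.mp h2
  have hsur : Function.Surjective (QuotientGroup.mk' N) := QuotientGroup.mk'_surjective N
  refine Group.fg_iff.mpr ⟨↑SN ∪ (fun q => (hsur q).choose) '' SQ0, ?_,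
    (SN.finite_toSet.union (hSQf.image _))⟩
  rw [Subgroup.eq_top_iff']
  intro g
  have hNC : N ≤ Subgroup.closure (↑SN ∪ (fun q => (hsur q).choose) '' SQ0) :=
    le_of_eq_of_le hSN.symm (Subgroup.closure_mono Set.subset_union_left)
  have himg : SQ0 ⊆ (QuotientGroup.mk' N) '' ((fun q => (hsur q).choose) '' SQ0) := by
    intro q hq
    exact ⟨(hsur q).choose, ⟨q, hq, rfl⟩, (hsur q).choose_spec⟩
  have hq : (QuotientGroup.mk' N) g ∈ Subgroup.map (QuotientGroup.mk' N)
      (Subgroup.closure ((fun q => (hsur q).choose) '' SQ0)) := by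
    rw [MonoidHom.map_closure]
    have h3 : (⊤ : Subgroup (K ⧸ N)) ≤ Subgroup.closure
        ((QuotientGroup.mk' N) '' ((fun q => (hsur q).choose) '' SQ0)) :=
      le_of_eq_of_le hSQ0.symm (Subgroup.closure_mono himg)
    exact h3 (Subgroup.mem_top _)
  obtain ⟨x, hx, hxg⟩ := Subgroup.mem_map.mp hq
  have hxC : x ∈ Subgroup.closure (↑SN ∪ (fun q => (hsur q).choose) '' SQ0) :=
    Subgroup.closure_mono Set.subset_union_right hx
  have hmem : x⁻¹ * g ∈ N := QuotientGroup.eq.mp hxg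
  have := mul_mem hxC (hNC hmem)
  rwa [mul_inv_cancel_left] at this

lemma subgroup_fg_of_comm_fg {A : Type u} [CommGroup A] (hfg : Group.FG A) (K : Subgroup A) :
    K.FG := by
  haveI := hfg
  haveI : AddGroup.FG (Additive A) := GroupFG.iff_add_fg.mp hfg
  haveI : Module.Finite ℤ (Additive A) := Module.Finite.iff_addGroup_fg.mpr ‹_›
  haveI : IsNoetherian ℤ (Additive A) := isNoetherian_of_isNoetherianRing_of_finite ℤ (Additive A)
  have h1 : (AddSubgroup.toIntSubmodule (Subgroup.toAddSubgroup K)).FG :=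
    IsNoetherian.noetherian _
  rw [Subgroup.fg_iff_add_fg]
  have h2 := (Submodule.fg_iff_addSubgroup_fg _).mp h1
  rwa [AddSubgroup.toIntSubmodule_toAddSubgroup] at h2

end NATensorAux

/-- if `G` and `H` are Noetherian, act compatibly on each other and
`D_H(G)` is finite, then `G ⊗ H` is Noetherian. -/
theorem tensor_noetherian_of_deriv_finite {G H : Type u} [Group G] [Group H]
    (c : CompatibleActions G H) (hG : IsNoetherianGroup G) (hH : IsNoetherianGroup H)
    (hfin : Finite (derivSubgroupG c)) :
    IsNoetherianGroup (NATensor c) := by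
  classical
  haveI := hfin
  intro K
  have hGfg : Group.FG G := ⟨hG ⊤⟩
  have hHfg : Group.FG H := ⟨hH ⊤⟩
  have habfg : Group.FG (Abelianization (NATensor c)) :=
    NATensorAux.abelianization_fg c hGfg hHfg (hH (derivSubgroupH c))
  haveI hCS : Finite (commutatorSet (NATensor c)) := NATensorAux.finite_commutatorSet c
  have hcommfg : (commutator (NATensor c)).FG :=
    (Group.fg_iff_subgroup_fg (commutator (NATensor c))).mp inferInstance
  haveI hTfg : Group.FG (NATensor c) :=
    NATensorAux.fg_of_normal_fg_quotient_fg (commutator (NATensor c)) hcommfg habfg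
  have hAcent := NATensorAux.ker_kappa_le_center c
  haveI : Finite (NATensor c ⧸ (NATensorAux.kappa c).ker) := NATensorAux.finite_quotient_ker c
  haveI : ((NATensorAux.kappa c).ker).FiniteIndex := Subgroup.finiteIndex_of_finite_quotient
  haveI hAfg : Group.FG ↥((NATensorAux.kappa c).ker) := Subgroup.fg_of_index_ne_zero _
  letI : CommGroup ↥((NATensorAux.kappa c).ker) :=
    { (inferInstance : Group ↥((NATensorAux.kappa c).ker)) with
      mul_comm := fun a b => Subtype.ext (by
        simp only [Subgroup.coe_mul]
        exact (Subgroup.mem_center_iff.mp (hAcent a.2) (b : NATensor c)).symm) }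
  have hLA : (NATensorAux.kappa c).ker ⊓ K ≤ (NATensorAux.kappa c).ker := inf_le_left
  have hLK : (NATensorAux.kappa c).ker ⊓ K ≤ K := inf_le_right
  have h5 : (((NATensorAux.kappa c).ker ⊓ K).subgroupOf ((NATensorAux.kappa c).ker)).FG :=
    NATensorAux.subgroup_fg_of_comm_fg hAfg _
  have h6 : Group.FG ↥(((NATensorAux.kappa c).ker ⊓ K).subgroupOf ((NATensorAux.kappa c).ker)) :=
    (Group.fg_iff_subgroup_fg _).mpr h5
  have h7 : Group.FG ↥((NATensorAux.kappa c).ker ⊓ K) :=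
    Group.fg_of_surjective (f := (Subgroup.subgroupOfEquivOfLe hLA).toMonoidHom)
      (Subgroup.subgroupOfEquivOfLe hLA).surjective
  have h8 : Group.FG ↥(((NATensorAux.kappa c).ker ⊓ K).subgroupOf K) :=
    Group.fg_of_surjective (f := (Subgroup.subgroupOfEquivOfLe hLK).symm.toMonoidHom)
      (Subgroup.subgroupOfEquivOfLe hLK).symm.surjective
  have h9 : (((NATensorAux.kappa c).ker).subgroupOf K).FG := by
    rw [← Subgroup.inf_subgroupOf_right]
    exact (Group.fg_iff_subgroup_fg _).mp h8
  haveI : (((NATensorAux.kappa c).ker).subgroupOf K).Normal := by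
    constructor
    intro n hn k
    have hn' : (n : NATensor c) ∈ (NATensorAux.kappa c).ker := hn
    rw [Subgroup.mem_subgroupOf]
    have hc := Subgroup.mem_center_iff.mp (hAcent hn')
    have hcoe : ((k * n * k⁻¹ : K) : NATensor c) = (n : NATensor c) := by
      push_cast
      rw [hc (k : NATensor c)]
      group
    rw [hcoe]
    exact hn'
  haveI : (((NATensorAux.kappa c).ker).subgroupOf K).FiniteIndex :=
    Subgroup.instFiniteIndex_subgroupOf _ _
  have h10 : Group.FG (K ⧸ ((NATensorAux.kappa c).ker).subgroupOf K) := Group.fg_of_finite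
  have h11 : Group.FG K :=
    NATensorAux.fg_of_normal_fg_quotient_fg (((NATensorAux.kappa c).ker).subgroupOf K) h9 h10
  exact (Group.fg_iff_subgroup_fg K).mp h11
end
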